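/- arXiv:1209.2522 — 12 statements merged into one kernel-verified Lean document; each statement's English description precedes it below -/
import Mathlib

section
/- For every β > 0 the system α₁(k,l) = 0, α₂(k,l) = 0 with k, l > 0 has a solution (k₀, l₀) such that every solution (k, l) of the system satisfies k ≥ k₀; similarly, it has a solution (k₁, l₁) such that every solution (k, l) of the system satisfies l ≥ l₁. -/
open Real


private lemma upBound {p c x : ℝ} (hp : 1 < p) (hc : 0 < c) (hx : 0 < x)
    (h : c * x ^ (p - 1) ≤ 1) : x ≤ c⁻¹ ^ (p - 1)⁻¹ := by
  have hpm : (0:ℝ) < p - 1 := by linarith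
  rw [le_rpow_inv_iff_of_pos hx.le (by positivity) hpm]
  have hxp := Real.rpow_pos_of_pos hx (p - 1)
  rw [inv_eq_one_div, le_div_iff₀ hc]
  linarith [mul_comm c (x ^ (p - 1))]

private lemma lowBound {p c x : ℝ} (hp : 1 < p) (hc : 0 < c) (hx : 0 < x)
    (h : 1 ≤ c * x ^ (p - 1)) : c⁻¹ ^ (p - 1)⁻¹ ≤ x := by
  have hpm : (0:ℝ) < p - 1 := by linarith
  rw [rpow_inv_le_iff_of_pos (by positivity) hx.le hpm]
  have hxp := Real.rpow_pos_of_pos hx (p - 1)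
  rw [inv_eq_one_div, div_le_iff₀ hc]
  linarith [mul_comm (x ^ (p - 1)) c]

private lemma caseLow {p μ₁ μ₂ β k l : ℝ} (hp1 : 1 < p) (hp2 : p < 2)
    (hμ₁ : 0 < μ₁) (hμ₂ : 0 < μ₂) (hβ : 0 < β) (hk : 0 < k) (hl : 0 < l) (hlk : l ≤ k)
    (e1 : μ₁ * k ^ (p - 1) + β * k ^ (p / 2 - 1) * l ^ (p / 2) = 1)
    (e2 : μ₂ * l ^ (p - 1) + β * l ^ (p / 2 - 1) * k ^ (p / 2) = 1) :
    (μ₁ + β)⁻¹ ^ (p - 1)⁻¹ ≤ k ∧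
      (β * ((μ₁ + β)⁻¹ ^ (p - 1)⁻¹) ^ (p / 2)) ^ (1 - p / 2)⁻¹ ≤ l := by
  have hpm : (0:ℝ) < p - 1 := by linarith
  have ha : (0:ℝ) < p / 2 := by linarith
  have hb : (0:ℝ) < 1 - p / 2 := by linarith
  set ε : ℝ := (μ₁ + β)⁻¹ ^ (p - 1)⁻¹ with hεdef
  have hεpos : 0 < ε := by positivity
  -- part 1
  have h1 : l ^ (p / 2) ≤ k ^ (p / 2) := Real.rpow_le_rpow hl.le hlk ha.le
  have hkk : k ^ (p / 2 - 1) * k ^ (p / 2) = k ^ (p - 1) := by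
    rw [← Real.rpow_add hk]; ring_nf
  have t1 : β * k ^ (p / 2 - 1) * l ^ (p / 2) ≤ β * k ^ (p / 2 - 1) * k ^ (p / 2) :=
    mul_le_mul_of_nonneg_left h1 (by positivity)
  have h2 : 1 ≤ (μ₁ + β) * k ^ (p - 1) := by nlinarith [t1, hkk, e1]
  have hk1 : ε ≤ k := lowBound hp1 (by positivity) hk h2
  -- part 2
  have h3 : β * l ^ (p / 2 - 1) * k ^ (p / 2) ≤ 1 := by
    nlinarith [mul_pos hμ₂ (Real.rpow_pos_of_pos hl (p - 1)), e2]
  have h4 : ε ^ (p / 2) ≤ k ^ (p / 2) := Real.rpow_le_rpow hεpos.le hk1 ha.le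
  have h5 : β * ε ^ (p / 2) * l ^ (p / 2 - 1) ≤ 1 := by
    nlinarith [mul_le_mul_of_nonneg_left h4 (show (0:ℝ) ≤ β * l ^ (p / 2 - 1) by positivity), h3]
  have hll : l ^ (p / 2 - 1) * l ^ (1 - p / 2) = 1 := by
    rw [← Real.rpow_add hl]; norm_num
  have h6 : β * ε ^ (p / 2) ≤ l ^ (1 - p / 2) := by
    calc β * ε ^ (p / 2) = β * ε ^ (p / 2) * l ^ (p / 2 - 1) * l ^ (1 - p / 2) := by
          rw [mul_assoc, hll, mul_one]
      _ ≤ 1 * l ^ (1 - p / 2) := mul_le_mul_of_nonneg_right h5 (Real.rpow_nonneg hl.le _)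
      _ = l ^ (1 - p / 2) := one_mul _
  have hl1 : (β * ε ^ (p / 2)) ^ (1 - p / 2)⁻¹ ≤ l := by
    rw [rpow_inv_le_iff_of_pos (by positivity) hl.le hb]; exact h6
  exact ⟨hk1, hl1⟩


private lemma existsSol {p μ₁ μ₂ β : ℝ} (hp1 : 1 < p) (hp2 : p < 2)
    (hμ₁ : 0 < μ₁) (hμ₂ : 0 < μ₂) (hβ : 0 < β) :
    ∃ k l : ℝ, 0 < k ∧ 0 < l ∧
      μ₁ * k ^ (p - 1) + β * k ^ (p / 2 - 1) * l ^ (p / 2) = 1 ∧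
      μ₂ * l ^ (p - 1) + β * l ^ (p / 2 - 1) * k ^ (p / 2) = 1 := by
  have hpm : (0:ℝ) < p - 1 := by linarith
  have ha : (0:ℝ) < p / 2 := by linarith
  have hb : (0:ℝ) < 1 - p / 2 := by linarith
  set g : ℝ → ℝ := fun t => μ₂ * t ^ (p - 1) + β * t ^ (p / 2 - 1) - μ₁ - β * t ^ (p / 2)
    with hg
  -- small endpoint
  set s : ℝ := max 1 (((μ₁ + β + 1) / β) ^ (1 - p / 2)⁻¹) with hs
  have hs1 : (1:ℝ) ≤ s := le_max_left _ _
  have hspos : (0:ℝ) < s := by linarith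
  set tlo : ℝ := s⁻¹ with htlo
  have htlopos : 0 < tlo := by positivity
  have htlole1 : tlo ≤ 1 := by
    rw [htlo]; exact inv_le_one_of_one_le₀ hs1
  have hDs : (μ₁ + β + 1) / β ≤ s ^ (1 - p / 2) := by
    calc (μ₁ + β + 1) / β = (((μ₁ + β + 1) / β) ^ (1 - p / 2)⁻¹) ^ (1 - p / 2) := by
          rw [Real.rpow_inv_rpow (by positivity) (ne_of_gt hb)]
      _ ≤ s ^ (1 - p / 2) := Real.rpow_le_rpow (by positivity) (le_max_right _ _) hb.le
  have htlopow : tlo ^ (p / 2 - 1) = s ^ (1 - p / 2) := by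
    rw [htlo, ← Real.rpow_neg_one s, ← Real.rpow_mul hspos.le]
    ring_nf
  have hgneg : 0 < g tlo := by
    have h1 : tlo ^ (p / 2) ≤ 1 := Real.rpow_le_one htlopos.le htlole1 ha.le
    have h2 : μ₁ + β + 1 ≤ β * tlo ^ (p / 2 - 1) := by
      rw [htlopow]
      calc μ₁ + β + 1 = β * ((μ₁ + β + 1) / β) := by field_simp
        _ ≤ β * s ^ (1 - p / 2) := mul_le_mul_of_nonneg_left hDs hβ.le
    have h3 : 0 < μ₂ * tlo ^ (p - 1) := by positivity
    simp only [hg]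
    nlinarith
  -- large endpoint
  set u : ℝ := max 1 (((2 * μ₂ + 2 * β) / β) ^ (1 - p / 2)⁻¹) with hu
  have hu1 : (1:ℝ) ≤ u := le_max_left _ _
  have hupos : (0:ℝ) < u := by linarith
  have hCu : (2 * μ₂ + 2 * β) / β ≤ u ^ (1 - p / 2) := by
    calc (2 * μ₂ + 2 * β) / β
        = (((2 * μ₂ + 2 * β) / β) ^ (1 - p / 2)⁻¹) ^ (1 - p / 2) := by
          rw [Real.rpow_inv_rpow (by positivity) (ne_of_gt hb)]
      _ ≤ u ^ (1 - p / 2) := Real.rpow_le_rpow (by positivity) (le_max_right _ _) hb.le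
  have hgposu : g u < 0 := by
    have h1 : u ^ (p / 2 - 1) ≤ 1 :=
      Real.rpow_le_one_of_one_le_of_nonpos hu1 (by linarith)
    have h2 : u ^ (p / 2) = u ^ (p - 1) * u ^ (1 - p / 2) := by
      rw [← Real.rpow_add hupos]; ring_nf
    have h3 : 1 ≤ u ^ (p - 1) := Real.one_le_rpow hu1 hpm.le
    have h4 : 2 * μ₂ + 2 * β ≤ β * u ^ (1 - p / 2) := by
      calc 2 * μ₂ + 2 * β = β * ((2 * μ₂ + 2 * β) / β) := by field_simp
        _ ≤ β * u ^ (1 - p / 2) := mul_le_mul_of_nonneg_left hCu hβ.le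
    have h5 : (2 * μ₂ + 2 * β) * u ^ (p - 1) ≤ β * u ^ (p / 2) := by
      rw [h2]
      nlinarith [Real.rpow_pos_of_pos hupos (p - 1)]
    simp only [hg]
    nlinarith [Real.rpow_pos_of_pos hupos (p - 1)]
  -- IVT
  have htlou : tlo ≤ u := htlole1.trans hu1
  have hcont : ContinuousOn g (Set.Icc tlo u) := by
    have hbase : ∀ q : ℝ, ContinuousOn (fun t : ℝ => t ^ q) (Set.Icc tlo u) := by
      intro q t ht
      exact (Real.continuousAt_rpow_const t q
        (Or.inl (ne_of_gt (lt_of_lt_of_le htlopos ht.1)))).continuousWithinAt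
    exact (((continuousOn_const.mul (hbase (p - 1))).add
      (continuousOn_const.mul (hbase (p / 2 - 1)))).sub continuousOn_const).sub
      (continuousOn_const.mul (hbase (p / 2)))
  have h0mem : (0:ℝ) ∈ Set.Icc (g u) (g tlo) := ⟨hgposu.le, hgneg.le⟩
  obtain ⟨t, htmem, hgt⟩ := intermediate_value_Icc' htlou hcont h0mem
  have htpos : 0 < t := lt_of_lt_of_le htlopos htmem.1
  -- build the solution
  set A : ℝ := μ₁ + β * t ^ (p / 2) with hA
  have hApos : 0 < A := by positivity
  set k : ℝ := A ^ (-(p - 1)⁻¹) with hkdef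
  have hkpos : 0 < k := Real.rpow_pos_of_pos hApos _
  set l : ℝ := t * k with hldef
  have hlpos : 0 < l := mul_pos htpos hkpos
  have hkA : k ^ (p - 1) = A⁻¹ := by
    rw [hkdef, ← Real.rpow_mul hApos.le,
      show -(p - 1)⁻¹ * (p - 1) = -1 by field_simp, Real.rpow_neg_one]
  have hkk : k ^ (p / 2 - 1) * k ^ (p / 2) = k ^ (p - 1) := by
    rw [← Real.rpow_add hkpos]; ring_nf
  have hgt0 : μ₂ * t ^ (p - 1) + β * t ^ (p / 2 - 1) = μ₁ + β * t ^ (p / 2) := by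
    have := hgt
    simp only [hg] at this
    linarith
  refine ⟨k, l, hkpos, hlpos, ?_, ?_⟩
  · have hl1 : l ^ (p / 2) = t ^ (p / 2) * k ^ (p / 2) :=
      Real.mul_rpow htpos.le hkpos.le
    rw [hl1]
    have : μ₁ * k ^ (p - 1) + β * k ^ (p / 2 - 1) * (t ^ (p / 2) * k ^ (p / 2))
        = (μ₁ + β * t ^ (p / 2)) * k ^ (p - 1) := by
      rw [← hkk]; ring
    rw [this, ← hA, hkA, mul_inv_cancel₀ (ne_of_gt hApos)]
  · have hl1 : l ^ (p - 1) = t ^ (p - 1) * k ^ (p - 1) :=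
      Real.mul_rpow htpos.le hkpos.le
    have hl2 : l ^ (p / 2 - 1) = t ^ (p / 2 - 1) * k ^ (p / 2 - 1) :=
      Real.mul_rpow htpos.le hkpos.le
    rw [hl1, hl2]
    have : μ₂ * (t ^ (p - 1) * k ^ (p - 1)) + β * (t ^ (p / 2 - 1) * k ^ (p / 2 - 1)) * k ^ (p / 2)
        = (μ₂ * t ^ (p - 1) + β * t ^ (p / 2 - 1)) * k ^ (p - 1) := by
      rw [← hkk]; ring
    rw [this, hgt0, ← hA, hkA, mul_inv_cancel₀ (ne_of_gt hApos)]

private lemma auxMin {p μ₁ μ₂ β : ℝ} (hp1 : 1 < p) (hp2 : p < 2)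
    (hμ₁ : 0 < μ₁) (hμ₂ : 0 < μ₂) (hβ : 0 < β) :
    ∃ k₀ l₀ : ℝ, 0 < k₀ ∧ 0 < l₀ ∧
      μ₁ * k₀ ^ (p - 1) + β * k₀ ^ (p / 2 - 1) * l₀ ^ (p / 2) = 1 ∧
      μ₂ * l₀ ^ (p - 1) + β * l₀ ^ (p / 2 - 1) * k₀ ^ (p / 2) = 1 ∧
      ∀ k l : ℝ, 0 < k → 0 < l →
        μ₁ * k ^ (p - 1) + β * k ^ (p / 2 - 1) * l ^ (p / 2) = 1 →
        μ₂ * l ^ (p - 1) + β * l ^ (p / 2 - 1) * k ^ (p / 2) = 1 →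
        k₀ ≤ k := by
  obtain ⟨k', l', hk', hl', he1', he2'⟩ := existsSol hp1 hp2 hμ₁ hμ₂ hβ
  set ε1 : ℝ := (μ₁ + β)⁻¹ ^ (p - 1)⁻¹ with hε1
  set ε2 : ℝ := (μ₂ + β)⁻¹ ^ (p - 1)⁻¹ with hε2
  set ε3 : ℝ := (β * ε2 ^ (p / 2)) ^ (1 - p / 2)⁻¹ with hε3
  set ε4 : ℝ := (β * ε1 ^ (p / 2)) ^ (1 - p / 2)⁻¹ with hε4
  set ε : ℝ := min (min ε1 ε3) (min ε2 ε4) with hε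
  have hε1p : 0 < ε1 := by positivity
  have hε2p : 0 < ε2 := by positivity
  have hεpos : 0 < ε := by positivity
  set K : ℝ := μ₁⁻¹ ^ (p - 1)⁻¹ with hK
  set L : ℝ := μ₂⁻¹ ^ (p - 1)⁻¹ with hL
  have hbound : ∀ k l : ℝ, 0 < k → 0 < l →
      μ₁ * k ^ (p - 1) + β * k ^ (p / 2 - 1) * l ^ (p / 2) = 1 →
      μ₂ * l ^ (p - 1) + β * l ^ (p / 2 - 1) * k ^ (p / 2) = 1 →
      ε ≤ k ∧ ε ≤ l ∧ k ≤ K ∧ l ≤ L := by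
    intro k l hk hl h1 h2
    have hpos1 : 0 < β * k ^ (p / 2 - 1) * l ^ (p / 2) := by positivity
    have hpos2 : 0 < β * l ^ (p / 2 - 1) * k ^ (p / 2) := by positivity
    have hkK : k ≤ K := upBound hp1 hμ₁ hk (by linarith)
    have hlL : l ≤ L := upBound hp1 hμ₂ hl (by linarith)
    rcases le_total l k with h | h
    · obtain ⟨hA, hB⟩ := caseLow hp1 hp2 hμ₁ hμ₂ hβ hk hl h h1 h2
      exact ⟨le_trans (le_trans (min_le_left _ _) (min_le_left _ _)) hA,
        le_trans (le_trans (min_le_right _ _) (min_le_right _ _)) hB, hkK, hlL⟩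
    · obtain ⟨hA, hB⟩ := caseLow hp1 hp2 hμ₂ hμ₁ hβ hl hk h h2 h1
      exact ⟨le_trans (le_trans (min_le_left _ _) (min_le_right _ _)) hB,
        le_trans (le_trans (min_le_right _ _) (min_le_left _ _)) hA, hkK, hlL⟩
  -- continuity helpers
  have hcmax1 : ∀ q : ℝ, Continuous fun x : ℝ × ℝ => max ε x.1 ^ q := by
    intro q
    rw [continuous_iff_continuousAt]
    intro x
    exact ((continuous_const.max continuous_fst).continuousAt).rpow_const
      (Or.inl (ne_of_gt (lt_of_lt_of_le hεpos (le_max_left _ _))))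
  have hcmax2 : ∀ q : ℝ, Continuous fun x : ℝ × ℝ => max ε x.2 ^ q := by
    intro q
    rw [continuous_iff_continuousAt]
    intro x
    exact ((continuous_const.max continuous_snd).continuousAt).rpow_const
      (Or.inl (ne_of_gt (lt_of_lt_of_le hεpos (le_max_left _ _))))
  set f1 : ℝ × ℝ → ℝ := fun x =>
    μ₁ * max ε x.1 ^ (p - 1) + β * max ε x.1 ^ (p / 2 - 1) * max ε x.2 ^ (p / 2) with hf1d
  set f2 : ℝ × ℝ → ℝ := fun x =>
    μ₂ * max ε x.2 ^ (p - 1) + β * max ε x.2 ^ (p / 2 - 1) * max ε x.1 ^ (p / 2) with hf2d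
  have hc1 : Continuous f1 := ((continuous_const.mul (hcmax1 (p - 1))).add
    ((continuous_const.mul (hcmax1 (p / 2 - 1))).mul (hcmax2 (p / 2))))
  have hc2 : Continuous f2 := ((continuous_const.mul (hcmax2 (p - 1))).add
    ((continuous_const.mul (hcmax2 (p / 2 - 1))).mul (hcmax1 (p / 2))))
  set S : Set (ℝ × ℝ) := {x | f1 x = 1 ∧ f2 x = 1} ∩ Set.Icc (ε, ε) (K, L) with hSd
  have hScpt : IsCompact S := isCompact_Icc.inter_left
    ((isClosed_eq hc1 continuous_const).inter (isClosed_eq hc2 continuous_const))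
  have hmem : ∀ k l : ℝ, 0 < k → 0 < l →
      μ₁ * k ^ (p - 1) + β * k ^ (p / 2 - 1) * l ^ (p / 2) = 1 →
      μ₂ * l ^ (p - 1) + β * l ^ (p / 2 - 1) * k ^ (p / 2) = 1 →
      (k, l) ∈ S := by
    intro k l hk hl h1 h2
    obtain ⟨b1, b2, b3, b4⟩ := hbound k l hk hl h1 h2
    refine ⟨⟨?_, ?_⟩, ⟨⟨b1, b2⟩, ⟨b3, b4⟩⟩⟩
    · show μ₁ * max ε k ^ (p - 1) + β * max ε k ^ (p / 2 - 1) * max ε l ^ (p / 2) = 1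
      rw [max_eq_right b1, max_eq_right b2]; exact h1
    · show μ₂ * max ε l ^ (p - 1) + β * max ε l ^ (p / 2 - 1) * max ε k ^ (p / 2) = 1
      rw [max_eq_right b2, max_eq_right b1]; exact h2
  have hSne : S.Nonempty := ⟨(k', l'), hmem k' l' hk' hl' he1' he2'⟩
  obtain ⟨x₀, hx₀S, hx₀min⟩ := hScpt.exists_isMinOn hSne continuous_fst.continuousOn
  obtain ⟨⟨hf1x, hf2x⟩, hxIcc⟩ := hx₀S
  have hx1 : ε ≤ x₀.1 := hxIcc.1.1
  have hx2 : ε ≤ x₀.2 := hxIcc.1.2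
  have hx1p : 0 < x₀.1 := lt_of_lt_of_le hεpos hx1
  have hx2p : 0 < x₀.2 := lt_of_lt_of_le hεpos hx2
  refine ⟨x₀.1, x₀.2, hx1p, hx2p, ?_, ?_, ?_⟩
  · have := hf1x
    simp only [hf1d] at this
    rwa [max_eq_right hx1, max_eq_right hx2] at this
  · have := hf2x
    simp only [hf2d] at this
    rwa [max_eq_right hx1, max_eq_right hx2] at this
  · intro k l hk hl h1 h2
    exact hx₀min (hmem k l hk hl h1 h2)


theorem stmt_0 (N : ℕ) (hN : 5 ≤ N) (p : ℝ) (hp : p = (N : ℝ) / ((N : ℝ) - 2))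
    (μ₁ μ₂ β : ℝ) (hμ₁ : 0 < μ₁) (hμ₂ : 0 < μ₂) (hβ : 0 < β) :
    (∃ k₀ l₀ : ℝ, 0 < k₀ ∧ 0 < l₀ ∧
      μ₁ * k₀ ^ (p - 1) + β * k₀ ^ (p / 2 - 1) * l₀ ^ (p / 2) = 1 ∧
      μ₂ * l₀ ^ (p - 1) + β * l₀ ^ (p / 2 - 1) * k₀ ^ (p / 2) = 1 ∧
      ∀ k l : ℝ, 0 < k → 0 < l →
        μ₁ * k ^ (p - 1) + β * k ^ (p / 2 - 1) * l ^ (p / 2) = 1 →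
        μ₂ * l ^ (p - 1) + β * l ^ (p / 2 - 1) * k ^ (p / 2) = 1 →
        k₀ ≤ k) ∧
    (∃ k₁ l₁ : ℝ, 0 < k₁ ∧ 0 < l₁ ∧
      μ₁ * k₁ ^ (p - 1) + β * k₁ ^ (p / 2 - 1) * l₁ ^ (p / 2) = 1 ∧
      μ₂ * l₁ ^ (p - 1) + β * l₁ ^ (p / 2 - 1) * k₁ ^ (p / 2) = 1 ∧
      ∀ k l : ℝ, 0 < k → 0 < l →
        μ₁ * k ^ (p - 1) + β * k ^ (p / 2 - 1) * l ^ (p / 2) = 1 →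
        μ₂ * l ^ (p - 1) + β * l ^ (p / 2 - 1) * k ^ (p / 2) = 1 →
        l₁ ≤ l) := by
  have hN5 : (5:ℝ) ≤ (N:ℝ) := by exact_mod_cast hN
  have hd : (0:ℝ) < (N:ℝ) - 2 := by linarith
  have hp1 : 1 < p := by
    rw [hp, lt_div_iff₀ hd]; linarith
  have hp2 : p < 2 := by
    rw [hp, div_lt_iff₀ hd]; linarith
  constructor
  · exact auxMin hp1 hp2 hμ₁ hμ₂ hβ
  · obtain ⟨l₁, k₁, hl₁, hk₁, e2, e1, hmin⟩ := auxMin hp1 hp2 hμ₂ hμ₁ hβ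
    exact ⟨k₁, l₁, hk₁, hl₁, e1, e2, fun k l hk hl h1 h2 => hmin l k hl hk h2 h1⟩
end

section
/- If β ≥ (p-1)·max{μ₁, μ₂}, then the function k ↦ h₁(k) + k is strictly increasing on [0, μ₁^{-1/(p-1)}] and the function l ↦ h₂(l) + l is strictly increasing on [0, μ₂^{-1/(p-1)}]. -/
/-!
Write `q = 2 / p`, `a = (p - 1) μ` and `s = k ^ (1 - p) - μ`. On the interval the function is
`k + β ^ (-q) * k * s ^ q`, and since `q p = 2` its derivative is `1 - β ^ (-q) * T`, where `T`
is the value at `a` of the tangent line to `x ↦ x ^ q` at `s`. By convexity `T ≤ a ^ q ≤ β ^ q`,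
so the derivative is nonnegative, and it vanishes only where `s = a`, i.e. at a single point.
-/

open Real Set

noncomputable def rpowTangent (q s a : ℝ) : ℝ := s ^ q + q * s ^ (q - 1) * (a - s)

theorem strictMonoOn_of_hasDerivAt_nonneg_of_subsingleton {D : Set ℝ} (hD : Convex ℝ D)
    {f f' : ℝ → ℝ} (hf : ContinuousOn f D) (hf' : ∀ x ∈ interior D, HasDerivAt f (f' x) x)
    (hf'₀ : ∀ x ∈ interior D, 0 ≤ f' x)
    (hzero : {x ∈ interior D | f' x = 0}.Subsingleton) :
    StrictMonoOn f D := by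
  have hmono : MonotoneOn f D :=
    monotoneOn_of_hasDerivWithinAt_nonneg hD hf (fun x hx => (hf' x hx).hasDerivWithinAt) hf'₀
  intro x hx y hy hxy
  refine (hmono hx hy hxy.le).lt_of_ne fun hfxy => ?_
  have hIcc : Icc x y ⊆ D := hD.ordConnected.out hx hy
  have hIoo : Ioo x y ⊆ interior D := interior_Icc (a := x) (b := y) ▸ interior_mono hIcc
  have hconst : EqOn f (fun _ => f x) (Ioo x y) := fun z hz =>
    le_antisymm (hfxy ▸ hmono (hIcc (Ioo_subset_Icc_self hz)) hy hz.2.le)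
      (hmono hx (hIcc (Ioo_subset_Icc_self hz)) hz.1.le)
  have hvanish : ∀ z ∈ Ioo x y, z ∈ interior D ∧ f' z = 0 := fun z hz =>
    ⟨hIoo hz, (hf' z (hIoo hz)).unique <|
      (hasDerivAt_const z (f x)).congr_of_eventuallyEq
        (hconst.eventuallyEq_of_mem (Ioo_mem_nhds hz.1 hz.2))⟩
  have := hzero (hvanish ((2 * x + y) / 3) ⟨by linarith, by linarith⟩)
    (hvanish ((x + 2 * y) / 3) ⟨by linarith, by linarith⟩)
  linarith

section Tangent

variable {q s a : ℝ}

theorem rpowTangent_lt (hq : 1 < q) (hs : 0 < s) (ha : 0 ≤ a) (hne : s ≠ a) :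
    rpowTangent q s a < a ^ q := by
  have hbern := one_add_mul_self_lt_rpow_one_add (s := a / s - 1)
    (by linarith [div_nonneg ha hs.le])
    (sub_ne_zero.2 fun h => hne ((div_eq_one_iff_eq hs.ne').1 h).symm) hq
  rw [add_sub_cancel, div_rpow ha hs.le] at hbern
  have hsq : 0 < s ^ q := rpow_pos_of_pos hs q
  calc rpowTangent q s a = s ^ q * (1 + q * (a / s - 1)) := by
        rw [rpowTangent, rpow_sub_one hs.ne']; field_simp
    _ < s ^ q * (a ^ q / s ^ q) := mul_lt_mul_of_pos_left hbern hsq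
    _ = a ^ q := mul_div_cancel₀ _ hsq.ne'

theorem rpowTangent_le (hq : 1 < q) (hs : 0 < s) (ha : 0 ≤ a) : rpowTangent q s a ≤ a ^ q := by
  rcases eq_or_ne s a with rfl | hne
  · simp [rpowTangent]
  · exact (rpowTangent_lt hq hs ha hne).le

end Tangent

section Profile

variable {p μ k : ℝ}

theorem rpow_one_sub_half_sub_mul_rpow_half (hk : 0 < k) :
    k ^ (1 - p / 2) - μ * k ^ (p / 2) = k ^ (p / 2) * (k ^ (1 - p) - μ) := by
  rw [mul_sub, ← rpow_add hk]; ring_nf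

theorem rpow_one_sub_half_sub_mul_rpow_half_rpow (hp : 0 < p) (hk : 0 < k)
    (hμk : μ ≤ k ^ (1 - p)) :
    (k ^ (1 - p / 2) - μ * k ^ (p / 2)) ^ (2 / p) = k * (k ^ (1 - p) - μ) ^ (2 / p) := by
  rw [rpow_one_sub_half_sub_mul_rpow_half hk, mul_rpow (rpow_nonneg hk.le _) (sub_nonneg.2 hμk),
    ← rpow_mul hk.le, show p / 2 * (2 / p) = 1 by field_simp, rpow_one]

theorem hasDerivAt_mul_rpow_sub_rpow (hp : 0 < p) (hk : 0 < k) (hμk : μ < k ^ (1 - p)) :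
    HasDerivAt (fun x => x * (x ^ (1 - p) - μ) ^ (2 / p))
      (-rpowTangent (2 / p) (k ^ (1 - p) - μ) ((p - 1) * μ)) k := by
  have hs : 0 < k ^ (1 - p) - μ := sub_pos.2 hμk
  have hinner : HasDerivAt (fun x => x ^ (1 - p) - μ) ((1 - p) * k ^ (1 - p - 1)) k :=
    (hasDerivAt_rpow_const (Or.inl hk.ne')).sub_const μ
  refine ((hasDerivAt_id' k).fun_mul
    (hinner.rpow_const (p := 2 / p) (Or.inl hs.ne'))).congr_deriv ?_
  rw [rpowTangent, rpow_sub_one hs.ne', rpow_sub_one hk.ne']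
  field_simp
  ring

theorem lt_rpow_one_sub_of_lt_rpow_neg_inv (hp : 1 < p) (hμ : 0 < μ) (hk : 0 < k)
    (hkK : k < μ ^ (-(1 / (p - 1)))) : μ < k ^ (1 - p) := by
  have hexp : -(1 / (p - 1)) * (1 - p) = 1 := by field_simp [(sub_pos.2 hp).ne']; ring
  calc μ = (μ ^ (-(1 / (p - 1)))) ^ (1 - p) := by
        rw [← rpow_mul hμ.le, hexp, rpow_one]
    _ < k ^ (1 - p) := rpow_lt_rpow_of_neg hk hkK (by linarith)

theorem strictMonoOn_rpow_profile_add_id {β : ℝ} (hp1 : 1 < p) (hp2 : p < 2) (hμ : 0 < μ)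
    (hβ : (p - 1) * μ ≤ β) :
    StrictMonoOn (fun k => β ^ (-(2 / p)) * (k ^ (1 - p / 2) - μ * k ^ (p / 2)) ^ (2 / p) + k)
      (Icc 0 (μ ^ (-(1 / (p - 1))))) := by
  have hp0 : 0 < p := by linarith
  have hq : 1 < 2 / p := (one_lt_div hp0).2 hp2
  have ha : 0 < (p - 1) * μ := mul_pos (by linarith) hμ
  have hβ0 : 0 < β := ha.trans_le hβ
  have hβq : β ^ (-(2 / p)) * β ^ (2 / p) = 1 := by
    rw [rpow_neg hβ0.le, inv_mul_cancel₀ (rpow_pos_of_pos hβ0 _).ne']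
  have haq : β ^ (-(2 / p)) * ((p - 1) * μ) ^ (2 / p) ≤ 1 :=
    (mul_le_mul_of_nonneg_left (rpow_le_rpow ha.le hβ (by positivity))
      (by positivity)).trans_eq hβq
  have hμk : ∀ k ∈ Ioo 0 (μ ^ (-(1 / (p - 1)))), μ < k ^ (1 - p) := fun k hk =>
    lt_rpow_one_sub_of_lt_rpow_neg_inv hp1 hμ hk.1 hk.2
  refine strictMonoOn_of_hasDerivAt_nonneg_of_subsingleton (convex_Icc _ _)
    (f' := fun k => 1 - β ^ (-(2 / p)) * rpowTangent (2 / p) (k ^ (1 - p) - μ) ((p - 1) * μ))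
    (Continuous.continuousOn (by fun_prop (disch := first | positivity | linarith)))
    ?_ ?_ ?_ <;> rw [interior_Icc]
  · intro k hk
    refine ((((hasDerivAt_mul_rpow_sub_rpow hp0 hk.1 (hμk k hk)).const_mul
      (β ^ (-(2 / p)))).fun_add (hasDerivAt_id' k)).congr_deriv (by ring)).congr_of_eventuallyEq ?_
    filter_upwards [Ioo_mem_nhds hk.1 hk.2] with x hx
    rw [rpow_one_sub_half_sub_mul_rpow_half_rpow hp0 hx.1 (hμk x hx).le]
  · intro k hk
    have := mul_le_mul_of_nonneg_left (rpowTangent_le hq (sub_pos.2 (hμk k hk)) ha.le)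
      (rpow_nonneg hβ0.le (-(2 / p)))
    linarith
  · have hcrit : ∀ k ∈ Ioo 0 (μ ^ (-(1 / (p - 1)))),
        1 - β ^ (-(2 / p)) * rpowTangent (2 / p) (k ^ (1 - p) - μ) ((p - 1) * μ) = 0 →
        k ^ (1 - p) - μ = (p - 1) * μ := by
      intro k hk hzero
      by_contra hne
      have := mul_lt_mul_of_pos_left (rpowTangent_lt hq (sub_pos.2 (hμk k hk)) ha.le hne)
        (rpow_pos_of_pos hβ0 (-(2 / p)))
      linarith
    rintro k₁ ⟨hk₁, h₁⟩ k₂ ⟨hk₂, h₂⟩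
    refine rpow_left_injOn (by linarith : 1 - p ≠ 0) hk₁.1.le hk₂.1.le ?_
    linarith [hcrit k₁ hk₁ h₁, hcrit k₂ hk₂ h₂]

end Profile

theorem stmt_2_general (N : ℕ) (hN : 5 ≤ N) (p : ℝ) (hp : p = (N : ℝ) / ((N : ℝ) - 2))
    (μ₁ μ₂ β : ℝ) (hμ₁ : 0 < μ₁) (hμ₂ : 0 < μ₂)
    (hβ' : (p - 1) * max μ₁ μ₂ ≤ β) :
    StrictMonoOn
      (fun k : ℝ => β ^ (-(2 / p)) * (k ^ (1 - p / 2) - μ₁ * k ^ (p / 2)) ^ (2 / p) + k)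
      (Set.Icc 0 (μ₁ ^ (-(1 / (p - 1))))) ∧
    StrictMonoOn
      (fun l : ℝ => β ^ (-(2 / p)) * (l ^ (1 - p / 2) - μ₂ * l ^ (p / 2)) ^ (2 / p) + l)
      (Set.Icc 0 (μ₂ ^ (-(1 / (p - 1))))) := by
  have hN5 : (5 : ℝ) ≤ N := by exact_mod_cast hN
  have hN2 : (0 : ℝ) < N - 2 := by linarith
  have hp1 : 1 < p := by rw [hp, lt_div_iff₀ hN2]; linarith
  have hp2 : p < 2 := by rw [hp, div_lt_iff₀ hN2]; linarith
  have hβ : ∀ μ, μ ≤ max μ₁ μ₂ → (p - 1) * μ ≤ β := fun μ hμ =>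
    (mul_le_mul_of_nonneg_left hμ (by linarith)).trans hβ'
  exact ⟨strictMonoOn_rpow_profile_add_id hp1 hp2 hμ₁ (hβ μ₁ (le_max_left _ _)),
    strictMonoOn_rpow_profile_add_id hp1 hp2 hμ₂ (hβ μ₂ (le_max_right _ _))⟩

theorem stmt_2 (N : ℕ) (hN : 5 ≤ N) (p : ℝ) (hp : p = (N : ℝ) / ((N : ℝ) - 2))
    (μ₁ μ₂ β : ℝ) (hμ₁ : 0 < μ₁) (hμ₂ : 0 < μ₂) (hβ : 0 < β)
    (hβ' : (p - 1) * max μ₁ μ₂ ≤ β) :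
    StrictMonoOn
      (fun k : ℝ => β ^ (-(2 / p)) * (k ^ (1 - p / 2) - μ₁ * k ^ (p / 2)) ^ (2 / p) + k)
      (Set.Icc 0 (μ₁ ^ (-(1 / (p - 1))))) ∧
    StrictMonoOn
      (fun l : ℝ => β ^ (-(2 / p)) * (l ^ (1 - p / 2) - μ₂ * l ^ (p / 2)) ^ (2 / p) + l)
      (Set.Icc 0 (μ₂ ^ (-(1 / (p - 1))))) :=
  stmt_2_general N hN p hp μ₁ μ₂ β hμ₁ hμ₂ hβ'
end

section
/- The function h₁ satisfies h₁(0) = h₁(μ₁^{-1/(p-1)}) = 0, h₁ is strictly increasing on [0, ((2-p)/(p μ₁))^{1/(p-1)}] and strictly decreasing on [((2-p)/(p μ₁))^{1/(p-1)}, μ₁^{-1/(p-1)}]; moreover, for every k ∈ (0, μ₁^{-1/(p-1)}) the derivative satisfies h₁'(k) ≥ -β^{-2/p} μ₁^{2/p} (p-1)^{2/p}, with equality exactly at k = (p μ₁)^{-1/(p-1)}. -/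
open Real Set

/-!
In the variable `x = μ k^(p-1)`, which runs from `0` to `1` as `k` runs over
`(0, μ^(-1/(p-1)))`, the derivative factors as
`h₁'(k) = β^(-2/p) μ^(2/p) (1 - x)^((2-p)/p) ((2-p)/p - x) / x^(2/p)`,
so `h₁` increases until `x = (2-p)/p` and decreases afterwards. The lower bound on `h₁'` is the
weighted AM-GM inequality `a^(p/2) b^(1-p/2) ≤ (p/2) a + (1-p/2) b = (p-1) x` for
`a = x - (2-p)/p` and `b = 1 - x`, raised to the power `2/p`; equality holds iff `a = b`,
i.e. `x = 1/p`.
-/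

lemma mul_rpow_lt_mul_rpow_iff {μ q k t : ℝ} (hμ : 0 < μ) (hq : 0 < q) (hk : 0 ≤ k)
    (ht : 0 ≤ t) :
    μ * k ^ q < μ * t ^ q ↔ k < t := by
  rw [mul_lt_mul_iff_of_pos_left hμ, rpow_lt_rpow_iff hk ht hq]

lemma mul_rpow_eq_mul_rpow_iff {μ q k t : ℝ} (hμ : 0 < μ) (hq : 0 < q) (hk : 0 ≤ k)
    (ht : 0 ≤ t) :
    μ * k ^ q = μ * t ^ q ↔ k = t := by
  rw [mul_right_inj' hμ.ne', rpow_left_inj hk ht hq.ne']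

lemma rpow_neg_one_div_rpow {a q : ℝ} (ha : 0 ≤ a) (hq : q ≠ 0) :
    (a ^ (-(1 / q))) ^ q = a⁻¹ := by
  rw [rpow_neg ha, inv_rpow (rpow_nonneg ha _), one_div, rpow_inv_rpow ha hq]

section Slope

variable {p x : ℝ}

lemma one_sub_rpow_mul_rpow_half (hp : 0 < p) (hx1 : x < 1) (ha : (2 - p) / p ≤ x) :
    ((1 - x) ^ ((2 - p) / p) * (x - (2 - p) / p)) ^ (p / 2)
      = (x - (2 - p) / p) ^ (p / 2) * (1 - x) ^ (1 - p / 2) := by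
  rw [mul_rpow (rpow_nonneg (by linarith) _) (by linarith), ← rpow_mul (by linarith),
    show (2 - p) / p * (p / 2) = 1 - p / 2 by field_simp, mul_comm]

lemma arith_mean_eq_sub_one_mul (hp : 0 < p) :
    p / 2 * (x - (2 - p) / p) + (1 - p / 2) * (1 - x) = (p - 1) * x := by
  field_simp; ring

lemma one_sub_rpow_mul_le (hp1 : 1 ≤ p) (hp2 : p < 2) (hx0 : 0 ≤ x) (hx1 : x < 1) :
    (1 - x) ^ ((2 - p) / p) * (x - (2 - p) / p) ≤ ((p - 1) * x) ^ (2 / p) := by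
  have hp : 0 < p := by linarith
  rcases le_or_gt ((2 - p) / p) x with ha | ha
  · rw [← inv_div p 2, le_rpow_inv_iff_of_pos (by positivity) (mul_nonneg (by linarith) hx0)
      (by positivity), one_sub_rpow_mul_rpow_half hp hx1 ha, ← arith_mean_eq_sub_one_mul hp]
    exact geom_mean_le_arith_mean2_weighted (by positivity) (by linarith) (by linarith)
      (by linarith) (by ring)
  · exact (mul_neg_of_pos_of_neg (rpow_pos_of_pos (by linarith) _) (by linarith)).le.trans
      (rpow_nonneg (mul_nonneg (by linarith) hx0) _)

lemma one_sub_rpow_mul_eq_iff (hp1 : 1 ≤ p) (hp2 : p < 2) (hx0 : 0 ≤ x) (hx1 : x < 1) :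
    (1 - x) ^ ((2 - p) / p) * (x - (2 - p) / p) = ((p - 1) * x) ^ (2 / p) ↔ x = 1 / p := by
  have hp : 0 < p := by linarith
  rcases le_or_gt ((2 - p) / p) x with ha | ha
  · rw [← inv_div p 2, eq_rpow_inv (by positivity) (mul_nonneg (by linarith) hx0)
      (by positivity), one_sub_rpow_mul_rpow_half hp hx1 ha, ← arith_mean_eq_sub_one_mul hp,
      geom_mean_eq_arith_mean2_weighted_iff_of_pos (by positivity) (by linarith) (by linarith)
        (by linarith) (by ring), sub_eq_sub_iff_add_eq_add,
      show 1 + (2 - p) / p = 2 * (1 / p) by field_simp; ring]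
    constructor <;> intro h <;> linarith
  · have : (2 - p) / p ≤ 1 / p := div_le_div_of_nonneg_right (by linarith) hp.le
    refine iff_of_false (ne_of_lt ?_) (by linarith)
    exact (mul_neg_of_pos_of_neg (rpow_pos_of_pos (by linarith) _) (by linarith)).trans_le
      (rpow_nonneg (mul_nonneg (by linarith) hx0) _)

noncomputable def profileSlope (p x : ℝ) : ℝ :=
  (1 - x) ^ ((2 - p) / p) * ((2 - p) / p - x) / x ^ (2 / p)

lemma profileSlope_pos (hx0 : 0 < x) (hx1 : x < 1) (h : x < (2 - p) / p) :
    0 < profileSlope p x := by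
  have : 0 < 1 - x := by linarith
  have : 0 < (2 - p) / p - x := by linarith
  unfold profileSlope; positivity

lemma profileSlope_neg (hx0 : 0 < x) (hx1 : x < 1) (h : (2 - p) / p < x) :
    profileSlope p x < 0 := by
  have : 0 < 1 - x := by linarith
  exact div_neg_of_neg_of_pos (mul_neg_of_pos_of_neg (by positivity) (by linarith))
    (by positivity)

lemma neg_rpow_le_profileSlope (hp1 : 1 ≤ p) (hp2 : p < 2) (hx0 : 0 < x) (hx1 : x < 1) :
    -(p - 1) ^ (2 / p) ≤ profileSlope p x := by
  rw [profileSlope, le_div_iff₀ (by positivity), neg_mul, ← mul_rpow (by linarith) hx0.le]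
  linarith [one_sub_rpow_mul_le hp1 hp2 hx0.le hx1]

lemma profileSlope_eq_neg_rpow_iff (hp1 : 1 ≤ p) (hp2 : p < 2) (hx0 : 0 < x) (hx1 : x < 1) :
    profileSlope p x = -(p - 1) ^ (2 / p) ↔ x = 1 / p := by
  rw [profileSlope, div_eq_iff (by positivity), neg_mul, ← mul_rpow (by linarith) hx0.le,
    ← one_sub_rpow_mul_eq_iff hp1 hp2 hx0.le hx1]
  constructor <;> intro h <;> linarith

end Slope

section Profile

variable {p μ β k : ℝ}

noncomputable def profile (p μ β k : ℝ) : ℝ :=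
  β ^ (-(2 / p)) * (k ^ (1 - p / 2) - μ * k ^ (p / 2)) ^ (2 / p)

lemma rpow_sub_mul_rpow_eq (hk : 0 < k) :
    k ^ (1 - p / 2) - μ * k ^ (p / 2) = k ^ (1 - p / 2) * (1 - μ * k ^ (p - 1)) := by
  rw [show p / 2 = (p - 1) + (1 - p / 2) by ring, rpow_add hk]; ring_nf

lemma profile_zero (hp0 : 0 < p) (hp2 : p < 2) : profile p μ β 0 = 0 := by
  rw [profile, zero_rpow (by linarith), zero_rpow (by linarith), mul_zero, sub_zero,
    zero_rpow (by positivity), mul_zero]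

lemma profile_eq_zero (hp : p ≠ 0) (hk : 0 < k) (hx : μ * k ^ (p - 1) = 1) :
    profile p μ β k = 0 := by
  rw [profile, rpow_sub_mul_rpow_eq hk, hx, sub_self, mul_zero, zero_rpow (by simpa), mul_zero]

lemma continuous_profile (hp0 : 0 ≤ p) (hp2 : p ≤ 2) : Continuous (profile p μ β) :=
  continuous_const.mul ((continuous_rpow_const (by positivity)).comp
    ((continuous_rpow_const (by linarith)).sub
      (continuous_const.mul (continuous_rpow_const (by positivity)))))

lemma hasDerivAt_profile (hp : 0 < p) (hμ : 0 < μ) (hk : 0 < k) (hx : μ * k ^ (p - 1) < 1) :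
    HasDerivAt (profile p μ β)
      (β ^ (-(2 / p)) * μ ^ (2 / p) * profileSlope p (μ * k ^ (p - 1))) k := by
  set x := μ * k ^ (p - 1) with hx_def
  have hx0 : 0 < x := by positivity
  have hbase : 0 < k ^ (1 - p / 2) - μ * k ^ (p / 2) := by
    rw [rpow_sub_mul_rpow_eq hk]; exact mul_pos (by positivity) (by linarith)
  have hinner : HasDerivAt (fun k => k ^ (1 - p / 2) - μ * k ^ (p / 2))
      ((1 - p / 2) * k ^ (1 - p / 2 - 1) - μ * (p / 2 * k ^ (p / 2 - 1))) k :=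
    (hasDerivAt_rpow_const (Or.inl hk.ne')).sub
      ((hasDerivAt_rpow_const (Or.inl hk.ne')).const_mul μ)
  refine (((hasDerivAt_rpow_const (Or.inl hbase.ne')).comp k hinner).const_mul
    (β ^ (-(2 / p)))).congr_deriv ?_
  have e1 : k ^ (1 - p / 2 - 1) = k ^ (-(p / 2)) := by ring_nf
  have e2 : μ * (p / 2 * k ^ (p / 2 - 1)) = p / 2 * x * k ^ (-(p / 2)) := by
    rw [hx_def, show p / 2 - 1 = (p - 1) + -(p / 2) by ring, rpow_add hk]; ring
  have e3 : (k ^ (1 - p / 2) * (1 - x)) ^ (2 / p - 1)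
      = k ^ ((1 - p / 2) * (2 / p - 1)) * (1 - x) ^ ((2 - p) / p) := by
    rw [mul_rpow (by positivity) (by linarith), ← rpow_mul hk.le,
      show 2 / p - 1 = (2 - p) / p by field_simp]
  have e4 : k ^ ((1 - p / 2) * (2 / p - 1)) * k ^ (-(p / 2)) * x ^ (2 / p) = μ ^ (2 / p) := by
    have hexp : (1 - p / 2) * (2 / p - 1) + -(p / 2) + (p - 1) * (2 / p) = 0 := by
      field_simp; ring
    rw [hx_def, mul_rpow hμ.le (by positivity), ← rpow_mul hk.le, ← rpow_add hk,
      mul_left_comm, ← rpow_add hk, hexp, rpow_zero, mul_one]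
  rw [rpow_sub_mul_rpow_eq hk, e1, e2, e3, ← e4, profileSlope]
  have : x ^ (2 / p) ≠ 0 := by positivity
  field_simp

lemma mul_rpow_peak (hp1 : 1 < p) (hp2 : p < 2) (hμ : 0 < μ) :
    μ * (((2 - p) / (p * μ)) ^ (1 / (p - 1))) ^ (p - 1) = (2 - p) / p := by
  rw [one_div, rpow_inv_rpow (div_nonneg (by linarith) (by positivity)) (by linarith)]
  field_simp

lemma mul_rpow_endpoint (hp1 : 1 < p) (hμ : 0 < μ) :
    μ * (μ ^ (-(1 / (p - 1)))) ^ (p - 1) = 1 := by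
  rw [rpow_neg_one_div_rpow hμ.le (by linarith), mul_inv_cancel₀ hμ.ne']

lemma mul_rpow_steepest (hp1 : 1 < p) (hμ : 0 < μ) :
    μ * ((p * μ) ^ (-(1 / (p - 1)))) ^ (p - 1) = 1 / p := by
  rw [rpow_neg_one_div_rpow (by positivity) (by linarith)]
  field_simp

lemma mul_rpow_lt_one_of_lt (hp1 : 1 < p) (hμ : 0 < μ) (hk : 0 ≤ k)
    (h : k < μ ^ (-(1 / (p - 1)))) : μ * k ^ (p - 1) < 1 := by
  simpa only [mul_rpow_endpoint hp1 hμ] using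
    (mul_rpow_lt_mul_rpow_iff (q := p - 1) hμ (by linarith) hk (by positivity)).2 h

lemma strictMonoOn_profile (hp1 : 1 < p) (hp2 : p < 2) (hμ : 0 < μ) (hβ : 0 < β) :
    StrictMonoOn (profile p μ β) (Icc 0 (((2 - p) / (p * μ)) ^ (1 / (p - 1)))) := by
  refine strictMonoOn_of_deriv_pos (convex_Icc _ _)
    (continuous_profile (by linarith) hp2.le).continuousOn ?_
  rw [interior_Icc]
  rintro k ⟨hk0, hk⟩
  have hx : μ * k ^ (p - 1) < (2 - p) / p := by
    rwa [← mul_rpow_peak hp1 hp2 hμ, mul_rpow_lt_mul_rpow_iff hμ (by linarith) hk0.le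
      (by positivity)]
  have hx1 : μ * k ^ (p - 1) < 1 := hx.trans ((div_lt_one (by linarith)).2 (by linarith))
  rw [(hasDerivAt_profile (by linarith) hμ hk0 hx1).deriv]
  exact mul_pos (by positivity) (profileSlope_pos (by positivity) hx1 hx)

lemma strictAntiOn_profile (hp1 : 1 < p) (hp2 : p < 2) (hμ : 0 < μ) (hβ : 0 < β) :
    StrictAntiOn (profile p μ β)
      (Icc (((2 - p) / (p * μ)) ^ (1 / (p - 1))) (μ ^ (-(1 / (p - 1))))) := by
  refine strictAntiOn_of_deriv_neg (convex_Icc _ _)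
    (continuous_profile (by linarith) hp2.le).continuousOn ?_
  rw [interior_Icc]
  rintro k ⟨hk1, hk2⟩
  have hk0 : 0 < k := lt_of_le_of_lt (by positivity) hk1
  have hx : (2 - p) / p < μ * k ^ (p - 1) := by
    rwa [← mul_rpow_peak hp1 hp2 hμ, mul_rpow_lt_mul_rpow_iff hμ (by linarith) (by positivity)
      hk0.le]
  have hx1 := mul_rpow_lt_one_of_lt hp1 hμ hk0.le hk2
  rw [(hasDerivAt_profile (by linarith) hμ hk0 hx1).deriv]
  exact mul_neg_of_pos_of_neg (by positivity) (profileSlope_neg (by positivity) hx1 hx)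

lemma neg_le_deriv_profile (hp1 : 1 < p) (hp2 : p < 2) (hμ : 0 < μ) (hβ : 0 < β)
    (hk : k ∈ Ioo 0 (μ ^ (-(1 / (p - 1))))) :
    -(β ^ (-(2 / p)) * μ ^ (2 / p) * (p - 1) ^ (2 / p)) ≤ deriv (profile p μ β) k := by
  obtain ⟨hk0, hk⟩ := hk
  have hx1 := mul_rpow_lt_one_of_lt hp1 hμ hk0.le hk
  rw [(hasDerivAt_profile (by linarith) hμ hk0 hx1).deriv, ← mul_neg]
  exact mul_le_mul_of_nonneg_left
    (neg_rpow_le_profileSlope hp1.le hp2 (by positivity) hx1) (by positivity)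

lemma deriv_profile_eq_iff (hp1 : 1 < p) (hp2 : p < 2) (hμ : 0 < μ) (hβ : 0 < β)
    (hk : k ∈ Ioo 0 (μ ^ (-(1 / (p - 1))))) :
    deriv (profile p μ β) k = -(β ^ (-(2 / p)) * μ ^ (2 / p) * (p - 1) ^ (2 / p)) ↔
      k = (p * μ) ^ (-(1 / (p - 1))) := by
  obtain ⟨hk0, hk⟩ := hk
  have hx1 := mul_rpow_lt_one_of_lt hp1 hμ hk0.le hk
  rw [(hasDerivAt_profile (by linarith) hμ hk0 hx1).deriv, ← mul_neg,
    mul_right_inj' (by positivity), profileSlope_eq_neg_rpow_iff hp1.le hp2 (by positivity) hx1,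
    ← mul_rpow_steepest hp1 hμ,
    mul_rpow_eq_mul_rpow_iff hμ (by linarith) hk0.le (by positivity)]

end Profile

theorem stmt_3 (N : ℕ) (hN : 5 ≤ N) (p : ℝ) (hp : p = (N : ℝ) / ((N : ℝ) - 2))
    (μ₁ β : ℝ) (hμ₁ : 0 < μ₁) (hβ : 0 < β)
    (h₁ : ℝ → ℝ)
    (hh₁ : ∀ k, h₁ k = β ^ (-(2 / p)) * (k ^ (1 - p / 2) - μ₁ * k ^ (p / 2)) ^ (2 / p)) :
    h₁ 0 = 0 ∧ h₁ (μ₁ ^ (-(1 / (p - 1)))) = 0 ∧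
    StrictMonoOn h₁ (Set.Icc 0 (((2 - p) / (p * μ₁)) ^ (1 / (p - 1)))) ∧
    StrictAntiOn h₁
      (Set.Icc (((2 - p) / (p * μ₁)) ^ (1 / (p - 1))) (μ₁ ^ (-(1 / (p - 1))))) ∧
    ∀ k ∈ Set.Ioo (0 : ℝ) (μ₁ ^ (-(1 / (p - 1)))),
      -(β ^ (-(2 / p)) * μ₁ ^ (2 / p) * (p - 1) ^ (2 / p)) ≤ deriv h₁ k ∧
      (deriv h₁ k = -(β ^ (-(2 / p)) * μ₁ ^ (2 / p) * (p - 1) ^ (2 / p)) ↔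
        k = (p * μ₁) ^ (-(1 / (p - 1)))) := by
  have hN' : (5 : ℝ) ≤ N := by exact_mod_cast hN
  have hp1 : 1 < p := by rw [hp, lt_div_iff₀ (by linarith)]; linarith
  have hp2 : p < 2 := by rw [hp, div_lt_iff₀ (by linarith)]; linarith
  obtain rfl : h₁ = profile p μ₁ β := funext hh₁
  exact ⟨profile_zero (by linarith) hp2,
    profile_eq_zero (by linarith) (by positivity) (mul_rpow_endpoint hp1 hμ₁),
    strictMonoOn_profile hp1 hp2 hμ₁ hβ, strictAntiOn_profile hp1 hp2 hμ₁ hβ,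
    fun k hk => ⟨neg_le_deriv_profile hp1 hp2 hμ₁ hβ hk,
      deriv_profile_eq_iff hp1 hp2 hμ₁ hβ hk⟩⟩
end

section
/- If β ≥ (p-1)·max{μ₁, μ₂}, then μ₁(k₀+l₀)^{p-1} < 1 and μ₂(k₀+l₀)^{p-1} < 1; moreover every solution (k, l) of the system satisfies both k ≥ k₀ and l ≥ l₀. -/
/-!
Write a solution as `(k, t k)`. The first equation becomes `k ^ (p - 1) * (μ₁ + β t ^ (p / 2)) = 1`,
and eliminating `k` from the second leaves `balance t = 0`. The derivative of `balance` has the sign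
of `(p - 1) μ₂ t ^ (p / 2) - β (1 + p / 2 (t - 1))`, which is negative for `t ≠ 1` by Bernoulli's
inequality once `β ≥ (p - 1) μ₂`. So `balance` is strictly decreasing, the ratio `t` and then `k`
are determined, and the solution is unique.

The strict bounds come from `(1 + t) ^ q < 1 + q t ^ ((q + 1) / 2)` for `0 < q < 1`, `t > 0`:
`μ₁ (k + l) ^ (p - 1) = μ₁ k ^ (p - 1) (1 + t) ^ (p - 1) < k ^ (p - 1) (μ₁ + (p - 1) μ₁ t ^ (p / 2))`,
which is at most `1` by the first equation; symmetrically for `μ₂`.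
-/

open Real Set

lemma strictAntiOn_Ioi_of_hasDerivAt_neg_of_ne {f f' : ℝ → ℝ} {a c : ℝ} (hac : a < c)
    (hf : ∀ x ∈ Ioi a, HasDerivAt f (f' x) x) (hf' : ∀ x ∈ Ioi a, x ≠ c → f' x < 0) :
    StrictAntiOn f (Ioi a) := by
  have hcont : ContinuousOn f (Ioi a) := fun x hx => (hf x hx).continuousAt.continuousWithinAt
  rw [← Ioc_union_Ici_eq_Ioi hac]
  refine StrictAntiOn.union ?_ ?_ (isGreatest_Ioc hac) isLeast_Ici
  · refine strictAntiOn_of_hasDerivWithinAt_neg (f' := f') (convex_Ioc a c)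
      (hcont.mono Ioc_subset_Ioi_self) (fun x hx => ?_) (fun x hx => ?_) <;>
      rw [interior_Ioc] at hx
    · exact (hf x hx.1).hasDerivWithinAt
    · exact hf' x hx.1 hx.2.ne
  · refine strictAntiOn_of_hasDerivWithinAt_neg (f' := f') (convex_Ici c)
      (hcont.mono fun x hx => hac.trans_le hx) (fun x hx => ?_) (fun x hx => ?_) <;>
      rw [interior_Ici] at hx
    · exact (hf x (hac.trans hx)).hasDerivWithinAt
    · exact hf' x (hac.trans hx) hx.ne'

theorem one_add_rpow_lt_one_add_mul_rpow {q t : ℝ} (hq0 : 0 < q) (hq1 : q < 1) (ht : 0 < t) :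
    (1 + t) ^ q < 1 + q * t ^ ((q + 1) / 2) := by
  set F : ℝ → ℝ := fun x => 1 + q * x ^ ((q + 1) / 2) - (1 + x) ^ q
  have hcont : Continuous F :=
    (continuous_const.add (continuous_const.mul (continuous_rpow_const (by linarith)))).sub
      ((continuous_rpow_const hq0.le).comp (continuous_const.add continuous_id))
  have hderiv : ∀ x ∈ Ioi (0 : ℝ), HasDerivAt F
      (q * ((q + 1) / 2 * x ^ ((q + 1) / 2 - 1)) - q * (1 + x) ^ (q - 1)) x := by
    intro x hx
    have hx1 : 1 + x ≠ 0 := by linarith [mem_Ioi.1 hx]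
    exact ((((hasDerivAt_rpow_const (Or.inl (ne_of_gt hx))).const_mul q).const_add 1).sub
      (((hasDerivAt_id x).const_add 1).rpow_const (Or.inl hx1))).congr_deriv (by simp)
  -- `2 √x ≤ 1 + x` and the strict Bernoulli inequality `2 ^ q < 1 + q` make `F' > 0`.
  have hderiv_pos : ∀ x ∈ Ioi (0 : ℝ),
      0 < q * ((q + 1) / 2 * x ^ ((q + 1) / 2 - 1)) - q * (1 + x) ^ (q - 1) := by
    intro x hx
    have hx : 0 < x := hx
    have h2q : (2 : ℝ) ^ (q - 1) < (q + 1) / 2 := by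
      have := rpow_one_add_lt_one_add_mul_self (s := 1) (by norm_num) one_ne_zero hq0 hq1
      rw [rpow_sub two_pos, rpow_one]
      norm_num at this ⊢
      linarith
    have hsqrt : 2 * √x ≤ 1 + x := by nlinarith [sq_sqrt hx.le, sq_nonneg (√x - 1)]
    have hlt : (1 + x) ^ (q - 1) < (q + 1) / 2 * x ^ ((q + 1) / 2 - 1) :=
      calc (1 + x) ^ (q - 1) ≤ (2 * √x) ^ (q - 1) :=
            rpow_le_rpow_of_nonpos (by positivity) hsqrt (by linarith)
        _ = 2 ^ (q - 1) * x ^ ((q + 1) / 2 - 1) := by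
            rw [mul_rpow zero_le_two (sqrt_nonneg x), sqrt_eq_rpow, ← rpow_mul hx.le]
            ring_nf
        _ < (q + 1) / 2 * x ^ ((q + 1) / 2 - 1) :=
            mul_lt_mul_of_pos_right h2q (rpow_pos_of_pos hx _)
    nlinarith
  have hmono : StrictMonoOn F (Ici 0) :=
    strictMonoOn_of_hasDerivWithinAt_pos (convex_Ici 0) hcont.continuousOn
      (by rw [interior_Ici]; exact fun x hx => (hderiv x hx).hasDerivWithinAt)
      (by rw [interior_Ici]; exact hderiv_pos)
  have := hmono self_mem_Ici ht.le ht
  simp only [F, zero_rpow (by linarith : (q + 1) / 2 ≠ 0)] at this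
  norm_num at this
  linarith

structure IsSolution (p μ₁ μ₂ β k l : ℝ) : Prop where
  left_pos : 0 < k
  right_pos : 0 < l
  eq_left : μ₁ * k ^ (p - 1) + β * k ^ (p / 2 - 1) * l ^ (p / 2) = 1
  eq_right : μ₂ * l ^ (p - 1) + β * l ^ (p / 2 - 1) * k ^ (p / 2) = 1

noncomputable def balance (p μ₁ μ₂ β t : ℝ) : ℝ :=
  μ₂ * t ^ (p - 1) + β * t ^ (p / 2 - 1) - (μ₁ + β * t ^ (p / 2))

section

variable {p μ₁ μ₂ β k l t : ℝ}

lemma IsSolution.symm (h : IsSolution p μ₁ μ₂ β k l) : IsSolution p μ₂ μ₁ β l k :=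
  ⟨h.right_pos, h.left_pos, h.eq_right, h.eq_left⟩

lemma left_lhs_eq_rpow_mul (μ : ℝ) (hk : 0 < k) (ht : 0 < t) :
    μ * k ^ (p - 1) + β * k ^ (p / 2 - 1) * (t * k) ^ (p / 2)
      = k ^ (p - 1) * (μ + β * t ^ (p / 2)) := by
  rw [mul_rpow ht.le hk.le, show p - 1 = (p / 2 - 1) + p / 2 by ring, rpow_add hk]
  ring

lemma right_lhs_eq_rpow_mul (μ : ℝ) (hk : 0 < k) (ht : 0 < t) :
    μ * (t * k) ^ (p - 1) + β * (t * k) ^ (p / 2 - 1) * k ^ (p / 2)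
      = k ^ (p - 1) * (μ * t ^ (p - 1) + β * t ^ (p / 2 - 1)) := by
  rw [mul_rpow ht.le hk.le, mul_rpow ht.le hk.le, show p - 1 = (p / 2 - 1) + p / 2 by ring,
    rpow_add hk]
  ring

lemma IsSolution.rpow_mul_eq_one (h : IsSolution p μ₁ μ₂ β k l) :
    k ^ (p - 1) * (μ₁ + β * (l / k) ^ (p / 2)) = 1 := by
  have := left_lhs_eq_rpow_mul (p := p) (β := β) μ₁ h.left_pos (div_pos h.right_pos h.left_pos)
  rw [div_mul_cancel₀ _ h.left_pos.ne'] at this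
  rw [← this, h.eq_left]

lemma IsSolution.balance_eq_zero (h : IsSolution p μ₁ μ₂ β k l) :
    balance p μ₁ μ₂ β (l / k) = 0 := by
  have hright := right_lhs_eq_rpow_mul (p := p) (β := β) μ₂ h.left_pos
    (div_pos h.right_pos h.left_pos)
  rw [div_mul_cancel₀ _ h.left_pos.ne', h.eq_right] at hright
  exact sub_eq_zero.2 <| mul_left_cancel₀ (rpow_pos_of_pos h.left_pos _).ne' <|
    hright.symm.trans h.rpow_mul_eq_one.symm

lemma hasDerivAt_balance {x : ℝ} (hx : 0 < x) :
    HasDerivAt (balance p μ₁ μ₂ β)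
      (x ^ (p / 2 - 2) * ((p - 1) * μ₂ * x ^ (p / 2) - β * (1 + p / 2 * (x - 1)))) x := by
  have d1 := hasDerivAt_rpow_const (p := p - 1) (Or.inl hx.ne')
  have d2 := hasDerivAt_rpow_const (p := p / 2 - 1) (Or.inl hx.ne')
  have d3 := hasDerivAt_rpow_const (p := p / 2) (Or.inl hx.ne')
  refine (((d1.const_mul μ₂).add (d2.const_mul β)).sub
    ((d3.const_mul β).const_add μ₁)).congr_deriv ?_
  rw [show p - 1 - 1 = (p / 2 - 2) + p / 2 by ring, show p / 2 - 1 - 1 = p / 2 - 2 by ring,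
    show p / 2 - 1 = (p / 2 - 2) + 1 by ring, rpow_add hx, rpow_add hx, rpow_one]
  ring

theorem strictAntiOn_balance (hp0 : 0 < p) (hp2 : p < 2) (hβ : 0 < β)
    (hβμ₂ : (p - 1) * μ₂ ≤ β) : StrictAntiOn (balance p μ₁ μ₂ β) (Ioi 0) := by
  refine strictAntiOn_Ioi_of_hasDerivAt_neg_of_ne one_pos (fun x hx => hasDerivAt_balance hx)
    fun x hx hx1 => mul_neg_of_pos_of_neg (rpow_pos_of_pos hx _) ?_
  have hx : 0 < x := hx
  have hbernoulli : x ^ (p / 2) < 1 + p / 2 * (x - 1) := by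
    simpa using rpow_one_add_lt_one_add_mul_self (s := x - 1) (by linarith) (sub_ne_zero.2 hx1)
      (by linarith) (by linarith)
  nlinarith [mul_le_mul_of_nonneg_right hβμ₂ (rpow_pos_of_pos hx (p / 2)).le]

theorem IsSolution.unique {k' l' : ℝ} (h : IsSolution p μ₁ μ₂ β k l)
    (h' : IsSolution p μ₁ μ₂ β k' l') (hp0 : 0 < p) (hp1 : p ≠ 1) (hp2 : p < 2) (hβ : 0 < β)
    (hβμ₂ : (p - 1) * μ₂ ≤ β) : k = k' ∧ l = l' := by
  have hratio : l / k = l' / k' :=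
    (strictAntiOn_balance hp0 hp2 hβ hβμ₂).injOn (div_pos h.right_pos h.left_pos)
      (div_pos h'.right_pos h'.left_pos) (h.balance_eq_zero.trans h'.balance_eq_zero.symm)
  have hpow : k ^ (p - 1) = k' ^ (p - 1) := by
    have heq := h.rpow_mul_eq_one.trans h'.rpow_mul_eq_one.symm
    rw [hratio] at heq
    exact mul_right_cancel₀ (right_ne_zero_of_mul_eq_one h'.rpow_mul_eq_one) heq
  have hk : k = k' := (rpow_left_inj h.left_pos.le h'.left_pos.le (sub_ne_zero.2 hp1)).1 hpow
  subst hk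
  exact ⟨rfl, (div_left_inj' h.left_pos.ne').1 hratio⟩

theorem IsSolution.mul_add_rpow_lt_one (h : IsSolution p μ₁ μ₂ β k l) (hp1 : 1 < p) (hp2 : p < 2)
    (hμ₁ : 0 < μ₁) (hβμ₁ : (p - 1) * μ₁ ≤ β) : μ₁ * (k + l) ^ (p - 1) < 1 := by
  have hk := h.left_pos
  have ht : 0 < l / k := div_pos h.right_pos hk
  have hsum : k + l = k * (1 + l / k) := by field_simp
  have hkey := one_add_rpow_lt_one_add_mul_rpow (q := p - 1) (by linarith) (by linarith) ht
  rw [show (p - 1 + 1) / 2 = p / 2 by ring] at hkey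
  have hkp := rpow_pos_of_pos hk (p - 1)
  calc μ₁ * (k + l) ^ (p - 1) = μ₁ * k ^ (p - 1) * (1 + l / k) ^ (p - 1) := by
        rw [hsum, mul_rpow hk.le (by positivity)]; ring
    _ < μ₁ * k ^ (p - 1) * (1 + (p - 1) * (l / k) ^ (p / 2)) := by gcongr
    _ ≤ k ^ (p - 1) * (μ₁ + β * (l / k) ^ (p / 2)) := by
        nlinarith [mul_le_mul_of_nonneg_right hβμ₁ (mul_pos hkp (rpow_pos_of_pos ht (p / 2))).le]
    _ = 1 := h.rpow_mul_eq_one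

end

theorem stmt_4_general (N : ℕ) (hN : 5 ≤ N) (p : ℝ) (hp : p = (N : ℝ) / ((N : ℝ) - 2))
    (μ₁ μ₂ β : ℝ) (hμ₁ : 0 < μ₁) (hμ₂ : 0 < μ₂) (hβ : 0 < β)
    (hβ' : (p - 1) * max μ₁ μ₂ ≤ β)
    (k₀ l₀ : ℝ) (hk₀ : 0 < k₀) (hl₀ : 0 < l₀)
    (he₁ : μ₁ * k₀ ^ (p - 1) + β * k₀ ^ (p / 2 - 1) * l₀ ^ (p / 2) = 1)
    (he₂ : μ₂ * l₀ ^ (p - 1) + β * l₀ ^ (p / 2 - 1) * k₀ ^ (p / 2) = 1) :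
    μ₁ * (k₀ + l₀) ^ (p - 1) < 1 ∧ μ₂ * (k₀ + l₀) ^ (p - 1) < 1 ∧
    ∀ k l : ℝ, 0 < k → 0 < l →
      μ₁ * k ^ (p - 1) + β * k ^ (p / 2 - 1) * l ^ (p / 2) = 1 →
      μ₂ * l ^ (p - 1) + β * l ^ (p / 2 - 1) * k ^ (p / 2) = 1 →
      k₀ ≤ k ∧ l₀ ≤ l := by
  have hN5 : (5 : ℝ) ≤ N := by exact_mod_cast hN
  have hp1 : 1 < p := by rw [hp, lt_div_iff₀ (by linarith)]; linarith
  have hp2 : p < 2 := by rw [hp, div_lt_iff₀ (by linarith)]; linarith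
  have hβμ₁ : (p - 1) * μ₁ ≤ β :=
    (mul_le_mul_of_nonneg_left (le_max_left μ₁ μ₂) (by linarith)).trans hβ'
  have hβμ₂ : (p - 1) * μ₂ ≤ β :=
    (mul_le_mul_of_nonneg_left (le_max_right μ₁ μ₂) (by linarith)).trans hβ'
  have hsol : IsSolution p μ₁ μ₂ β k₀ l₀ := ⟨hk₀, hl₀, he₁, he₂⟩
  refine ⟨hsol.mul_add_rpow_lt_one hp1 hp2 hμ₁ hβμ₁, ?_, fun k l hk hl e₁ e₂ => ?_⟩
  · simpa only [add_comm] using hsol.symm.mul_add_rpow_lt_one hp1 hp2 hμ₂ hβμ₂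
  · obtain ⟨rfl, rfl⟩ :=
      hsol.unique ⟨hk, hl, e₁, e₂⟩ (by linarith) hp1.ne' hp2 hβ hβμ₂
    exact ⟨le_rfl, le_rfl⟩

theorem stmt_4 (N : ℕ) (hN : 5 ≤ N) (p : ℝ) (hp : p = (N : ℝ) / ((N : ℝ) - 2))
    (μ₁ μ₂ β : ℝ) (hμ₁ : 0 < μ₁) (hμ₂ : 0 < μ₂) (hβ : 0 < β)
    (hβ' : (p - 1) * max μ₁ μ₂ ≤ β)
    (k₀ l₀ : ℝ) (hk₀ : 0 < k₀) (hl₀ : 0 < l₀)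
    (he₁ : μ₁ * k₀ ^ (p - 1) + β * k₀ ^ (p / 2 - 1) * l₀ ^ (p / 2) = 1)
    (he₂ : μ₂ * l₀ ^ (p - 1) + β * l₀ ^ (p / 2 - 1) * k₀ ^ (p / 2) = 1)
    (hmin : ∀ k l : ℝ, 0 < k → 0 < l →
      μ₁ * k ^ (p - 1) + β * k ^ (p / 2 - 1) * l ^ (p / 2) = 1 →
      μ₂ * l ^ (p - 1) + β * l ^ (p / 2 - 1) * k ^ (p / 2) = 1 →
      k₀ ≤ k) :
    μ₁ * (k₀ + l₀) ^ (p - 1) < 1 ∧ μ₂ * (k₀ + l₀) ^ (p - 1) < 1 ∧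
    ∀ k l : ℝ, 0 < k → 0 < l →
      μ₁ * k ^ (p - 1) + β * k ^ (p / 2 - 1) * l ^ (p / 2) = 1 →
      μ₂ * l ^ (p - 1) + β * l ^ (p / 2 - 1) * k ^ (p / 2) = 1 →
      k₀ ≤ k ∧ l₀ ≤ l :=
  stmt_4_general N hN p hp μ₁ μ₂ β hμ₁ hμ₂ hβ hβ' k₀ l₀ hk₀ hl₀ he₁ he₂
end

section
/- Assume β ≥ (p-1)·max{μ₁, μ₂}. If k, l ≥ 0 with (k, l) ≠ (0, 0), k + l ≤ k₀ + l₀, μ₁ k^{p-1} + β k^{p/2-1} l^{p/2} ≥ 1, and μ₂ l^{p-1} + β l^{p/2-1} k^{p/2} ≥ 1, then (k, l) = (k₀, l₀). -/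
/-!
In the coordinates `u = k ^ (p / 2)`, `v = l ^ (p / 2)` and with `q = 2 / p ∈ (1, 2)`, the
condition `α₁(k, l) ≥ 0` says that `(u, v)` lies above the curve `v = (u ^ (q - 1) - μ₁ u) / β`,
on which `(u₀, v₀)` sits, and `k + l = u ^ q + v ^ q`. Under `β ≥ (p - 1) μ₁` the mass
`u ^ q + v ^ q` is strictly increasing along that curve (its derivative is positive by weighted
AM-GM), so a point above the curve with no more mass than `(u₀, v₀)` has `u ≤ u₀`; symmetrically
`v ≤ v₀`. Finally, if `(u, v) ≤ m • (u₀, v₀)` with `m ≤ 1` attained in one coordinate, the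
sublinearity of `u ↦ u ^ (q - 1)` forces `m = 1`.
-/

open Real Set

lemma rpow_sub_one_mul_lt_rpow {q s y b : ℝ} (hq : 1 < q) (hs : 0 < s) (hb : 0 < b)
    (hsy : s ≠ y) (h : (q - 1) * s + y ≤ q * b) : s ^ (q - 1) * y < b ^ q := by
  rcases le_or_gt y 0 with hy | hy
  · exact (mul_nonpos_of_nonneg_of_nonpos (by positivity) hy).trans_lt (by positivity)
  have hq₀ : 0 < q := by linarith
  have amgm : s ^ ((q - 1) / q) * y ^ (1 / q) < (q - 1) / q * s + 1 / q * y :=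
    (geom_mean_lt_arith_mean2_weighted_iff_of_pos (by bound) (by positivity) hs.le hy.le
      (by field_simp; ring)).2 hsy
  have hmean : (q - 1) / q * s + 1 / q * y ≤ b := by
    rw [← mul_div_right_comm, one_div_mul_eq_div, ← add_div, div_le_iff₀ hq₀]
    linarith
  calc s ^ (q - 1) * y = (s ^ ((q - 1) / q) * y ^ (1 / q)) ^ q := by
        rw [mul_rpow (by positivity) (by positivity), ← rpow_mul hs.le, ← rpow_mul hy.le,
          div_mul_cancel₀ _ hq₀.ne', one_div_mul_cancel hq₀.ne', rpow_one]
    _ < b ^ q := rpow_lt_rpow (by positivity) (amgm.trans_le hmean) hq₀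

lemma strictMonoOn_Ioc_of_deriv_pos_of_ne {f : ℝ → ℝ} {l a c : ℝ} (hc : c ∈ Ioo l a)
    (hf : ContinuousOn f (Ioc l a)) (hf' : ∀ x ∈ Ioo l a, x ≠ c → 0 < deriv f x) :
    StrictMonoOn f (Ioc l a) := by
  rw [← Ioc_union_Icc_eq_Ioc hc.1 hc.2.le]
  refine StrictMonoOn.union ?_ ?_ (isGreatest_Ioc hc.1) (isLeast_Icc hc.2.le)
  · refine strictMonoOn_of_deriv_pos (convex_Ioc l c) (hf.mono (Ioc_subset_Ioc_right hc.2.le)) ?_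
    rw [interior_Ioc]
    exact fun x hx ↦ hf' x ⟨hx.1, hx.2.trans hc.2⟩ hx.2.ne
  · refine strictMonoOn_of_deriv_pos (convex_Icc c a)
      (hf.mono ((Icc_subset_Ioc_iff hc.2.le).2 ⟨hc.1, le_rfl⟩)) ?_
    rw [interior_Icc]
    exact fun x hx ↦ hf' x ⟨hc.1.trans hx.1, hx.2⟩ hx.1.ne'

lemma div_sub_two_mem_Ioo {N : ℝ} (hN : 4 < N) : N / (N - 2) ∈ Ioo 1 2 := by
  have : 0 < N - 2 := by linarith
  constructor
  · rw [lt_div_iff₀ this]; linarith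
  · rw [div_lt_iff₀ this]; linarith

namespace CoupledSystem

/-- The curve `α₁ = 0` in the coordinates `u = k ^ (p / 2)`, `v = l ^ (p / 2)`, `q = 2 / p`. -/
noncomputable def levelCurve (q μ β x : ℝ) : ℝ := (x ^ (q - 1) - μ * x) / β

noncomputable def levelMass (q μ β x : ℝ) : ℝ := x ^ q + levelCurve q μ β x ^ q

section
variable {q μ β x : ℝ}

lemma levelCurve_eq_mul (hx : 0 < x) : levelCurve q μ β x = x * (x ^ (q - 2) - μ) / β := by
  rw [levelCurve, show q - 1 = q - 2 + 1 by ring, rpow_add_one hx.ne']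
  ring

lemma levelCurve_pos_iff (hq : q < 2) (hμ : 0 < μ) (hβ : 0 < β) (hx : 0 < x) :
    0 < levelCurve q μ β x ↔ x < μ ^ (q - 2)⁻¹ := by
  rw [levelCurve_eq_mul hx, lt_rpow_inv_iff_of_neg hx hμ (by linarith),
    div_pos_iff_of_pos_right hβ, mul_pos_iff_of_pos_left hx, sub_pos]

lemma levelCurve_rpow_inv (hq : q < 2) (hμ : 0 < μ) : levelCurve q μ β (μ ^ (q - 2)⁻¹) = 0 := by
  rw [levelCurve_eq_mul (by positivity), rpow_inv_rpow hμ.le (by linarith)]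
  simp

lemma continuousOn_levelMass (hq : 0 ≤ q) : ContinuousOn (levelMass q μ β) (Ioi 0) := by
  intro x hx
  have hx : x ≠ 0 := (mem_Ioi.1 hx).ne'
  unfold levelMass levelCurve
  fun_prop (disch := first | exact Or.inl hx | exact Or.inr hq)

lemma hasDerivAt_levelMass (hx : 0 < x) (hpos : 0 < levelCurve q μ β x) :
    HasDerivAt (levelMass q μ β)
      (q * x ^ (q - 1) + q * levelCurve q μ β x ^ (q - 1) * (((q - 1) * x ^ (q - 2) - μ) / β))
      x := by
  have hcurve : HasDerivAt (levelCurve q μ β) (((q - 1) * x ^ (q - 2) - μ) / β) x := by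
    have h := ((hasDerivAt_rpow_const (p := q - 1) (Or.inl hx.ne')).sub
      ((hasDerivAt_id x).const_mul μ)).div_const β
    rwa [show q - 1 - 1 = q - 2 by ring, mul_one] at h
  have h := (hasDerivAt_rpow_const (p := q) (Or.inl hx.ne')).add
    (hcurve.rpow_const (p := q) (Or.inl hpos.ne'))
  exact h.congr_deriv (by ring)

lemma deriv_levelMass_pos (hq : 1 < q) (hβ : 0 < β) (hβq : (2 - q) * μ ≤ q * β) (hx : 0 < x)
    (hpos : 0 < levelCurve q μ β x) (hxc : x ^ (q - 2) ≠ 2 * μ / q) :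
    0 < deriv (levelMass q μ β) x := by
  rw [(hasDerivAt_levelMass hx hpos).deriv]
  set t := x ^ (q - 2)
  have hs : 0 < t - μ := by
    rw [levelCurve_eq_mul hx] at hpos
    exact pos_of_mul_pos_right ((div_pos_iff_of_pos_right hβ).1 hpos) hx.le
  -- AM-GM with weights (q - 1)/q and 1/q, the arithmetic mean being (2 - q)μ/q ≤ β
  have key : (t - μ) ^ (q - 1) * (μ - (q - 1) * t) < β ^ q := by
    refine rpow_sub_one_mul_lt_rpow hq hs hβ ?_ (by linarith)
    contrapose! hxc
    field_simp
    linarith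
  have hcurve : levelCurve q μ β x ^ (q - 1) = x ^ (q - 1) * (t - μ) ^ (q - 1) / β ^ (q - 1) := by
    rw [levelCurve_eq_mul hx, div_rpow (by positivity) hβ.le, mul_rpow hx.le hs.le]
  have hβpow : β ^ q = β ^ (q - 1) * β := by
    rw [← rpow_add_one hβ.ne']; ring_nf
  have : q * x ^ (q - 1) + q * levelCurve q μ β x ^ (q - 1) * (((q - 1) * t - μ) / β)
      = q * x ^ (q - 1) * (β ^ q - (t - μ) ^ (q - 1) * (μ - (q - 1) * t)) / β ^ q := by
    rw [hcurve, hβpow]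
    field_simp
    ring
  rw [this]
  have : 0 < β ^ q - (t - μ) ^ (q - 1) * (μ - (q - 1) * t) := sub_pos.2 key
  positivity

lemma strictMonoOn_levelMass (hq₁ : 1 < q) (hq₂ : q < 2) (hμ : 0 < μ) (hβ : 0 < β)
    (hβq : (2 - q) * μ ≤ q * β) : StrictMonoOn (levelMass q μ β) (Ioc 0 (μ ^ (q - 2)⁻¹)) := by
  have hinv : (q - 2)⁻¹ < 0 := inv_lt_zero.2 (by linarith)
  have hc : (2 * μ / q) ^ (q - 2)⁻¹ ∈ Ioo 0 (μ ^ (q - 2)⁻¹) :=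
    ⟨by positivity, rpow_lt_rpow_of_neg hμ (by rw [lt_div_iff₀ (by linarith)]; nlinarith) hinv⟩
  refine strictMonoOn_Ioc_of_deriv_pos_of_ne hc
    ((continuousOn_levelMass (by linarith)).mono Ioc_subset_Ioi_self) fun x hx hxc ↦ ?_
  refine deriv_levelMass_pos hq₁ hβ hβq hx.1 ((levelCurve_pos_iff hq₂ hμ hβ hx.1).2 hx.2) ?_
  contrapose! hxc
  rw [← hxc, rpow_rpow_inv hx.1.le (by linarith)]

lemma levelCurve_le_iff (hβ : 0 < β) {y : ℝ} :
    levelCurve q μ β x ≤ y ↔ x ^ (q - 1) ≤ μ * x + β * y := by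
  rw [levelCurve, div_le_iff₀ hβ]
  constructor <;> intro h <;> linarith

lemma levelCurve_eq_iff (hβ : 0 < β) {y : ℝ} :
    levelCurve q μ β x = y ↔ μ * x + β * y = x ^ (q - 1) := by
  rw [levelCurve, div_eq_iff hβ.ne']
  constructor <;> intro h <;> linarith

lemma le_of_levelCurve_le_of_mass_le (hq₁ : 1 < q) (hq₂ : q < 2) (hμ : 0 < μ) (hβ : 0 < β)
    (hβq : (2 - q) * μ ≤ q * β) {u₀ v₀ u v : ℝ} (hu₀ : 0 < u₀) (hv₀ : 0 < v₀) (hv : 0 ≤ v)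
    (h₀ : levelCurve q μ β u₀ = v₀) (h : levelCurve q μ β u ≤ v)
    (hmass : u ^ q + v ^ q ≤ u₀ ^ q + v₀ ^ q) : u ≤ u₀ := by
  by_contra! hlt
  have hq : 0 < q := by linarith
  have hmono := strictMonoOn_levelMass hq₁ hq₂ hμ hβ hβq
  have hu₀a : u₀ < μ ^ (q - 2)⁻¹ := (levelCurve_pos_iff hq₂ hμ hβ hu₀).1 (h₀ ▸ hv₀)
  have hmass₀ : levelMass q μ β u₀ = u₀ ^ q + v₀ ^ q := by rw [levelMass, h₀]
  rcases lt_or_ge u (μ ^ (q - 2)⁻¹) with hua | hau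
  · have hcurve : 0 < levelCurve q μ β u := (levelCurve_pos_iff hq₂ hμ hβ (hu₀.trans hlt)).2 hua
    have hlt' := hmono ⟨hu₀, hu₀a.le⟩ ⟨hu₀.trans hlt, hua.le⟩ hlt
    have hle : levelCurve q μ β u ^ q ≤ v ^ q := rpow_le_rpow hcurve.le h hq.le
    rw [hmass₀, levelMass] at hlt'
    linarith
  · have hlt' := hmono ⟨hu₀, hu₀a.le⟩ ⟨by positivity, le_rfl⟩ hu₀a
    have hmassa : levelMass q μ β (μ ^ (q - 2)⁻¹) = (μ ^ (q - 2)⁻¹) ^ q := by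
      rw [levelMass, levelCurve_rpow_inv hq₂ hμ, zero_rpow hq.ne', add_zero]
    rw [hmass₀, hmassa] at hlt'
    have : (μ ^ (q - 2)⁻¹) ^ q ≤ u ^ q := rpow_le_rpow (by positivity) hau hq.le
    have : 0 ≤ v ^ q := rpow_nonneg hv q
    linarith

lemma eq_of_levelCurve_le_of_mul_le (hq : q < 2) (hβ : 0 < β) {u₀ v₀ u v : ℝ} (hu₀ : 0 < u₀)
    (hu : 0 < u) (h₀ : levelCurve q μ β u₀ = v₀) (h : levelCurve q μ β u ≤ v)
    (hle : u ≤ u₀) (hratio : v * u₀ ≤ u * v₀) : u = u₀ := by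
  set m := u / u₀
  have hm : 0 < m := div_pos hu hu₀
  have hu' : u = m * u₀ := (div_mul_cancel₀ u hu₀.ne').symm
  have hv' : v ≤ m * v₀ := by rw [div_mul_eq_mul_div, le_div_iff₀ hu₀]; exact hratio
  rw [levelCurve_le_iff hβ] at h
  rw [levelCurve_eq_iff hβ] at h₀
  have hscaled : m ^ (q - 1) * u₀ ^ (q - 1) ≤ m * u₀ ^ (q - 1) :=
    calc m ^ (q - 1) * u₀ ^ (q - 1) = u ^ (q - 1) := by rw [hu', mul_rpow hm.le hu₀.le]
      _ ≤ μ * u + β * v := h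
      _ ≤ m * (μ * u₀ + β * v₀) := by rw [hu']; nlinarith
      _ = m * u₀ ^ (q - 1) := by rw [h₀]
  have hm_rpow : m ^ (q - 1) ≤ m := le_of_mul_le_mul_right hscaled (by positivity)
  have hm1 : m = 1 := by
    by_contra hne
    have hlt : m < 1 := lt_of_le_of_ne ((div_le_one hu₀).2 hle) hne
    have := rpow_lt_rpow_of_exponent_gt hm hlt (show q - 1 < 1 by linarith)
    rw [rpow_one] at this
    linarith
  rw [hu', hm1, one_mul]

lemma eq_of_levelCurve_le (hq : q < 2) (hβ : 0 < β) {μ₁ μ₂ u₀ v₀ u v : ℝ} (hu₀ : 0 < u₀)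
    (hv₀ : 0 < v₀) (hu : 0 < u) (hv : 0 < v) (h₁₀ : levelCurve q μ₁ β u₀ = v₀)
    (h₂₀ : levelCurve q μ₂ β v₀ = u₀) (h₁ : levelCurve q μ₁ β u ≤ v)
    (h₂ : levelCurve q μ₂ β v ≤ u) (hu_le : u ≤ u₀) (hv_le : v ≤ v₀) : u = u₀ ∧ v = v₀ := by
  wlog hratio : v * u₀ ≤ u * v₀ generalizing μ₁ μ₂ u₀ v₀ u v
  · exact (this hv₀ hu₀ hv hu h₂₀ h₁₀ h₂ h₁ hv_le hu_le (by linarith)).symm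
  have hu_eq := eq_of_levelCurve_le_of_mul_le hq hβ hu₀ hu h₁₀ h₁ hu_le hratio
  refine ⟨hu_eq, le_antisymm hv_le ?_⟩
  rw [← h₁₀, ← hu_eq]
  exact h₁

end

lemma rpow_half_sub_levelCurve {p μ β k : ℝ} (l : ℝ) (hp : p ≠ 0) (hβ : β ≠ 0) (hk : 0 < k) :
    l ^ (p / 2) - levelCurve (2 / p) μ β (k ^ (p / 2))
      = k ^ (1 - p / 2) * (μ * k ^ (p - 1) + β * k ^ (p / 2 - 1) * l ^ (p / 2) - 1) / β := by
  have h₁ : k ^ (1 - p / 2) * k ^ (p - 1) = k ^ (p / 2) := by rw [← rpow_add hk]; ring_nf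
  have h₂ : k ^ (1 - p / 2) * k ^ (p / 2 - 1) = 1 := by
    rw [← rpow_add hk, show 1 - p / 2 + (p / 2 - 1) = 0 by ring, rpow_zero]
  rw [levelCurve, ← rpow_mul hk.le, show p / 2 * (2 / p - 1) = 1 - p / 2 by field_simp]
  calc _ = (μ * (k ^ (1 - p / 2) * k ^ (p - 1))
          + β * l ^ (p / 2) * (k ^ (1 - p / 2) * k ^ (p / 2 - 1)) - k ^ (1 - p / 2)) / β := by
        rw [h₁, h₂]; field_simp; ring
    _ = _ := by ring

lemma levelCurve_rpow_le_of_one_le {p μ β k l : ℝ} (hp : p ≠ 0) (hβ : 0 < β) (hk : 0 < k)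
    (h : 1 ≤ μ * k ^ (p - 1) + β * k ^ (p / 2 - 1) * l ^ (p / 2)) :
    levelCurve (2 / p) μ β (k ^ (p / 2)) ≤ l ^ (p / 2) := by
  have hsub := rpow_half_sub_levelCurve (μ := μ) l hp hβ.ne' hk
  have := sub_nonneg.2 h
  have : 0 ≤ l ^ (p / 2) - levelCurve (2 / p) μ β (k ^ (p / 2)) := by rw [hsub]; positivity
  linarith

lemma levelCurve_rpow_eq_of_eq_one {p μ β k l : ℝ} (hp : p ≠ 0) (hβ : β ≠ 0) (hk : 0 < k)
    (h : μ * k ^ (p - 1) + β * k ^ (p / 2 - 1) * l ^ (p / 2) = 1) :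
    levelCurve (2 / p) μ β (k ^ (p / 2)) = l ^ (p / 2) := by
  have hsub := rpow_half_sub_levelCurve (μ := μ) l hp hβ hk
  rw [h, sub_self, mul_zero, zero_div, sub_eq_zero] at hsub
  exact hsub.symm

lemma pos_of_one_le {p μ β k l : ℝ} (hp₁ : p ≠ 1) (hp₂ : p ≠ 2) (hk : 0 ≤ k)
    (h : 1 ≤ μ * k ^ (p - 1) + β * k ^ (p / 2 - 1) * l ^ (p / 2)) : 0 < k := by
  refine hk.lt_of_ne' fun hk₀ ↦ ?_
  rw [hk₀, zero_rpow (sub_ne_zero.2 hp₁), zero_rpow (by contrapose! hp₂; linarith)] at h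
  norm_num at h

end CoupledSystem

open CoupledSystem

theorem stmt_5_general (N : ℕ) (hN : 5 ≤ N) (p : ℝ) (hp : p = (N : ℝ) / ((N : ℝ) - 2))
    (μ₁ μ₂ β : ℝ) (hμ₁ : 0 < μ₁) (hμ₂ : 0 < μ₂) (hβ : 0 < β)
    (hβ' : (p - 1) * max μ₁ μ₂ ≤ β)
    (k₀ l₀ : ℝ) (hk₀ : 0 < k₀) (hl₀ : 0 < l₀)
    (he₁ : μ₁ * k₀ ^ (p - 1) + β * k₀ ^ (p / 2 - 1) * l₀ ^ (p / 2) = 1)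
    (he₂ : μ₂ * l₀ ^ (p - 1) + β * l₀ ^ (p / 2 - 1) * k₀ ^ (p / 2) = 1)
    (k l : ℝ) (hk : 0 ≤ k) (hl : 0 ≤ l)
    (hsum : k + l ≤ k₀ + l₀)
    (hi₁ : 1 ≤ μ₁ * k ^ (p - 1) + β * k ^ (p / 2 - 1) * l ^ (p / 2))
    (hi₂ : 1 ≤ μ₂ * l ^ (p - 1) + β * l ^ (p / 2 - 1) * k ^ (p / 2)) :
    k = k₀ ∧ l = l₀ := by
  obtain ⟨hp₁, hp₂⟩ : 1 < p ∧ p < 2 := hp ▸ div_sub_two_mem_Ioo (by exact_mod_cast hN)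
  have hp₀ : 0 < p := by linarith
  have hq₁ : 1 < 2 / p := by rw [lt_div_iff₀ hp₀]; linarith
  have hq₂ : 2 / p < 2 := by rw [div_lt_iff₀ hp₀]; linarith
  have hβq {μ : ℝ} (hμ : μ ≤ max μ₁ μ₂) : (2 - 2 / p) * μ ≤ 2 / p * β := by
    rw [show (2 - 2 / p) * μ = 2 / p * ((p - 1) * μ) by field_simp]
    gcongr
    exact (mul_le_mul_of_nonneg_left hμ (by linarith)).trans hβ'
  have hroot {x : ℝ} (hx : 0 ≤ x) : (x ^ (p / 2)) ^ (2 / p) = x := by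
    rw [← inv_div, rpow_inv_rpow hx (by positivity)]
  have hk' := pos_of_one_le hp₁.ne' hp₂.ne hk hi₁
  have hl' := pos_of_one_le hp₁.ne' hp₂.ne hl hi₂
  have h₁₀ := levelCurve_rpow_eq_of_eq_one hp₀.ne' hβ.ne' hk₀ he₁
  have h₂₀ := levelCurve_rpow_eq_of_eq_one hp₀.ne' hβ.ne' hl₀ he₂
  have h₁ := levelCurve_rpow_le_of_one_le hp₀.ne' hβ hk' hi₁
  have h₂ := levelCurve_rpow_le_of_one_le hp₀.ne' hβ hl' hi₂
  have hmass : (k ^ (p / 2)) ^ (2 / p) + (l ^ (p / 2)) ^ (2 / p)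
      ≤ (k₀ ^ (p / 2)) ^ (2 / p) + (l₀ ^ (p / 2)) ^ (2 / p) := by
    rwa [hroot hk, hroot hl, hroot hk₀.le, hroot hl₀.le]
  have hu_le := le_of_levelCurve_le_of_mass_le hq₁ hq₂ hμ₁ hβ (hβq (le_max_left _ _))
    (by positivity) (by positivity) (by positivity) h₁₀ h₁ hmass
  have hv_le := le_of_levelCurve_le_of_mass_le hq₁ hq₂ hμ₂ hβ (hβq (le_max_right _ _))
    (by positivity) (by positivity) (by positivity) h₂₀ h₂ (by linarith)
  obtain ⟨hu, hv⟩ := eq_of_levelCurve_le hq₂ hβ (by positivity) (by positivity) (by positivity)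
    (by positivity) h₁₀ h₂₀ h₁ h₂ hu_le hv_le
  exact ⟨(rpow_left_inj hk hk₀.le (by positivity)).1 hu,
    (rpow_left_inj hl hl₀.le (by positivity)).1 hv⟩

theorem stmt_5 (N : ℕ) (hN : 5 ≤ N) (p : ℝ) (hp : p = (N : ℝ) / ((N : ℝ) - 2))
    (μ₁ μ₂ β : ℝ) (hμ₁ : 0 < μ₁) (hμ₂ : 0 < μ₂) (hβ : 0 < β)
    (hβ' : (p - 1) * max μ₁ μ₂ ≤ β)
    (k₀ l₀ : ℝ) (hk₀ : 0 < k₀) (hl₀ : 0 < l₀)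
    (he₁ : μ₁ * k₀ ^ (p - 1) + β * k₀ ^ (p / 2 - 1) * l₀ ^ (p / 2) = 1)
    (he₂ : μ₂ * l₀ ^ (p - 1) + β * l₀ ^ (p / 2 - 1) * k₀ ^ (p / 2) = 1)
    (hmin : ∀ k l : ℝ, 0 < k → 0 < l →
      μ₁ * k ^ (p - 1) + β * k ^ (p / 2 - 1) * l ^ (p / 2) = 1 →
      μ₂ * l ^ (p - 1) + β * l ^ (p / 2 - 1) * k ^ (p / 2) = 1 →
      k₀ ≤ k)
    (k l : ℝ) (hk : 0 ≤ k) (hl : 0 ≤ l) (hkl : ¬(k = 0 ∧ l = 0))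
    (hsum : k + l ≤ k₀ + l₀)
    (hi₁ : 1 ≤ μ₁ * k ^ (p - 1) + β * k ^ (p / 2 - 1) * l ^ (p / 2))
    (hi₂ : 1 ≤ μ₂ * l ^ (p - 1) + β * l ^ (p / 2 - 1) * k ^ (p / 2)) :
    k = k₀ ∧ l = l₀ :=
  stmt_5_general N hN p hp μ₁ μ₂ β hμ₁ hμ₂ hβ hβ' k₀ l₀ hk₀ hl₀ he₁ he₂ k l hk hl hsum hi₁ hi₂
end

section
/- The function g(β) = (p-1)μ₁μ₂ β^{2/p-2} + β^{2/p} is strictly increasing on [(p-1)·max{μ₁, μ₂}, ∞), satisfies g((p-1)·max{μ₁, μ₂}) ≤ p(p-1)^{2/p-1}·max{μ₁^{2/p}, μ₂^{2/p}}, and there exists a unique β₀ ≥ (p-1)·max{μ₁, μ₂} such that g(β₀) = p(p-1)^{2/p-1}·max{μ₁^{2/p}, μ₂^{2/p}}; moreover g(β) > p(p-1)^{2/p-1}·max{μ₁^{2/p}, μ₂^{2/p}} for all β > β₀, and β₀ = (p-1)μ₁ in case μ₁ = μ₂. -/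
open Real

theorem stmt_6 (N : ℕ) (hN : 5 ≤ N) (p : ℝ) (hp : p = (N : ℝ) / ((N : ℝ) - 2))
    (μ₁ μ₂ : ℝ) (hμ₁ : 0 < μ₁) (hμ₂ : 0 < μ₂)
    (g : ℝ → ℝ)
    (hg : ∀ β : ℝ, g β = (p - 1) * μ₁ * μ₂ * β ^ (2 / p - 2) + β ^ (2 / p)) :
    StrictMonoOn g (Set.Ici ((p - 1) * max μ₁ μ₂)) ∧
    g ((p - 1) * max μ₁ μ₂) ≤
      p * (p - 1) ^ (2 / p - 1) * max (μ₁ ^ (2 / p)) (μ₂ ^ (2 / p)) ∧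
    ∃ β₀ : ℝ,
      ((p - 1) * max μ₁ μ₂ ≤ β₀ ∧
        g β₀ = p * (p - 1) ^ (2 / p - 1) * max (μ₁ ^ (2 / p)) (μ₂ ^ (2 / p))) ∧
      (∀ β' : ℝ, (p - 1) * max μ₁ μ₂ ≤ β' →
        g β' = p * (p - 1) ^ (2 / p - 1) * max (μ₁ ^ (2 / p)) (μ₂ ^ (2 / p)) →
        β' = β₀) ∧
      (∀ β : ℝ, β₀ < β →
        p * (p - 1) ^ (2 / p - 1) * max (μ₁ ^ (2 / p)) (μ₂ ^ (2 / p)) < g β) ∧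
      (μ₁ = μ₂ → β₀ = (p - 1) * μ₁) := by
  have hN5 : (5:ℝ) ≤ (N:ℝ) := by exact_mod_cast hN
  have hN2 : (0:ℝ) < (N:ℝ) - 2 := by linarith
  have hp1 : 1 < p := by rw [hp, lt_div_iff₀ hN2]; linarith
  have hp2 : p < 2 := by rw [hp, div_lt_iff₀ hN2]; linarith
  have hp0 : 0 < p := by linarith
  have hq0 : 0 < p - 1 := by linarith
  set a : ℝ := 2 / p with ha
  have hap : a * p = 2 := div_mul_cancel₀ 2 (ne_of_gt hp0)
  have ha1 : 1 < a := by rw [ha, lt_div_iff₀ hp0]; linarith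
  have ha2 : a < 2 := by rw [ha, div_lt_iff₀ hp0]; nlinarith
  set m : ℝ := max μ₁ μ₂ with hm
  have hm0 : 0 < m := lt_max_iff.mpr (Or.inl hμ₁)
  have hm1 : μ₁ ≤ m := le_max_left _ _
  have hm2 : μ₂ ≤ m := le_max_right _ _
  set c : ℝ := (p - 1) * m with hc
  have hc0 : 0 < c := mul_pos hq0 hm0
  have hmax : max (μ₁ ^ a) (μ₂ ^ a) = m ^ a := by
    rcases le_total μ₁ μ₂ with h | h
    · rw [hm, max_eq_right h, max_eq_right (Real.rpow_le_rpow hμ₁.le h (by linarith))]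
    · rw [hm, max_eq_left h, max_eq_left (Real.rpow_le_rpow hμ₂.le h (by linarith))]
  -- splitting lemmas
  have hsplit1 : ∀ x : ℝ, 0 < x → x ^ (a-1) = x ^ (a-2) * x := by
    intro x hx
    rw [show a - 1 = a - 2 + 1 by ring, Real.rpow_add_one (ne_of_gt hx)]
  have hsplita : ∀ x : ℝ, 0 < x → x ^ a = x ^ (a-2) * x * x := by
    intro x hx
    have h1 := Real.rpow_add_one (ne_of_gt hx) (a-1)
    rw [show a - 1 + 1 = a by ring] at h1
    rw [h1, hsplit1 x hx]
  set P : ℝ := (p-1) ^ (a-2) with hPdef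
  set M : ℝ := m ^ (a-2) with hMdef
  have hP : 0 < P := Real.rpow_pos_of_pos hq0 _
  have hM : 0 < M := Real.rpow_pos_of_pos hm0 _
  have hca2 : c ^ (a-2) = P * M := by rw [hc, Real.mul_rpow hq0.le hm0.le]
  have hgc : g c = P * M * ((p-1)*(μ₁*μ₂) + c * c) := by
    rw [hg c, hsplita c hc0, hca2]; ring
  have hRf : p * (p-1)^(a-1) * m ^ a = P * M * (p * ((p-1) * m) * m) := by
    rw [hsplit1 _ hq0, hsplita m hm0]; ring
  have hμm : μ₁ * μ₂ ≤ m * m := mul_le_mul hm1 hm2 hμ₂.le hm0.le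
  have hle : g c ≤ p * (p-1)^(a-1) * m ^ a := by
    rw [hgc, hRf]
    apply mul_le_mul_of_nonneg_left _ (mul_pos hP hM).le
    rw [hc]
    nlinarith [mul_le_mul_of_nonneg_left hμm hq0.le]
  -- continuity
  have hgf : g = fun β : ℝ => (p - 1) * μ₁ * μ₂ * β ^ (a - 2) + β ^ a := funext hg
  have hcont : ContinuousOn g (Set.Ici c) := by
    rw [hgf]
    apply ContinuousOn.add
    · exact continuousOn_const.mul (ContinuousOn.rpow_const continuousOn_id
        (fun x hx => Or.inl (ne_of_gt (lt_of_lt_of_le hc0 hx))))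
    · exact ContinuousOn.rpow_const continuousOn_id
        (fun x hx => Or.inl (ne_of_gt (lt_of_lt_of_le hc0 hx)))
  -- derivative
  have hderiv : ∀ β ∈ Set.Ioi c, HasDerivAt g
      ((p-1)*μ₁*μ₂*((a-2) * β^(a-2-1)) + a * β^(a-1)) β := by
    intro β hβ
    have hβ0 : 0 < β := lt_trans hc0 hβ
    have h1 : HasDerivAt (fun x : ℝ => x ^ (a-2)) ((a-2) * β^(a-2-1)) β :=
      Real.hasDerivAt_rpow_const (Or.inl hβ0.ne')
    have h2 : HasDerivAt (fun x : ℝ => x ^ a) (a * β^(a-1)) β :=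
      Real.hasDerivAt_rpow_const (Or.inl hβ0.ne')
    have h3 := (h1.const_mul ((p-1)*μ₁*μ₂)).add h2
    rw [hgf]
    exact h3
  have hpos : ∀ β ∈ Set.Ioi c, 0 <
      (p-1)*μ₁*μ₂*((a-2) * β^(a-2-1)) + a * β^(a-1) := by
    intro β hβ
    have hβ0 : 0 < β := lt_trans hc0 hβ
    have hββ : (p-1)*m < β := by rw [← hc]; exact hβ
    have h3 : β ^ (a-1) = β ^ (a-2-1) * (β * β) := by
      have e1 := Real.rpow_add_one hβ0.ne' (a-2-1)
      have e2 := Real.rpow_add_one hβ0.ne' (a-2-1+1)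
      rw [show a-2-1+1+1 = a-1 by ring] at e2
      rw [e2, e1]; ring
    have hb : 0 < β ^ (a-2-1) := Real.rpow_pos_of_pos hβ0 _
    have hsq : (p-1)*(p-1)*(μ₁*μ₂) < β * β := by nlinarith
    have h4 : 0 < a * (β*β - (p-1)*(p-1)*(μ₁*μ₂)) := mul_pos (by linarith) (by linarith)
    have hident : (p-1)*μ₁*μ₂*((a-2) * β^(a-2-1)) + a * (β^(a-2-1) * (β*β))
        = β^(a-2-1) * (a*(β*β - (p-1)*(p-1)*(μ₁*μ₂))) := by
      linear_combination (β^(a-2-1)*(p-1)*μ₁*μ₂) * hap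
    rw [h3, hident]
    exact mul_pos hb h4
  have hmono : StrictMonoOn g (Set.Ici c) := by
    apply strictMonoOn_of_deriv_pos (convex_Ici c) hcont
    intro x hx
    rw [interior_Ici] at hx
    rw [HasDerivAt.deriv (hderiv x hx)]
    exact hpos x hx
  set R : ℝ := p * (p-1)^(a-1) * max (μ₁ ^ a) (μ₂ ^ a) with hRdef
  have hRm : R = p * (p-1)^(a-1) * m ^ a := by rw [hRdef, hmax]
  have hR0 : 0 < R := by
    rw [hRm]
    exact mul_pos (mul_pos hp0 (Real.rpow_pos_of_pos hq0 _)) (Real.rpow_pos_of_pos hm0 _)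
  have hleR : g c ≤ R := by rw [hRm]; exact hle
  set B : ℝ := max c (R ^ (1/a)) with hBdef
  have hcB : c ≤ B := le_max_left _ _
  have hB0 : 0 < B := lt_of_lt_of_le hc0 hcB
  have hBa : R ≤ B ^ a := by
    have h1 : R ^ (1/a) ≤ B := le_max_right _ _
    have h2 : (R ^ (1/a)) ^ a ≤ B ^ a :=
      Real.rpow_le_rpow (Real.rpow_nonneg hR0.le _) h1 (by linarith)
    rwa [← Real.rpow_mul hR0.le,
      one_div_mul_cancel (by linarith : a ≠ 0), Real.rpow_one] at h2
  have hgB : R ≤ g B := by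
    rw [hg B]
    have h1 : 0 < (p-1)*μ₁*μ₂ * B ^ (a-2) :=
      mul_pos (mul_pos (mul_pos hq0 hμ₁) hμ₂) (Real.rpow_pos_of_pos hB0 _)
    linarith [hBa]
  obtain ⟨β₀, hβ₀mem, hβ₀eq⟩ :=
    intermediate_value_Icc hcB (hcont.mono Set.Icc_subset_Ici_self) ⟨hleR, hgB⟩
  have hβ₀Ici : β₀ ∈ Set.Ici c := Set.Icc_subset_Ici_self hβ₀mem
  refine ⟨hmono, hleR, β₀, ⟨hβ₀mem.1, hβ₀eq⟩, ?_, ?_, ?_⟩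
  · intro β' h1 h2
    exact hmono.injOn h1 hβ₀Ici (h2.trans hβ₀eq.symm)
  · intro β hβ
    rw [← hβ₀eq]
    exact hmono hβ₀Ici (Set.mem_Ici.mpr (le_trans hβ₀mem.1 hβ.le)) hβ
  · intro h
    have hmeq : m = μ₁ := by rw [hm, ← h, max_self]
    have hgceq : g c = R := by
      rw [hgc, hRm, hRf, hc, hmeq, ← h]; ring
    have hcb : c = β₀ := hmono.injOn Set.self_mem_Ici hβ₀Ici (hgceq.trans hβ₀eq.symm)
    rw [← hcb, hc, hmeq]
end

section
/- If β > β₀, then p μ₁ k₀^{p-1} < 1 and p μ₂ l₀^{p-1} < 1. -/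
/-!
Put `σ = (l / k) ^ (p / 2)` and `q = 2 / p - 1 ∈ (0, 1)`. A pair `(k, l)` solves the system iff
`k ^ (p - 1) * (μ₁ + β σ) = 1` and `σ` is a zero of `F = ratioFun q μ₁ μ₂ β`;
as `k` decreases in `σ`, the minimality of `k₀` makes `σ₀` the largest positive zero of `F`.
The two inequalities say exactly that `σ₀` lies strictly between `a = (p - 1) μ₁ / β` and
`b = β / ((p - 1) μ₂)`. Since `g` increases beyond `β₀`, `β > β₀` forces `F a < 0 < F b`, and `F`
is convex on `[a, ∞)`: it has a zero in `(a, b)`, and none beyond `b`.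
-/

open Real Set

theorem root_mem_Ioo_of_convexOn {f : ℝ → ℝ} {a b s : ℝ} (hf : ConvexOn ℝ (Ici a) f)
    (hfc : ContinuousOn f (Icc a b)) (hab : a < b) (ha : f a < 0) (hb : 0 < f b)
    (hs : f s = 0) (hmax : ∀ x, a < x → f x = 0 → x ≤ s) : a < s ∧ s < b := by
  obtain ⟨x, hx, hfx⟩ := intermediate_value_Ioo hab.le hfc ⟨ha, hb⟩
  have has : a < s := hx.1.trans_le (hmax x hx.1 hfx)
  refine ⟨has, lt_of_not_ge fun hbs => ?_⟩
  have hseg : b ∈ segment ℝ a s := by rw [segment_eq_Icc has.le]; exact ⟨hab.le, hbs⟩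
  have := hf.le_on_segment self_mem_Ici has.le hseg
  rw [hs, max_eq_right ha.le] at this
  exact hb.not_ge this

theorem strictMonoOn_mul_rpow_sub_one_add_rpow_add_one {q A s : ℝ} (hq : -1 < q) (hs : 0 < s)
    (hA : (1 - q) * A ≤ (1 + q) * s ^ 2) :
    StrictMonoOn (fun x : ℝ => A * x ^ (q - 1) + x ^ (q + 1)) (Ici s) := by
  have hderiv (x : ℝ) (hx : 0 < x) : HasDerivAt (fun x : ℝ => A * x ^ (q - 1) + x ^ (q + 1))
      (x ^ (q - 1 - 1) * ((1 + q) * x ^ 2 - (1 - q) * A)) x := by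
    refine (((hasDerivAt_rpow_const (p := q - 1) (Or.inl hx.ne')).const_mul A).add
      (hasDerivAt_rpow_const (p := q + 1) (Or.inl hx.ne'))).congr_deriv ?_
    rw [show q + 1 - 1 = q - 1 - 1 + 2 by ring, rpow_add hx, rpow_two]
    ring
  refine strictMonoOn_of_hasDerivWithinAt_pos (convex_Ici s)
    (fun x hx => (hderiv x (hs.trans_le hx)).continuousAt.continuousWithinAt)
    (fun x hx => (hderiv x ?_).hasDerivWithinAt) fun x hx => ?_
  · rw [interior_Ici] at hx; exact hs.trans hx
  rw [interior_Ici] at hx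
  have hx0 : 0 < x := hs.trans hx
  have : s ^ 2 < x ^ 2 := pow_lt_pow_left₀ hx hs.le two_ne_zero
  exact mul_pos (rpow_pos_of_pos hx0 _) (by nlinarith)

theorem threshold_lt_of_beta₀_lt {p q μ₁ μ₂ β₀ β : ℝ} (hpq : p * (q + 1) = 2) (hp : 1 < p)
    (hμ₁ : 0 < μ₁) (hμ₂ : 0 < μ₂) (hβ₀ge : (p - 1) * max μ₁ μ₂ ≤ β₀)
    (hβ₀eq : (p - 1) * μ₁ * μ₂ * β₀ ^ (q - 1) + β₀ ^ (q + 1) =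
      p * (p - 1) ^ q * max (μ₁ ^ (q + 1)) (μ₂ ^ (q + 1)))
    (hββ₀ : β₀ < β) :
    (p - 1) * μ₁ * ((p - 1) * μ₂) < β ^ 2 ∧
      p * (p - 1) ^ q * max (μ₁ ^ (q + 1)) (μ₂ ^ (q + 1)) <
        (p - 1) * μ₁ * μ₂ * β ^ (q - 1) + β ^ (q + 1) := by
  have hc : 0 < p - 1 := sub_pos.2 hp
  have hβ₀ : 0 < β₀ := (mul_pos hc (lt_max_of_lt_left hμ₁)).trans_le hβ₀ge
  have hμβ₀ : (p - 1) * μ₁ * ((p - 1) * μ₂) ≤ β₀ ^ 2 := by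
    rw [sq]
    exact mul_le_mul (le_trans (by gcongr; exact le_max_left _ _) hβ₀ge)
      (le_trans (by gcongr; exact le_max_right _ _) hβ₀ge) (by positivity) hβ₀.le
  have hq : 0 < q + 1 := by nlinarith
  refine ⟨hμβ₀.trans_lt (by gcongr), hβ₀eq ▸ ?_⟩
  refine strictMonoOn_mul_rpow_sub_one_add_rpow_add_one (by linarith) hβ₀ ?_ self_mem_Ici
    (mem_Ici.2 hββ₀.le) hββ₀
  rw [show 1 - q = (p - 1) * (1 + q) by linear_combination -hpq]
  nlinarith [mul_le_mul_of_nonneg_left hμβ₀ (by linarith : 0 ≤ 1 + q)]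

noncomputable def ratioFun (q μ₁ μ₂ β σ : ℝ) : ℝ := μ₁ * σ ^ q + β * σ ^ (q + 1) - μ₂ * σ - β

section ratioFun

variable {q μ₁ μ₂ β : ℝ}

theorem ratioFun_eq_zero_iff {σ : ℝ} (hσ : 0 < σ) :
    ratioFun q μ₁ μ₂ β σ = 0 ↔ σ ^ (1 - q) * (μ₂ + β / σ) = μ₁ + β * σ := by
  have hσq : 0 < σ ^ q := rpow_pos_of_pos hσ q
  rw [ratioFun, rpow_sub hσ, rpow_add hσ, rpow_one]
  field_simp
  constructor <;> intro h <;> linarith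

theorem ratioFun_inv {σ : ℝ} (hσ : 0 < σ) :
    ratioFun q μ₁ μ₂ β σ⁻¹ = -σ⁻¹ ^ (q + 1) * ratioFun q μ₂ μ₁ β σ := by
  have hσq : 0 < σ ^ q := rpow_pos_of_pos hσ q
  simp only [ratioFun, inv_rpow hσ.le, rpow_add hσ, rpow_one]
  field_simp
  ring

theorem ratioFun_mul_div_neg {c : ℝ} (hc : 0 < c) (hμ₁ : 0 < μ₁) (hβ : 0 < β)
    (h : (1 + c) * c ^ q * μ₁ ^ (q + 1) < c * μ₁ * μ₂ * β ^ (q - 1) + β ^ (q + 1)) :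
    ratioFun q μ₁ μ₂ β (c * μ₁ / β) < 0 := by
  have hβq : 0 < β ^ q := rpow_pos_of_pos hβ q
  have key : ratioFun q μ₁ μ₂ β (c * μ₁ / β) * β ^ q =
      (1 + c) * c ^ q * μ₁ ^ (q + 1) - (c * μ₁ * μ₂ * β ^ (q - 1) + β ^ (q + 1)) := by
    simp only [ratioFun, div_rpow (mul_pos hc hμ₁).le hβ.le, mul_rpow hc.le hμ₁.le,
      rpow_add hc, rpow_add hμ₁, rpow_add hβ, rpow_sub hβ, rpow_one]
    field_simp
    ring
  exact neg_of_mul_neg_left (key ▸ sub_neg.2 h) hβq.le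

theorem continuous_ratioFun (hq : 0 ≤ q) : Continuous (ratioFun q μ₁ μ₂ β) := by
  have := continuous_rpow_const hq
  have := continuous_rpow_const (by linarith : 0 ≤ q + 1)
  unfold ratioFun
  fun_prop

theorem convexOn_ratioFun {t : ℝ} (hq : 0 ≤ q) (hβ : 0 ≤ β) (ht : 0 ≤ t)
    (hμ₁ : (1 - q) * μ₁ ≤ (1 + q) * β * t) : ConvexOn ℝ (Ici t) (ratioFun q μ₁ μ₂ β) := by
  have hderiv (x : ℝ) (hx : 0 < x) : HasDerivAt (ratioFun q μ₁ μ₂ β)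
      (μ₁ * (q * x ^ (q - 1)) + β * ((q + 1) * x ^ q) - μ₂) x := by
    refine ((((hasDerivAt_rpow_const (p := q) (Or.inl hx.ne')).const_mul μ₁).add
      ((hasDerivAt_rpow_const (p := q + 1) (Or.inl hx.ne')).const_mul β)).sub
      ((hasDerivAt_id x).const_mul μ₂)).sub_const β |>.congr_deriv ?_
    rw [add_sub_cancel_right, mul_one]
  have hderiv2 (x : ℝ) (hx : 0 < x) : HasDerivAt
      (fun x => μ₁ * (q * x ^ (q - 1)) + β * ((q + 1) * x ^ q) - μ₂)
      (q * x ^ (q - 1 - 1) * ((1 + q) * β * x - (1 - q) * μ₁)) x := by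
    refine (((((hasDerivAt_rpow_const (p := q - 1) (Or.inl hx.ne')).const_mul q).const_mul μ₁).add
      (((hasDerivAt_rpow_const (p := q) (Or.inl hx.ne')).const_mul (q + 1)).const_mul β)).sub_const
      μ₂).congr_deriv ?_
    rw [rpow_sub_one hx.ne' (q - 1), rpow_sub_one hx.ne' q]
    field_simp
    ring
  have hpos {x : ℝ} (hx : x ∈ interior (Ici t)) : 0 < x := by
    rw [interior_Ici] at hx; exact ht.trans_lt hx
  refine convexOn_of_hasDerivWithinAt2_nonneg (convex_Ici t) ?_
    (fun x hx => (hderiv x (hpos hx)).hasDerivWithinAt)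
    (fun x hx => (hderiv2 x (hpos hx)).hasDerivWithinAt) fun x hx => ?_
  · exact (continuous_ratioFun hq).continuousOn
  have hxt : t ≤ x := by rw [interior_Ici] at hx; exact le_of_lt hx
  have : (1 + q) * β * t ≤ (1 + q) * β * x := by gcongr
  exact mul_nonneg (mul_nonneg hq (rpow_nonneg (hpos hx).le _)) (by linarith)

end ratioFun

theorem rpow_half_sub_one_mul_rpow_half {x y : ℝ} (hx : 0 < x) (hy : 0 < y) (p : ℝ) :
    x ^ (p / 2 - 1) * y ^ (p / 2) = x ^ (p - 1) * (y / x) ^ (p / 2) := by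
  rw [div_rpow hy.le hx.le, show p - 1 = p / 2 - 1 + p / 2 by ring, rpow_add hx]
  have := rpow_pos_of_pos hx (p / 2)
  field_simp

theorem rpow_sub_one_eq_mul_rpow_div {p q x y : ℝ} (hpq : p * (q + 1) = 2) (hx : 0 < x)
    (hy : 0 < y) : y ^ (p - 1) = x ^ (p - 1) * ((y / x) ^ (p / 2)) ^ (1 - q) := by
  rw [← rpow_mul (div_pos hy hx).le, show p / 2 * (1 - q) = p - 1 by linear_combination -hpq / 2,
    div_rpow hy.le hx.le]
  have := rpow_pos_of_pos hx (p - 1)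
  field_simp

def IsSolution_s7 (p μ₁ μ₂ β k l : ℝ) : Prop :=
  0 < k ∧ 0 < l ∧ μ₁ * k ^ (p - 1) + β * k ^ (p / 2 - 1) * l ^ (p / 2) = 1 ∧
    μ₂ * l ^ (p - 1) + β * l ^ (p / 2 - 1) * k ^ (p / 2) = 1

section IsSolution_s7

variable {p q μ₁ μ₂ β k l : ℝ}

theorem isSolution_iff_mul (hk : 0 < k) (hl : 0 < l) :
    IsSolution_s7 p μ₁ μ₂ β k l ↔ k ^ (p - 1) * (μ₁ + β * (l / k) ^ (p / 2)) = 1 ∧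
      l ^ (p - 1) * (μ₂ + β / (l / k) ^ (p / 2)) = 1 := by
  have hswap := rpow_half_sub_one_mul_rpow_half hl hk p
  rw [← inv_div l k, inv_rpow (div_pos hl hk).le] at hswap
  have e₁ : μ₁ * k ^ (p - 1) + β * k ^ (p / 2 - 1) * l ^ (p / 2) =
      k ^ (p - 1) * (μ₁ + β * (l / k) ^ (p / 2)) := by
    linear_combination β * rpow_half_sub_one_mul_rpow_half hk hl p
  have e₂ : μ₂ * l ^ (p - 1) + β * l ^ (p / 2 - 1) * k ^ (p / 2) =
      l ^ (p - 1) * (μ₂ + β / (l / k) ^ (p / 2)) := by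
    linear_combination β * hswap
  simp only [IsSolution_s7, hk, hl, true_and, e₁, e₂]

theorem isSolution_iff (hpq : p * (q + 1) = 2) (hk : 0 < k) (hl : 0 < l) :
    IsSolution_s7 p μ₁ μ₂ β k l ↔ k ^ (p - 1) * (μ₁ + β * (l / k) ^ (p / 2)) = 1 ∧
      ratioFun q μ₁ μ₂ β ((l / k) ^ (p / 2)) = 0 := by
  rw [isSolution_iff_mul hk hl, rpow_sub_one_eq_mul_rpow_div hpq hk hl,
    ratioFun_eq_zero_iff (rpow_pos_of_pos (div_pos hl hk) _)]
  refine and_congr_right fun h₁ => ?_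
  rw [mul_assoc]
  exact ⟨fun h => mul_left_cancel₀ (rpow_pos_of_pos hk _).ne' (h.trans h₁.symm),
    fun h => by rw [h, h₁]⟩

theorem exists_isSolution_of_ratioFun_eq_zero (hpq : p * (q + 1) = 2) (hp : p ≠ 1) {σ : ℝ}
    (hσ : 0 < σ) (hc : 0 < μ₁ + β * σ) (hF : ratioFun q μ₁ μ₂ β σ = 0) :
    ∃ k l, IsSolution_s7 p μ₁ μ₂ β k l ∧ (l / k) ^ (p / 2) = σ := by
  set k := (μ₁ + β * σ) ^ (-(p - 1)⁻¹)
  have hk : 0 < k := rpow_pos_of_pos hc _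
  have hl : 0 < k * σ ^ (q + 1) := mul_pos hk (rpow_pos_of_pos hσ _)
  have hratio : (k * σ ^ (q + 1) / k) ^ (p / 2) = σ := by
    rw [mul_div_cancel_left₀ _ hk.ne', ← rpow_mul hσ.le,
      show (q + 1) * (p / 2) = 1 by linear_combination hpq / 2, rpow_one]
  have hkp : k ^ (p - 1) = (μ₁ + β * σ)⁻¹ := by
    rw [← rpow_mul hc.le, neg_mul, inv_mul_cancel₀ (sub_ne_zero.2 hp), rpow_neg_one]
  refine ⟨k, k * σ ^ (q + 1), (isSolution_iff hpq hk hl).2 ?_, hratio⟩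
  rw [hratio, hkp]
  exact ⟨inv_mul_cancel₀ hc.ne', hF⟩

theorem IsSolution_s7.ratio_le_of_isLeast {k₀ l₀ σ : ℝ} (h₀ : IsSolution_s7 p μ₁ μ₂ β k₀ l₀)
    (hmin : ∀ k l, IsSolution_s7 p μ₁ μ₂ β k l → k₀ ≤ k) (hpq : p * (q + 1) = 2) (hp : 1 < p)
    (hμ₁ : 0 ≤ μ₁) (hβ : 0 < β) (hσ : 0 < σ) (hF : ratioFun q μ₁ μ₂ β σ = 0) :
    σ ≤ (l₀ / k₀) ^ (p / 2) := by
  obtain ⟨k, l, h, rfl⟩ :=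
    exists_isSolution_of_ratioFun_eq_zero hpq hp.ne' hσ (by positivity) hF
  have hpow : k₀ ^ (p - 1) ≤ k ^ (p - 1) := rpow_le_rpow h₀.1.le (hmin k l h) (by linarith)
  have hk₀ := ((isSolution_iff_mul h₀.1 h₀.2.1).1 h₀).1
  have hk := ((isSolution_iff_mul h.1 h.2.1).1 h).1
  have hσ₀ : 0 < (l₀ / k₀) ^ (p / 2) := rpow_pos_of_pos (div_pos h₀.2.1 h₀.1) _
  have hmul : k ^ (p - 1) * (μ₁ + β * (l / k) ^ (p / 2)) ≤
      k ^ (p - 1) * (μ₁ + β * (l₀ / k₀) ^ (p / 2)) :=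
    calc _ = k₀ ^ (p - 1) * (μ₁ + β * (l₀ / k₀) ^ (p / 2)) := hk.trans hk₀.symm
      _ ≤ _ := by gcongr
  have := le_of_mul_le_mul_left hmul (rpow_pos_of_pos h.1 _)
  exact le_of_mul_le_mul_left (by linarith) hβ

theorem IsSolution_s7.ratio_mem_Ioo {k₀ l₀ : ℝ} (h₀ : IsSolution_s7 p μ₁ μ₂ β k₀ l₀)
    (hmin : ∀ k l, IsSolution_s7 p μ₁ μ₂ β k l → k₀ ≤ k) (hpq : p * (q + 1) = 2) (hp : 1 < p)
    (hq : 0 ≤ q) (hμ₁ : 0 < μ₁) (hμ₂ : 0 < μ₂) (hβ : 0 < β)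
    (hβ₂ : (p - 1) * μ₁ * ((p - 1) * μ₂) < β ^ 2)
    (hg : p * (p - 1) ^ q * max (μ₁ ^ (q + 1)) (μ₂ ^ (q + 1)) <
      (p - 1) * μ₁ * μ₂ * β ^ (q - 1) + β ^ (q + 1)) :
    (l₀ / k₀) ^ (p / 2) ∈ Ioo ((p - 1) * μ₁ / β) (β / ((p - 1) * μ₂)) := by
  have hc : 0 < p - 1 := sub_pos.2 hp
  have hcoef : 0 ≤ p * (p - 1) ^ q := by positivity
  have hFa : ratioFun q μ₁ μ₂ β ((p - 1) * μ₁ / β) < 0 :=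
    ratioFun_mul_div_neg hc hμ₁ hβ <| by
      rw [add_sub_cancel]
      exact (mul_le_mul_of_nonneg_left (le_max_left _ _) hcoef).trans_lt hg
  have hFb : 0 < ratioFun q μ₁ μ₂ β (β / ((p - 1) * μ₂)) := by
    have hneg : ratioFun q μ₂ μ₁ β ((p - 1) * μ₂ / β) < 0 :=
      ratioFun_mul_div_neg hc hμ₂ hβ <| by
        rw [add_sub_cancel, mul_right_comm _ μ₂]
        exact (mul_le_mul_of_nonneg_left (le_max_right _ _) hcoef).trans_lt hg
    rw [← inv_div, ratioFun_inv (by positivity)]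
    exact mul_pos_of_neg_of_neg (neg_neg_of_pos (by positivity)) hneg
  have hab : (p - 1) * μ₁ / β < β / ((p - 1) * μ₂) := by
    rw [div_lt_div_iff₀ hβ (by positivity)]
    linarith
  have hconvex : ConvexOn ℝ (Ici ((p - 1) * μ₁ / β)) (ratioFun q μ₁ μ₂ β) :=
    convexOn_ratioFun hq hβ.le (by positivity) <| le_of_eq <| by
      rw [show 1 - q = (p - 1) * (1 + q) by linear_combination -hpq]
      field_simp
  exact root_mem_Ioo_of_convexOn hconvex (continuous_ratioFun hq).continuousOn hab hFa hFb
    ((isSolution_iff hpq h₀.1 h₀.2.1).1 h₀).2 fun σ hσ hF =>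
      h₀.ratio_le_of_isLeast hmin hpq hp hμ₁.le hβ ((div_pos (mul_pos hc hμ₁) hβ).trans hσ) hF

theorem IsSolution_s7.mul_rpow_lt_one {k l : ℝ} (h : IsSolution_s7 p μ₁ μ₂ β k l) (hp : 1 < p)
    (hμ₂ : 0 < μ₂) (hβ : 0 < β)
    (hσ : (l / k) ^ (p / 2) ∈ Ioo ((p - 1) * μ₁ / β) (β / ((p - 1) * μ₂))) :
    p * μ₁ * k ^ (p - 1) < 1 ∧ p * μ₂ * l ^ (p - 1) < 1 := by
  obtain ⟨h₁, h₂⟩ := (isSolution_iff_mul h.1 h.2.1).1 h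
  have hσ₀ : 0 < (l / k) ^ (p / 2) := rpow_pos_of_pos (div_pos h.2.1 h.1) _
  have hlt₁ : (p - 1) * μ₁ < β * (l / k) ^ (p / 2) := (div_lt_iff₀' hβ).1 hσ.1
  have hlt₂ : (p - 1) * μ₂ < β / (l / k) ^ (p / 2) :=
    (lt_div_iff₀ hσ₀).2 <| by
      rw [mul_comm]; exact (lt_div_iff₀ (mul_pos (sub_pos.2 hp) hμ₂)).1 hσ.2
  constructor
  · nlinarith [mul_lt_mul_of_pos_left hlt₁ (rpow_pos_of_pos h.1 (p - 1))]
  · nlinarith [mul_lt_mul_of_pos_left hlt₂ (rpow_pos_of_pos h.2.1 (p - 1))]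

end IsSolution_s7

theorem stmt_7 (N : ℕ) (hN : 5 ≤ N) (p : ℝ) (hp : p = (N : ℝ) / ((N : ℝ) - 2))
    (μ₁ μ₂ β : ℝ) (hμ₁ : 0 < μ₁) (hμ₂ : 0 < μ₂) (hβ : 0 < β)
    (β₀ : ℝ) (hβ₀ge : (p - 1) * max μ₁ μ₂ ≤ β₀)
    (hβ₀eq : (p - 1) * μ₁ * μ₂ * β₀ ^ (2 / p - 2) + β₀ ^ (2 / p) =
      p * (p - 1) ^ (2 / p - 1) * max (μ₁ ^ (2 / p)) (μ₂ ^ (2 / p)))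
    (hββ₀ : β₀ < β)
    (k₀ l₀ : ℝ) (hk₀ : 0 < k₀) (hl₀ : 0 < l₀)
    (he₁ : μ₁ * k₀ ^ (p - 1) + β * k₀ ^ (p / 2 - 1) * l₀ ^ (p / 2) = 1)
    (he₂ : μ₂ * l₀ ^ (p - 1) + β * l₀ ^ (p / 2 - 1) * k₀ ^ (p / 2) = 1)
    (hmin : ∀ k l : ℝ, 0 < k → 0 < l →
      μ₁ * k ^ (p - 1) + β * k ^ (p / 2 - 1) * l ^ (p / 2) = 1 →
      μ₂ * l ^ (p - 1) + β * l ^ (p / 2 - 1) * k ^ (p / 2) = 1 →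
      k₀ ≤ k) :
    p * μ₁ * k₀ ^ (p - 1) < 1 ∧ p * μ₂ * l₀ ^ (p - 1) < 1 := by
  have hN' : (4 : ℝ) < N := by exact_mod_cast hN
  have hp1 : 1 < p := by rw [hp, lt_div_iff₀ (by linarith)]; linarith
  have hp2 : p < 2 := by rw [hp, div_lt_iff₀ (by linarith)]; linarith
  obtain ⟨q, hq⟩ : ∃ q, q = 2 / p - 1 := ⟨_, rfl⟩
  have hpq : p * (q + 1) = 2 := by rw [hq]; field_simp; ring
  have hq0 : 0 ≤ q := by rw [hq, sub_nonneg, one_le_div (by linarith)]; linarith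
  rw [← hq, show 2 / p - 2 = q - 1 by rw [hq]; ring, show 2 / p = q + 1 by rw [hq]; ring] at hβ₀eq
  obtain ⟨hβ₂, hg⟩ := threshold_lt_of_beta₀_lt hpq hp1 hμ₁ hμ₂ hβ₀ge hβ₀eq hββ₀
  have h₀ : IsSolution_s7 p μ₁ μ₂ β k₀ l₀ := ⟨hk₀, hl₀, he₁, he₂⟩
  exact h₀.mul_rpow_lt_one hp1 hμ₂ hβ <|
    h₀.ratio_mem_Ioo (fun k l h => hmin k l h.1 h.2.1 h.2.2.1 h.2.2.2) hpq hp1 hq0 hμ₁ hμ₂ hβ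
      hβ₂ hg
end

section
/- Assume β > β₀. Then the Jacobian determinant of (α₁, α₂) at (k₀, l₀), namely F(k₀,l₀) = ∂ₖα₁(k₀,l₀)·∂ₗα₂(k₀,l₀) − ∂ₗα₁(k₀,l₀)·∂ₖα₂(k₀,l₀) (where ∂ₖα₁(k₀,l₀) is the derivative of k ↦ α₁(k,l₀) at k₀, etc.), satisfies F(k₀,l₀) = (p/2)(p-1) k₀⁻¹ l₀⁻¹ (μ₁ k₀^{p-1} + μ₂ l₀^{p-1} − 2/p), and F(k₀,l₀) < 0. -/
/-!
Write `A = μ₁ k^(p-1)`, `B = β k^(p/2-1) l^(p/2)`, `C = μ₂ l^(p-1)`, `D = β l^(p/2-1) k^(p/2)`.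
The equations say `A + B = 1 = C + D`, and `k ∂ₖα₁ = (p-1) A + (p/2-1) B`, `l ∂ₗα₁ = (p/2) B`,
and symmetrically for `α₂`; eliminating `B` and `D` gives the formula for the Jacobian.
For its sign, `μ₁ μ₂ B D = β² A C` reads `μ₁ μ₂ (1 - A)(1 - C) = β² A C`. When `A + C ≥ 1`, this and
AM-GM for `(1 - A)(1 - C)` give `β² (A + C)² ≤ μ₁ μ₂ (2 - A - C)²`, which rules out `A + C ≥ 2/p`
once `β > (p - 1) max μ₁ μ₂`.
-/

open Real

lemma sq_add_le_of_mul_one_sub_eq {m b a c : ℝ} (ha : a < 1) (hc : c < 1) (hb : 0 ≤ b)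
    (hac : 1 ≤ a + c) (h : m * ((1 - a) * (1 - c)) = b * (a * c)) :
    b * (a + c) ^ 2 ≤ m * (2 - (a + c)) ^ 2 := by
  have hQ : 0 < (1 - a) * (1 - c) := mul_pos (by linarith) (by linarith)
  have hdiff : b * (a + c - 1) = (m - b) * ((1 - a) * (1 - c)) := by linear_combination -h
  have hbm : 0 ≤ m - b := nonneg_of_mul_nonneg_left (hdiff ▸ by positivity) hQ
  have hAMGM : 4 * ((1 - a) * (1 - c)) ≤ (2 - (a + c)) ^ 2 := by nlinarith [sq_nonneg (a - c)]
  nlinarith [mul_le_mul_of_nonneg_left hAMGM hbm]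

lemma mul_add_lt_two_of_mul_one_sub_eq {p m b a c : ℝ} (hp₁ : 1 < p) (hp₂ : p < 2) (hm : 0 ≤ m)
    (ha : a < 1) (hc : c < 1) (hmb : (p - 1) ^ 2 * m < b)
    (h : m * ((1 - a) * (1 - c)) = b * (a * c)) : p * (a + c) < 2 := by
  by_contra! hpac
  have hb : 0 ≤ b := by nlinarith [sq_nonneg (p - 1)]
  have hsq := sq_add_le_of_mul_one_sub_eq ha hc hb (by nlinarith) h
  have : 2 ^ 2 * b < 2 ^ 2 * b :=
    calc 2 ^ 2 * b ≤ (p * (a + c)) ^ 2 * b := by gcongr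
      _ = p ^ 2 * (b * (a + c) ^ 2) := by ring
      _ ≤ p ^ 2 * (m * (2 - (a + c)) ^ 2) := by gcongr
      _ = (p * (2 - (a + c))) ^ 2 * m := by ring
      _ ≤ (2 * (p - 1)) ^ 2 * m := by
          gcongr ?_ ^ 2 * m
          · nlinarith
          · linarith
      _ = 2 ^ 2 * ((p - 1) ^ 2 * m) := by ring
      _ < 2 ^ 2 * b := by gcongr
  exact lt_irrefl _ this

lemma hasDerivAt_rpow_of_pos {x : ℝ} (hx : 0 < x) (r : ℝ) :
    HasDerivAt (fun y : ℝ => y ^ r) (r * x ^ r / x) x := by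
  simpa [rpow_sub_one hx.ne', mul_div_assoc] using hasDerivAt_rpow_const (p := r) (Or.inl hx.ne')

lemma deriv_alpha_fst (μ β p l : ℝ) {k : ℝ} (hk : 0 < k) :
    deriv (fun k : ℝ => μ * k ^ (p - 1) + β * k ^ (p / 2 - 1) * l ^ (p / 2) - 1) k =
      ((p - 1) * (μ * k ^ (p - 1)) + (p / 2 - 1) * (β * k ^ (p / 2 - 1) * l ^ (p / 2))) / k := by
  refine ((((hasDerivAt_rpow_of_pos hk _).const_mul μ).add
    (((hasDerivAt_rpow_of_pos hk _).const_mul β).mul_const _)).sub_const 1).deriv.trans ?_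
  ring

lemma deriv_alpha_snd (μ β p k : ℝ) {l : ℝ} (hl : 0 < l) :
    deriv (fun l : ℝ => μ * k ^ (p - 1) + β * k ^ (p / 2 - 1) * l ^ (p / 2) - 1) l =
      p / 2 * (β * k ^ (p / 2 - 1) * l ^ (p / 2)) / l := by
  rw [((((hasDerivAt_rpow_of_pos hl _).const_mul _).const_add _).sub_const 1).deriv]
  ring

lemma jacobian_bracket_eq (p a b c d : ℝ) (h₁ : a + b = 1) (h₂ : c + d = 1) :
    ((p - 1) * a + (p / 2 - 1) * b) * ((p - 1) * c + (p / 2 - 1) * d) - p / 2 * b * (p / 2 * d) =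
      p / 2 * (p - 1) * (a + c) - (p - 1) := by
  obtain rfl : b = 1 - a := by linarith
  obtain rfl : d = 1 - c := by linarith
  ring

lemma jacobian_alpha_eq {p μ₁ μ₂ β k l : ℝ} (hp : p ≠ 0) (hk : 0 < k) (hl : 0 < l)
    (h₁ : μ₁ * k ^ (p - 1) + β * k ^ (p / 2 - 1) * l ^ (p / 2) = 1)
    (h₂ : μ₂ * l ^ (p - 1) + β * l ^ (p / 2 - 1) * k ^ (p / 2) = 1) :
    deriv (fun k : ℝ => μ₁ * k ^ (p - 1) + β * k ^ (p / 2 - 1) * l ^ (p / 2) - 1) k *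
        deriv (fun l : ℝ => μ₂ * l ^ (p - 1) + β * l ^ (p / 2 - 1) * k ^ (p / 2) - 1) l -
      deriv (fun l : ℝ => μ₁ * k ^ (p - 1) + β * k ^ (p / 2 - 1) * l ^ (p / 2) - 1) l *
        deriv (fun k : ℝ => μ₂ * l ^ (p - 1) + β * l ^ (p / 2 - 1) * k ^ (p / 2) - 1) k
      = p / 2 * (p - 1) * k⁻¹ * l⁻¹ * (μ₁ * k ^ (p - 1) + μ₂ * l ^ (p - 1) - 2 / p) := by
  rw [deriv_alpha_fst _ _ _ _ hk, deriv_alpha_fst _ _ _ _ hl, deriv_alpha_snd _ _ _ _ hl,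
    deriv_alpha_snd _ _ _ _ hk]
  have hbracket := jacobian_bracket_eq p _ _ _ _ h₁ h₂
  generalize μ₁ * k ^ (p - 1) = A at hbracket ⊢
  generalize μ₂ * l ^ (p - 1) = C at hbracket ⊢
  generalize β * k ^ (p / 2 - 1) * l ^ (p / 2) = B at hbracket ⊢
  generalize β * l ^ (p / 2 - 1) * k ^ (p / 2) = D at hbracket ⊢
  linear_combination (norm := (field_simp; ring)) k⁻¹ * l⁻¹ * hbracket

lemma alpha_add_lt_two_div {p μ₁ μ₂ β k l : ℝ} (hp₁ : 1 < p) (hp₂ : p < 2) (hμ₁ : 0 < μ₁)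
    (hμ₂ : 0 < μ₂) (hβ : (p - 1) * max μ₁ μ₂ < β) (hk : 0 < k) (hl : 0 < l)
    (h₁ : μ₁ * k ^ (p - 1) + β * k ^ (p / 2 - 1) * l ^ (p / 2) = 1)
    (h₂ : μ₂ * l ^ (p - 1) + β * l ^ (p / 2 - 1) * k ^ (p / 2) = 1) :
    μ₁ * k ^ (p - 1) + μ₂ * l ^ (p - 1) < 2 / p := by
  have hβmax : 0 ≤ (p - 1) * max μ₁ μ₂ :=
    mul_nonneg (by linarith) (hμ₁.le.trans (le_max_left _ _))
  have hβpos : 0 < β := hβmax.trans_lt hβ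
  have hμβ : (p - 1) ^ 2 * (μ₁ * μ₂) < β ^ 2 :=
    calc (p - 1) ^ 2 * (μ₁ * μ₂) ≤ (p - 1) ^ 2 * (max μ₁ μ₂ * max μ₁ μ₂) := by
          gcongr
          exacts [le_max_left _ _, le_max_right _ _]
      _ = ((p - 1) * max μ₁ μ₂) ^ 2 := by ring
      _ < β ^ 2 := by gcongr
  have hB : 1 - μ₁ * k ^ (p - 1) = β * k ^ (p / 2 - 1) * l ^ (p / 2) := by linarith
  have hD : 1 - μ₂ * l ^ (p - 1) = β * l ^ (p / 2 - 1) * k ^ (p / 2) := by linarith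
  have hprod : μ₁ * μ₂ * ((1 - μ₁ * k ^ (p - 1)) * (1 - μ₂ * l ^ (p - 1))) =
      β ^ 2 * (μ₁ * k ^ (p - 1) * (μ₂ * l ^ (p - 1))) :=
    calc _ = β ^ 2 * (μ₁ * μ₂) *
          ((k ^ (p / 2 - 1) * k ^ (p / 2)) * (l ^ (p / 2 - 1) * l ^ (p / 2))) := by
          rw [hB, hD]; ring
      _ = _ := by
          rw [← rpow_add hk, ← rpow_add hl, show p / 2 - 1 + p / 2 = p - 1 by ring]; ring
  have hsum := mul_add_lt_two_of_mul_one_sub_eq hp₁ hp₂ (by positivity)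
    (by linarith [show 0 < β * k ^ (p / 2 - 1) * l ^ (p / 2) by positivity])
    (by linarith [show 0 < β * l ^ (p / 2 - 1) * k ^ (p / 2) by positivity]) hμβ hprod
  rw [lt_div_iff₀ (by linarith)]
  linarith

theorem stmt_8_general (N : ℕ) (hN : 5 ≤ N) (p : ℝ) (hp : p = (N : ℝ) / ((N : ℝ) - 2))
    (μ₁ μ₂ β : ℝ) (hμ₁ : 0 < μ₁) (hμ₂ : 0 < μ₂)
    (β₀ : ℝ) (hβ₀ge : (p - 1) * max μ₁ μ₂ ≤ β₀)
    (hββ₀ : β₀ < β)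
    (k₀ l₀ : ℝ) (hk₀ : 0 < k₀) (hl₀ : 0 < l₀)
    (he₁ : μ₁ * k₀ ^ (p - 1) + β * k₀ ^ (p / 2 - 1) * l₀ ^ (p / 2) = 1)
    (he₂ : μ₂ * l₀ ^ (p - 1) + β * l₀ ^ (p / 2 - 1) * k₀ ^ (p / 2) = 1) :
    (deriv (fun k : ℝ => μ₁ * k ^ (p - 1) + β * k ^ (p / 2 - 1) * l₀ ^ (p / 2) - 1) k₀ *
        deriv (fun l : ℝ => μ₂ * l ^ (p - 1) + β * l ^ (p / 2 - 1) * k₀ ^ (p / 2) - 1) l₀ -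
      deriv (fun l : ℝ => μ₁ * k₀ ^ (p - 1) + β * k₀ ^ (p / 2 - 1) * l ^ (p / 2) - 1) l₀ *
        deriv (fun k : ℝ => μ₂ * l₀ ^ (p - 1) + β * l₀ ^ (p / 2 - 1) * k ^ (p / 2) - 1) k₀)
      = p / 2 * (p - 1) * k₀⁻¹ * l₀⁻¹ * (μ₁ * k₀ ^ (p - 1) + μ₂ * l₀ ^ (p - 1) - 2 / p) ∧
    (deriv (fun k : ℝ => μ₁ * k ^ (p - 1) + β * k ^ (p / 2 - 1) * l₀ ^ (p / 2) - 1) k₀ *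
        deriv (fun l : ℝ => μ₂ * l ^ (p - 1) + β * l ^ (p / 2 - 1) * k₀ ^ (p / 2) - 1) l₀ -
      deriv (fun l : ℝ => μ₁ * k₀ ^ (p - 1) + β * k₀ ^ (p / 2 - 1) * l ^ (p / 2) - 1) l₀ *
        deriv (fun k : ℝ => μ₂ * l₀ ^ (p - 1) + β * l₀ ^ (p / 2 - 1) * k ^ (p / 2) - 1) k₀)
      < 0 := by
  have hN' : (5 : ℝ) ≤ N := by exact_mod_cast hN
  have hp₁ : 1 < p := by rw [hp, lt_div_iff₀ (by linarith)]; linarith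
  have hp₂ : p < 2 := by rw [hp, div_lt_iff₀ (by linarith)]; linarith
  have hJ := jacobian_alpha_eq (by linarith) hk₀ hl₀ he₁ he₂
  have hsum := alpha_add_lt_two_div hp₁ hp₂ hμ₁ hμ₂ (hβ₀ge.trans_lt hββ₀) hk₀ hl₀ he₁ he₂
  have hcoeff : 0 < p / 2 * (p - 1) * k₀⁻¹ * l₀⁻¹ :=
    mul_pos (mul_pos (mul_pos (by linarith) (by linarith)) (inv_pos.2 hk₀)) (inv_pos.2 hl₀)
  exact ⟨hJ, hJ ▸ mul_neg_of_pos_of_neg hcoeff (sub_neg.2 hsum)⟩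

theorem stmt_8 (N : ℕ) (hN : 5 ≤ N) (p : ℝ) (hp : p = (N : ℝ) / ((N : ℝ) - 2))
    (μ₁ μ₂ β : ℝ) (hμ₁ : 0 < μ₁) (hμ₂ : 0 < μ₂) (hβ : 0 < β)
    (β₀ : ℝ) (hβ₀ge : (p - 1) * max μ₁ μ₂ ≤ β₀)
    (hβ₀eq : (p - 1) * μ₁ * μ₂ * β₀ ^ (2 / p - 2) + β₀ ^ (2 / p) =
      p * (p - 1) ^ (2 / p - 1) * max (μ₁ ^ (2 / p)) (μ₂ ^ (2 / p)))
    (hββ₀ : β₀ < β)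
    (k₀ l₀ : ℝ) (hk₀ : 0 < k₀) (hl₀ : 0 < l₀)
    (he₁ : μ₁ * k₀ ^ (p - 1) + β * k₀ ^ (p / 2 - 1) * l₀ ^ (p / 2) = 1)
    (he₂ : μ₂ * l₀ ^ (p - 1) + β * l₀ ^ (p / 2 - 1) * k₀ ^ (p / 2) = 1)
    (hmin : ∀ k l : ℝ, 0 < k → 0 < l →
      μ₁ * k ^ (p - 1) + β * k ^ (p / 2 - 1) * l ^ (p / 2) = 1 →
      μ₂ * l ^ (p - 1) + β * l ^ (p / 2 - 1) * k ^ (p / 2) = 1 →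
      k₀ ≤ k) :
    (deriv (fun k : ℝ => μ₁ * k ^ (p - 1) + β * k ^ (p / 2 - 1) * l₀ ^ (p / 2) - 1) k₀ *
        deriv (fun l : ℝ => μ₂ * l ^ (p - 1) + β * l ^ (p / 2 - 1) * k₀ ^ (p / 2) - 1) l₀ -
      deriv (fun l : ℝ => μ₁ * k₀ ^ (p - 1) + β * k₀ ^ (p / 2 - 1) * l ^ (p / 2) - 1) l₀ *
        deriv (fun k : ℝ => μ₂ * l₀ ^ (p - 1) + β * l₀ ^ (p / 2 - 1) * k ^ (p / 2) - 1) k₀)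
      = p / 2 * (p - 1) * k₀⁻¹ * l₀⁻¹ * (μ₁ * k₀ ^ (p - 1) + μ₂ * l₀ ^ (p - 1) - 2 / p) ∧
    (deriv (fun k : ℝ => μ₁ * k ^ (p - 1) + β * k ^ (p / 2 - 1) * l₀ ^ (p / 2) - 1) k₀ *
        deriv (fun l : ℝ => μ₂ * l ^ (p - 1) + β * l ^ (p / 2 - 1) * k₀ ^ (p / 2) - 1) l₀ -
      deriv (fun l : ℝ => μ₁ * k₀ ^ (p - 1) + β * k₀ ^ (p / 2 - 1) * l ^ (p / 2) - 1) l₀ *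
        deriv (fun k : ℝ => μ₂ * l₀ ^ (p - 1) + β * l₀ ^ (p / 2 - 1) * k ^ (p / 2) - 1) k₀)
      < 0 :=
  stmt_8_general N hN p hp μ₁ μ₂ β hμ₁ hμ₂ β₀ hβ₀ge hββ₀ k₀ l₀ hk₀ hl₀ he₁ he₂
end

section
/- There exist β₂ > 0 and continuously differentiable functions k, l : (-β₂, β₂) → (0, ∞) with k(0) = μ₁^{-1/(p-1)} and l(0) = μ₂^{-1/(p-1)} such that μ₁ k(β)^{p-1} + β k(β)^{p/2-1} l(β)^{p/2} = 1 and μ₂ l(β)^{p-1} + β l(β)^{p/2-1} k(β)^{p/2} = 1 for all β ∈ (-β₂, β₂); moreover there exists β₁ ∈ (0, β₂] such that k(β) + l(β) > min{μ₁^{-(N-2)/2}, μ₂^{-(N-2)/2}} for all β ∈ (0, β₁). -/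
/-!
At `β = 0` the system decouples and is solved by `k₀ = μ₁ ^ (-1/(p-1))`, `l₀ = μ₂ ^ (-1/(p-1))`.
There its Jacobian in `(k, l)` is diagonal with the nonzero entries `μᵢ (p-1) (·) ^ (p-2)`, so the
implicit function theorem continues this solution to a `C¹` curve for small `|β|`. Positivity and
`k + l > min k₀ l₀` are open conditions holding at `β = 0`, hence along the curve near `0`; and
`1/(p-1) = (N-2)/2` identifies `min k₀ l₀` with the threshold of the statement.
-/

open Real Topology Set

namespace ContinuousLinearMap

variable {𝕜 : Type*} [NontriviallyNormedField 𝕜]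

theorem isInvertible_smulRight_one {c : 𝕜} (hc : c ≠ 0) :
    (smulRight (1 : 𝕜 →L[𝕜] 𝕜) c).IsInvertible :=
  ⟨ContinuousLinearEquiv.unitsEquivAut 𝕜 (Units.mk0 c hc), rfl⟩

variable {M₁ M₂ M₃ M₄ : Type*} [NormedAddCommGroup M₁] [NormedSpace 𝕜 M₁]
  [NormedAddCommGroup M₂] [NormedSpace 𝕜 M₂] [NormedAddCommGroup M₃] [NormedSpace 𝕜 M₃]
  [NormedAddCommGroup M₄] [NormedSpace 𝕜 M₄]

theorem IsInvertible.prodMap {f : M₁ →L[𝕜] M₂} {g : M₃ →L[𝕜] M₄} (hf : f.IsInvertible)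
    (hg : g.IsInvertible) : (f.prodMap g).IsInvertible := by
  obtain ⟨e, rfl⟩ := hf
  obtain ⟨e', rfl⟩ := hg
  exact ⟨e.prodCongr e', rfl⟩

end ContinuousLinearMap

section ImplicitCurve

variable {𝕜 : Type*} [NontriviallyNormedField 𝕜]
  {E₁ E₂ F : Type*} [NormedAddCommGroup E₁] [NormedSpace 𝕜 E₁]
  [NormedAddCommGroup E₂] [NormedSpace 𝕜 E₂] [NormedAddCommGroup F] [NormedSpace 𝕜 F]

theorem isInvertible_fderiv_comp_inr {f : E₁ × E₂ → F} {u : E₁ × E₂} {g' : E₂ →L[𝕜] F}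
    (hf : DifferentiableAt 𝕜 f u) (hg : HasFDerivAt (fun y => f (u.1, y)) g' u.2)
    (hg' : g'.IsInvertible) : (fderiv 𝕜 f u ∘L .inr 𝕜 E₁ E₂).IsInvertible := by
  have hcomp : HasFDerivAt (fun y => f (u.1, y)) (fderiv 𝕜 f u ∘L .inr 𝕜 E₁ E₂) u.2 :=
    hf.hasFDerivAt.comp u.2 (hasFDerivAt_prodMk_right u.1 u.2)
  rwa [← hg.unique hcomp]

variable {E F : Type*} [NormedAddCommGroup E] [NormedSpace ℝ E] [CompleteSpace E]
  [NormedAddCommGroup F] [NormedSpace ℝ F] [CompleteSpace F]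

theorem exists_contDiffOn_curve_of_implicit {f : ℝ × E → F} {x₀ : E} {U : Set E}
    (hf : ContDiffAt ℝ 1 f (0, x₀))
    (hinv : (fderiv ℝ f (0, x₀) ∘L .inr ℝ ℝ E).IsInvertible) (hU : U ∈ 𝓝 x₀) :
    ∃ ε > 0, ∃ φ : ℝ → E, ContDiffOn ℝ 1 φ (Ioo (-ε) ε) ∧ φ 0 = x₀ ∧
      ∀ t ∈ Ioo (-ε) ε, φ t ∈ U ∧ f (t, φ t) = f (0, x₀) := by
  set φ := hf.implicitFunction one_ne_zero hinv
  have hφ0 : φ 0 = x₀ := hf.implicitFunction_apply_self one_ne_zero hinv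
  have hφC : ContDiffAt ℝ 1 φ 0 := hf.contDiffAt_implicitFunction one_ne_zero hinv
  have hφU : ∀ᶠ t in 𝓝 0, φ t ∈ U := hφC.continuousAt.preimage_mem_nhds (hφ0 ▸ hU)
  obtain ⟨ε, hε, hball⟩ := Metric.eventually_nhds_iff_ball.1 <|
    (hφC.eventually (by simp)).and (hφU.and (hf.eventually_apply_implicitFunction one_ne_zero hinv))
  rw [Real.ball_eq_Ioo, zero_sub, zero_add] at hball
  exact ⟨ε, hε, φ, fun t ht => (hball t ht).1.contDiffWithinAt, hφ0, fun t ht => (hball t ht).2⟩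

end ImplicitCurve

-- `x = (β, k, l)`: the parameter comes first, as `ContDiffAt.implicitFunction` expects.
noncomputable def coupledSystem (μ₁ μ₂ a b c : ℝ) (x : ℝ × ℝ × ℝ) : ℝ × ℝ :=
  (μ₁ * x.2.1 ^ a + x.1 * x.2.1 ^ b * x.2.2 ^ c, μ₂ * x.2.2 ^ a + x.1 * x.2.2 ^ b * x.2.1 ^ c)

section CoupledSystem

variable {μ₁ μ₂ a b c : ℝ}

theorem coupledSystem_apply_zero (y : ℝ × ℝ) :
    coupledSystem μ₁ μ₂ a b c (0, y) = (μ₁ * y.1 ^ a, μ₂ * y.2 ^ a) := by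
  simp [coupledSystem]

theorem contDiffAt_coupledSystem {n : WithTop ℕ∞} {x : ℝ × ℝ × ℝ} (hk : x.2.1 ≠ 0)
    (hl : x.2.2 ≠ 0) :
    ContDiffAt ℝ n (coupledSystem μ₁ μ₂ a b c) x := by
  have ck : ContDiffAt ℝ n (fun x : ℝ × ℝ × ℝ => x.2.1) x := by fun_prop
  have cl : ContDiffAt ℝ n (fun x : ℝ × ℝ × ℝ => x.2.2) x := by fun_prop
  have cβ : ContDiffAt ℝ n (fun x : ℝ × ℝ × ℝ => x.1) x := by fun_prop
  exact ((contDiffAt_const.mul (ck.rpow_const_of_ne hk)).add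
      ((cβ.mul (ck.rpow_const_of_ne hk)).mul (cl.rpow_const_of_ne hl))).prodMk
    ((contDiffAt_const.mul (cl.rpow_const_of_ne hl)).add
      ((cβ.mul (cl.rpow_const_of_ne hl)).mul (ck.rpow_const_of_ne hk)))

theorem isInvertible_fderiv_coupledSystem_comp_inr (hμ₁ : μ₁ ≠ 0) (hμ₂ : μ₂ ≠ 0) (ha : a ≠ 0)
    {y : ℝ × ℝ} (hk : 0 < y.1) (hl : 0 < y.2) :
    (fderiv ℝ (coupledSystem μ₁ μ₂ a b c) (0, y) ∘L .inr ℝ ℝ (ℝ × ℝ)).IsInvertible := by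
  have hpow {μ t : ℝ} (ht : 0 < t) : HasDerivAt (fun s => μ * s ^ a) (μ * (a * t ^ (a - 1))) t :=
    (hasDerivAt_rpow_const (Or.inl ht.ne')).const_mul μ
  have hderiv : HasFDerivAt (fun z => coupledSystem μ₁ μ₂ a b c (0, z))
      ((ContinuousLinearMap.smulRight (1 : ℝ →L[ℝ] ℝ) (μ₁ * (a * y.1 ^ (a - 1)))).prodMap
        (ContinuousLinearMap.smulRight (1 : ℝ →L[ℝ] ℝ) (μ₂ * (a * y.2 ^ (a - 1))))) y := by
    simp only [coupledSystem_apply_zero]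
    exact (hpow hk).hasFDerivAt.prodMap y (hpow hl).hasFDerivAt
  exact isInvertible_fderiv_comp_inr
    ((contDiffAt_coupledSystem hk.ne' hl.ne').differentiableAt one_ne_zero) hderiv
    ((ContinuousLinearMap.isInvertible_smulRight_one (by positivity)).prodMap
      (ContinuousLinearMap.isInvertible_smulRight_one (by positivity)))

end CoupledSystem

theorem mul_rpow_neg_one_div_rpow {μ q : ℝ} (hμ : 0 < μ) (hq : q ≠ 0) :
    μ * (μ ^ (-(1 / q))) ^ q = 1 := by
  rw [← rpow_mul hμ.le, neg_mul, one_div_mul_cancel hq, rpow_neg_one, mul_inv_cancel₀ hμ.ne']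

theorem one_div_sub_one_of_eq_div {n p : ℝ} (hn : 2 < n) (hp : p = n / (n - 2)) :
    1 / (p - 1) = (n - 2) / 2 := by
  have : n - 2 ≠ 0 := by linarith
  rw [hp]; field_simp; ring

theorem stmt_9 (N : ℕ) (hN : 5 ≤ N) (p : ℝ) (hp : p = (N : ℝ) / ((N : ℝ) - 2))
    (μ₁ μ₂ : ℝ) (hμ₁ : 0 < μ₁) (hμ₂ : 0 < μ₂) :
    ∃ β₂ > (0 : ℝ), ∃ k l : ℝ → ℝ,
      ContDiffOn ℝ 1 k (Set.Ioo (-β₂) β₂) ∧ ContDiffOn ℝ 1 l (Set.Ioo (-β₂) β₂) ∧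
      k 0 = μ₁ ^ (-(1 / (p - 1))) ∧ l 0 = μ₂ ^ (-(1 / (p - 1))) ∧
      (∀ β ∈ Set.Ioo (-β₂) β₂, 0 < k β ∧ 0 < l β ∧
        μ₁ * k β ^ (p - 1) + β * k β ^ (p / 2 - 1) * l β ^ (p / 2) = 1 ∧
        μ₂ * l β ^ (p - 1) + β * l β ^ (p / 2 - 1) * k β ^ (p / 2) = 1) ∧
      ∃ β₁ : ℝ, 0 < β₁ ∧ β₁ ≤ β₂ ∧ ∀ β ∈ Set.Ioo (0 : ℝ) β₁,
        min (μ₁ ^ (-(((N : ℝ) - 2) / 2))) (μ₂ ^ (-(((N : ℝ) - 2) / 2))) < k β + l β := by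
  have hN2 : (2 : ℝ) < N := by exact_mod_cast (by omega : 2 < N)
  have hexp : 1 / (p - 1) = ((N : ℝ) - 2) / 2 := one_div_sub_one_of_eq_div hN2 hp
  have hp1 : p - 1 ≠ 0 := fun h => by rw [h, div_zero] at hexp; linarith
  set k₀ := μ₁ ^ (-(1 / (p - 1)))
  set l₀ := μ₂ ^ (-(1 / (p - 1)))
  have hk₀ : 0 < k₀ := rpow_pos_of_pos hμ₁ _
  have hl₀ : 0 < l₀ := rpow_pos_of_pos hμ₂ _
  have hbase : coupledSystem μ₁ μ₂ (p - 1) (p / 2 - 1) (p / 2) (0, (k₀, l₀)) = (1, 1) := by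
    rw [coupledSystem_apply_zero, mul_rpow_neg_one_div_rpow hμ₁ hp1,
      mul_rpow_neg_one_div_rpow hμ₂ hp1]
  set U : Set (ℝ × ℝ) := {y | 0 < y.1 ∧ 0 < y.2 ∧ min k₀ l₀ < y.1 + y.2}
  have hU : U ∈ 𝓝 (k₀, l₀) :=
    IsOpen.mem_nhds ((isOpen_lt continuous_const continuous_fst).inter
      ((isOpen_lt continuous_const continuous_snd).inter
        (isOpen_lt continuous_const (continuous_fst.add continuous_snd))))
      ⟨hk₀, hl₀, by simp [hk₀, hl₀]⟩
  obtain ⟨ε, hε, φ, hφC, hφ0, hφ⟩ := exists_contDiffOn_curve_of_implicit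
    (contDiffAt_coupledSystem hk₀.ne' hl₀.ne')
    (isInvertible_fderiv_coupledSystem_comp_inr hμ₁.ne' hμ₂.ne' hp1 hk₀ hl₀) hU
  rw [hbase] at hφ
  refine ⟨ε, hε, fun β => (φ β).1, fun β => (φ β).2, contDiff_fst.comp_contDiffOn hφC,
    contDiff_snd.comp_contDiffOn hφC, congrArg Prod.fst hφ0, congrArg Prod.snd hφ0, fun β hβ => ?_,
    ε, hε, le_rfl, fun β hβ => ?_⟩
  · obtain ⟨⟨hk, hl, -⟩, hsol⟩ := hφ β hβ
    exact ⟨hk, hl, congrArg Prod.fst hsol, congrArg Prod.snd hsol⟩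
  · rw [← hexp]
    exact (hφ β ⟨by linarith [hβ.1], hβ.2⟩).1.2.2
end

section
/- Let 1 < p < 2, let b₁, b₂ > 0 and d ≥ 0, and set c₁ = b₁ + d, c₂ = b₂ + d. If t, s > 0 satisfy t² b₁ = t^{2p} c₁ − t^p s^p d and s² b₂ = s^{2p} c₂ − t^p s^p d, then t = 1 and s = 1. -/
/-! By symmetry assume `s ≤ t`. Writing `x ^ (2 * p) = (x ^ p) ^ 2`, the first equation becomes
`(t ^ 2 - t ^ (2 * p)) * b₁ = t ^ p * d * (t ^ p - s ^ p) ≥ 0`, so `t ^ (2 * p) ≤ t ^ 2`, i.e. `t ≤ 1`;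
the second gives `s ^ 2 ≤ s ^ (2 * p)` in the same way, i.e. `1 ≤ s`. Hence `1 ≤ s ≤ t ≤ 1`. -/

open Real

lemma le_one_of_rpow_le_rpow {x a b : ℝ} (hab : a < b) (h : x ^ b ≤ x ^ a) : x ≤ 1 :=
  not_lt.1 fun hx => (rpow_lt_rpow_of_exponent_lt hx hab).not_ge h

lemma one_le_of_rpow_le_rpow {x a b : ℝ} (hx : 0 < x) (hab : a < b) (h : x ^ a ≤ x ^ b) :
    1 ≤ x :=
  not_lt.1 fun hx1 => (rpow_lt_rpow_of_exponent_gt hx hx1 hab).not_ge h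

section Balance

variable {p b d x y : ℝ}

lemma rpow_two_mul_le_sq_of_balance (hx : 0 < x) (hb : 0 < b) (hd : 0 ≤ d)
    (h : x ^ 2 * b = x ^ (2 * p) * (b + d) - x ^ p * y ^ p * d) (hyx : y ^ p ≤ x ^ p) :
    x ^ (2 * p) ≤ x ^ 2 := by
  have hu : 0 ≤ x ^ p := (rpow_pos_of_pos hx p).le
  rw [two_mul, rpow_add hx] at h ⊢
  nlinarith [mul_nonneg (mul_nonneg hu hd) (sub_nonneg.2 hyx)]

lemma sq_le_rpow_two_mul_of_balance (hx : 0 < x) (hb : 0 < b) (hd : 0 ≤ d)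
    (h : x ^ 2 * b = x ^ (2 * p) * (b + d) - x ^ p * y ^ p * d) (hxy : x ^ p ≤ y ^ p) :
    x ^ 2 ≤ x ^ (2 * p) := by
  have hu : 0 ≤ x ^ p := (rpow_pos_of_pos hx p).le
  rw [two_mul, rpow_add hx] at h ⊢
  nlinarith [mul_nonneg (mul_nonneg hu hd) (sub_nonneg.2 hxy)]

end Balance

theorem stmt_10_general (p : ℝ) (hp1 : 1 < p)
    (b₁ b₂ d : ℝ) (hb₁ : 0 < b₁) (hb₂ : 0 < b₂) (hd : 0 ≤ d)
    (t s : ℝ) (ht : 0 < t) (hs : 0 < s)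
    (h1 : t ^ 2 * b₁ = t ^ (2 * p) * (b₁ + d) - t ^ p * s ^ p * d)
    (h2 : s ^ 2 * b₂ = s ^ (2 * p) * (b₂ + d) - t ^ p * s ^ p * d) :
    t = 1 ∧ s = 1 := by
  wlog hst : s ≤ t generalizing b₁ b₂ t s
  · rw [mul_comm (t ^ p)] at h1 h2
    exact (this b₂ b₁ hb₂ hb₁ s t hs ht h2 h1 (le_of_not_ge hst)).symm
  have hpow : s ^ p ≤ t ^ p := rpow_le_rpow hs.le hst (by linarith)
  have hp : (2 : ℝ) < 2 * p := by linarith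
  rw [mul_comm (t ^ p)] at h2
  have ht_le : t ≤ 1 := le_one_of_rpow_le_rpow hp <| by
    simpa only [rpow_two] using rpow_two_mul_le_sq_of_balance ht hb₁ hd h1 hpow
  have hs_ge : 1 ≤ s := one_le_of_rpow_le_rpow hs hp <| by
    simpa only [rpow_two] using sq_le_rpow_two_mul_of_balance hs hb₂ hd h2 hpow
  constructor <;> linarith

theorem stmt_10 (p : ℝ) (hp1 : 1 < p) (hp2 : p < 2)
    (b₁ b₂ d : ℝ) (hb₁ : 0 < b₁) (hb₂ : 0 < b₂) (hd : 0 ≤ d)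
    (t s : ℝ) (ht : 0 < t) (hs : 0 < s)
    (h1 : t ^ 2 * b₁ = t ^ (2 * p) * (b₁ + d) - t ^ p * s ^ p * d)
    (h2 : s ^ 2 * b₂ = s ^ (2 * p) * (b₂ + d) - t ^ p * s ^ p * d) :
    t = 1 ∧ s = 1 :=
  stmt_10_general p hp1 b₁ b₂ d hb₁ hb₂ hd t s ht hs h1 h2
end

section
/- Let 1 < p < 2 and D₁, D₃, D₄ > 0, D₂ < 0 with D₁ D₃ − D₂² > 0. Then there exist t > 1 and s > 0 such that t^{2-p} D₁ = t^p D₁ + s^p D₂ and s^{2-p} D₄ = s^p D₃ + t^p D₂. -/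
/-!
Put `c = D₁ / (-D₂) > 0`. The first equation says exactly `s ^ p = c (t ^ p - t ^ (2 - p))`, which is
positive for `t > 1` since `p > 2 - p`. Substituting it into the second equation leaves a single
continuous equation `residual t = 0` in `t`. At `t = 1` the residual is `-D₂ > 0`, while for large `t`
it is at most `t ^ (2 - p) K - t ^ p (c D₃ + D₂)`, and `c D₃ + D₂ = (D₁ D₃ - D₂ ²) / (-D₂) > 0`; so the
residual becomes negative and the intermediate value theorem produces a root `t > 1`.
-/

open Real Filter

lemma exists_one_lt_rpow_mul_lt_rpow_mul {a b : ℝ} (hab : a < b) (K : ℝ) {ε : ℝ} (hε : 0 < ε) :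
    ∃ T : ℝ, 1 < T ∧ T ^ a * K < T ^ b * ε := by
  have hlarge := (tendsto_rpow_atTop (sub_pos.2 hab)).eventually_gt_atTop (K / ε)
  obtain ⟨T, hT, hT1⟩ := (hlarge.and (eventually_gt_atTop 1)).exists
  have hT0 : 0 < T := by linarith
  refine ⟨T, hT1, ?_⟩
  calc T ^ a * K = T ^ a * (K / ε * ε) := by field_simp
    _ < T ^ a * (T ^ (b - a) * ε) := by gcongr
    _ = T ^ b * ε := by rw [← mul_assoc, ← rpow_add hT0, add_sub_cancel]

namespace PowerSystem

/-- The value of `s ^ p` forced by the first equation, where `c = D₁ / (-D₂)`. -/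
noncomputable def sPow (p c t : ℝ) : ℝ := c * (t ^ p - t ^ (2 - p))

/-- The second equation after substituting `s ^ p = sPow p c t` and
`s ^ (2 - p) = (s ^ p) ^ ((2 - p) / p)`. -/
noncomputable def residual (p c D₂ D₃ D₄ t : ℝ) : ℝ :=
  sPow p c t ^ ((2 - p) / p) * D₄ - sPow p c t * D₃ - t ^ p * D₂

variable {p c D₂ D₃ D₄ : ℝ}

lemma sPow_pos (hp : 1 < p) (hc : 0 < c) {t : ℝ} (ht : 1 < t) : 0 < sPow p c t :=
  mul_pos hc (sub_pos.2 (rpow_lt_rpow_of_exponent_lt ht (by linarith)))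

lemma sPow_nonneg (hp : 1 ≤ p) (hc : 0 ≤ c) {t : ℝ} (ht : 1 ≤ t) : 0 ≤ sPow p c t :=
  mul_nonneg hc (sub_nonneg.2 (rpow_le_rpow_of_exponent_le ht (by linarith)))

lemma residual_one (hp0 : 0 < p) (hp2 : p < 2) : residual p c D₂ D₃ D₄ 1 = -D₂ := by
  have hq : (2 - p) / p ≠ 0 := div_ne_zero (by linarith) hp0.ne'
  simp [residual, sPow, zero_rpow hq]

lemma continuous_residual (hp0 : 0 ≤ p) (hp2 : p ≤ 2) :
    Continuous (residual p c D₂ D₃ D₄) := by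
  have hq : 0 ≤ (2 - p) / p := div_nonneg (by linarith) hp0
  have h2p : 0 ≤ 2 - p := by linarith
  unfold residual sPow
  fun_prop (disch := assumption)

lemma residual_le (hp1 : 1 ≤ p) (hp2 : p ≤ 2) (hc : 0 ≤ c) (hD₄ : 0 ≤ D₄) {T : ℝ} (hT : 1 ≤ T) :
    residual p c D₂ D₃ D₄ T ≤
      T ^ (2 - p) * (c ^ ((2 - p) / p) * D₄ + c * D₃) - T ^ p * (c * D₃ + D₂) := by
  have hT0 : 0 ≤ T := by linarith
  have hq : 0 ≤ (2 - p) / p := div_nonneg (by linarith) (by linarith)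
  have hle : sPow p c T ≤ c * T ^ p := by
    have := rpow_nonneg hT0 (2 - p)
    unfold sPow
    nlinarith
  have hpow : sPow p c T ^ ((2 - p) / p) ≤ c ^ ((2 - p) / p) * T ^ (2 - p) :=
    calc sPow p c T ^ ((2 - p) / p) ≤ (c * T ^ p) ^ ((2 - p) / p) :=
          rpow_le_rpow (sPow_nonneg hp1 hc hT) hle hq
      _ = c ^ ((2 - p) / p) * T ^ (2 - p) := by
          rw [mul_rpow hc (rpow_nonneg hT0 p), ← rpow_mul hT0,
            mul_div_cancel₀ _ (by linarith : p ≠ 0)]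
  have := mul_le_mul_of_nonneg_right hpow hD₄
  unfold residual sPow at *
  linarith

lemma exists_residual_eq_zero (hp1 : 1 < p) (hp2 : p < 2) (hc : 0 < c) (hD₂ : D₂ < 0)
    (hD₄ : 0 ≤ D₄) (hε : 0 < c * D₃ + D₂) : ∃ t, 1 < t ∧ residual p c D₂ D₃ D₄ t = 0 := by
  obtain ⟨T, hT1, hTneg⟩ :=
    exists_one_lt_rpow_mul_lt_rpow_mul (by linarith : 2 - p < p) (c ^ ((2 - p) / p) * D₄ + c * D₃) hε
  have hsign : (0 : ℝ) ∈ Set.Ioo (residual p c D₂ D₃ D₄ T) (residual p c D₂ D₃ D₄ 1) := by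
    constructor
    · linarith [residual_le (D₂ := D₂) (D₃ := D₃) hp1.le hp2.le hc.le hD₄ hT1.le]
    · rw [residual_one (by linarith) hp2]
      linarith
  obtain ⟨t, ⟨ht1, -⟩, ht⟩ := intermediate_value_Ioo' hT1.le
    (continuous_residual (by linarith) hp2.le).continuousOn hsign
  exact ⟨t, ht1, ht⟩

lemma first_equation {D₁ t s : ℝ} (hD₂ : D₂ ≠ 0) (hs : s ^ p = sPow p (D₁ / -D₂) t) :
    t ^ (2 - p) * D₁ = t ^ p * D₁ + s ^ p * D₂ := by
  rw [hs, sPow]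
  field_simp
  ring

lemma second_equation {t s : ℝ} (hp0 : p ≠ 0) (hs0 : 0 ≤ s) (hs : s ^ p = sPow p c t)
    (ht : residual p c D₂ D₃ D₄ t = 0) :
    s ^ (2 - p) * D₄ = s ^ p * D₃ + t ^ p * D₂ := by
  have hpow : s ^ (2 - p) = sPow p c t ^ ((2 - p) / p) := by
    rw [← hs, ← rpow_mul hs0, mul_div_cancel₀ _ hp0]
  rw [hpow, hs]
  unfold residual at ht
  linarith

end PowerSystem

open PowerSystem in
theorem stmt_12_general (p : ℝ) (hp1 : 1 < p) (hp2 : p < 2)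
    (D₁ D₂ D₃ D₄ : ℝ) (hD₁ : 0 < D₁) (hD₄ : 0 < D₄)
    (hD₂ : D₂ < 0) (hdet : 0 < D₁ * D₃ - D₂ ^ 2) :
    ∃ t s : ℝ, 1 < t ∧ 0 < s ∧
      t ^ (2 - p) * D₁ = t ^ p * D₁ + s ^ p * D₂ ∧
      s ^ (2 - p) * D₄ = s ^ p * D₃ + t ^ p * D₂ := by
  have hc : 0 < D₁ / -D₂ := div_pos hD₁ (neg_pos.2 hD₂)
  have hε : 0 < D₁ / -D₂ * D₃ + D₂ := by
    have : D₁ / -D₂ * D₃ + D₂ = (D₁ * D₃ - D₂ ^ 2) / -D₂ := by field_simp; ring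
    rw [this]
    exact div_pos hdet (neg_pos.2 hD₂)
  obtain ⟨t, ht1, ht⟩ := exists_residual_eq_zero hp1 hp2 hc hD₂ hD₄.le hε
  have hp0 : p ≠ 0 := by positivity
  set s := sPow p (D₁ / -D₂) t ^ p⁻¹
  have hs : s ^ p = sPow p (D₁ / -D₂) t := rpow_inv_rpow (sPow_pos hp1 hc ht1).le hp0
  have hs0 : 0 < s := rpow_pos_of_pos (sPow_pos hp1 hc ht1) _
  exact ⟨t, s, ht1, hs0, first_equation hD₂.ne hs, second_equation hp0 hs0.le hs ht⟩

theorem stmt_12 (p : ℝ) (hp1 : 1 < p) (hp2 : p < 2)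
    (D₁ D₂ D₃ D₄ : ℝ) (hD₁ : 0 < D₁) (hD₃ : 0 < D₃) (hD₄ : 0 < D₄)
    (hD₂ : D₂ < 0) (hdet : 0 < D₁ * D₃ - D₂ ^ 2) :
    ∃ t s : ℝ, 1 < t ∧ 0 < s ∧
      t ^ (2 - p) * D₁ = t ^ p * D₁ + s ^ p * D₂ ∧
      s ^ (2 - p) * D₄ = s ^ p * D₃ + t ^ p * D₂ :=
  stmt_12_general p hp1 hp2 D₁ D₂ D₃ D₄ hD₁ hD₄ hD₂ hdet
end

section
/- Let Ω ⊆ ℝᴺ have finite Lebesgue measure and let p = N/(N-2) with N ≥ 5. Suppose uₙ, vₙ, u, v : Ω → ℝ are measurable, uₙ → u and vₙ → v almost everywhere in Ω, and sup_n ∫_Ω |uₙ|^{2p} dx < ∞, sup_n ∫_Ω |vₙ|^{2p} dx < ∞. Then ∫_Ω (|uₙ|^p |vₙ|^p − |uₙ − u|^p |vₙ − v|^p) dx → ∫_Ω |u|^p |v|^p dx as n → ∞. -/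
/-!
A continuous function `j` on a finite-dimensional space that is positively homogeneous of degree
`q > 0` satisfies, for every `ε > 0` and some `C`, `|j (z + w) - j z| ≤ ε ‖z‖ ^ q + C ‖w‖ ^ q`:
for `‖w‖` small compared with `‖z‖` rescale to the unit sphere and use uniform continuity on a
compact ball, otherwise bound both terms by `‖w‖ ^ q`. With `z = Fₙ - G` and `w = G` this bounds
`|j Fₙ - j (Fₙ - G) - j G|` by `ε ‖Fₙ - G‖ ^ q`, whose integral is `O(ε)` uniformly in `n`
(`Fₙ` is bounded in `L^q`, hence so is `G` by Fatou), plus a fixed integrable function; dominated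
convergence disposes of the rest. The theorem is the case `j (a, c) = |a| ^ p * |c| ^ p`,
`q = 2p`, `Fₙ = (uₙ, vₙ)`.
-/

open Real Filter MeasureTheory
open scoped ENNReal Topology

def IsPosHomogeneous {E : Type*} [SMul ℝ E] (j : E → ℝ) (q : ℝ) : Prop :=
  ∀ ⦃t : ℝ⦄, 0 < t → ∀ z, j (t • z) = t ^ q * j z

namespace IsPosHomogeneous

variable {E : Type*} [NormedAddCommGroup E] [NormedSpace ℝ E] {j : E → ℝ} {q : ℝ}

lemma map_zero (hj : IsPosHomogeneous j q) (hq : 0 < q) : j 0 = 0 := by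
  have h := hj two_pos 0
  rw [smul_zero] at h
  have h2 : (1 : ℝ) < 2 ^ q := one_lt_rpow one_lt_two hq
  nlinarith

lemma map_eq_rpow_mul_map_inv_smul (hj : IsPosHomogeneous j q) {r : ℝ} (hr : 0 < r) (z : E) :
    j z = r ^ q * j (r⁻¹ • z) := by
  rw [← hj hr, smul_smul, mul_inv_cancel₀ hr.ne', one_smul]

lemma exists_abs_le_mul_norm_rpow [ProperSpace E] (hj : IsPosHomogeneous j q)
    (hcont : Continuous j) (hq : 0 < q) : ∃ M, 0 ≤ M ∧ ∀ z, |j z| ≤ M * ‖z‖ ^ q := by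
  obtain ⟨M, hM⟩ :=
    (isCompact_closedBall (0 : E) 1).exists_bound_of_continuousOn hcont.continuousOn
  refine ⟨max M 0, le_max_right _ _, fun z => ?_⟩
  rcases eq_or_ne z 0 with rfl | hz
  · simp [hj.map_zero hq, zero_rpow hq.ne']
  have hr : 0 < ‖z‖ := norm_pos_iff.2 hz
  have hunit : ‖j (‖z‖⁻¹ • z)‖ ≤ M := hM _ (by simp [norm_smul, hr.ne'])
  rw [hj.map_eq_rpow_mul_map_inv_smul hr, abs_mul, abs_of_pos (rpow_pos_of_pos hr q), mul_comm]
  exact mul_le_mul_of_nonneg_right (hunit.trans (le_max_left _ _)) (by positivity)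

lemma exists_abs_map_add_sub_map_le [ProperSpace E] (hj : IsPosHomogeneous j q)
    (hcont : Continuous j) (hq : 0 < q) {ε : ℝ} (hε : 0 < ε) :
    ∃ C, ∀ z w, |j (z + w) - j z| ≤ ε * ‖z‖ ^ q + C * ‖w‖ ^ q := by
  obtain ⟨M, hM0, hM⟩ := hj.exists_abs_le_mul_norm_rpow hcont hq
  obtain ⟨δ, hδ0, hδ⟩ := Metric.uniformContinuousOn_iff.1
    ((isCompact_closedBall (0 : E) 2).uniformContinuousOn_of_continuous hcont.continuousOn) ε hε
  set η := min δ 1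
  have hη0 : 0 < η := lt_min hδ0 one_pos
  refine ⟨M * ((η⁻¹ + 1) ^ q + η⁻¹ ^ q), fun z w => ?_⟩
  by_cases hw : ‖w‖ < η * ‖z‖
  · have hr : 0 < ‖z‖ := pos_of_mul_pos_right ((norm_nonneg w).trans_lt hw) hη0.le
    set r := ‖z‖
    have hz1 : ‖r⁻¹ • z‖ = 1 := by simp [norm_smul, r, hr.ne']
    have hw1 : ‖r⁻¹ • w‖ < η := by
      rw [norm_smul, norm_inv, norm_norm, inv_mul_lt_iff₀ hr, mul_comm]
      exact hw
    have hunit : |j (r⁻¹ • z + r⁻¹ • w) - j (r⁻¹ • z)| < ε := by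
      refine hδ _ ?_ _ ?_ ?_
      · rw [mem_closedBall_zero_iff]
        linarith [norm_add_le (r⁻¹ • z) (r⁻¹ • w), min_le_right δ 1]
      · rw [mem_closedBall_zero_iff, hz1]; norm_num
      · rw [dist_eq_norm, add_sub_cancel_left]
        exact hw1.trans_le (min_le_left _ _)
    have hscale : j (z + w) - j z = r ^ q * (j (r⁻¹ • z + r⁻¹ • w) - j (r⁻¹ • z)) := by
      rw [hj.map_eq_rpow_mul_map_inv_smul hr (z + w), hj.map_eq_rpow_mul_map_inv_smul hr z,
        smul_add, mul_sub]
    calc |j (z + w) - j z| ≤ r ^ q * ε := by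
          rw [hscale, abs_mul, abs_of_pos (rpow_pos_of_pos hr q)]
          exact mul_le_mul_of_nonneg_left hunit.le (by positivity)
      _ ≤ ε * r ^ q + M * ((η⁻¹ + 1) ^ q + η⁻¹ ^ q) * ‖w‖ ^ q := by
          rw [mul_comm]; exact le_add_of_nonneg_right (by positivity)
  · push Not at hw
    have hz : ‖z‖ ≤ η⁻¹ * ‖w‖ := by rw [inv_mul_eq_div, le_div_iff₀ hη0]; linarith
    have hzw : ‖z + w‖ ≤ (η⁻¹ + 1) * ‖w‖ := (norm_add_le _ _).trans (by linarith)
    calc |j (z + w) - j z| ≤ |j (z + w)| + |j z| := abs_sub _ _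
      _ ≤ M * ‖z + w‖ ^ q + M * ‖z‖ ^ q := add_le_add (hM _) (hM _)
      _ ≤ M * ((η⁻¹ + 1) * ‖w‖) ^ q + M * (η⁻¹ * ‖w‖) ^ q := by gcongr
      _ = M * ((η⁻¹ + 1) ^ q + η⁻¹ ^ q) * ‖w‖ ^ q := by
          rw [mul_rpow (by positivity) (norm_nonneg _), mul_rpow (by positivity) (norm_nonneg _)]
          ring
      _ ≤ ε * ‖z‖ ^ q + M * ((η⁻¹ + 1) ^ q + η⁻¹ ^ q) * ‖w‖ ^ q :=
          le_add_of_nonneg_left (by positivity)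

end IsPosHomogeneous

lemma add_rpow_le_two_rpow_mul_add_rpow {x y q : ℝ} (hx : 0 ≤ x) (hy : 0 ≤ y) (hq : 0 ≤ q) :
    (x + y) ^ q ≤ 2 ^ q * (x ^ q + y ^ q) :=
  calc (x + y) ^ q ≤ (2 * max x y) ^ q := by
        gcongr; linarith [le_max_left x y, le_max_right x y]
    _ = 2 ^ q * max (x ^ q) (y ^ q) := by
        rw [mul_rpow zero_le_two (le_max_of_le_left hx), rpow_max hx hy hq]
    _ ≤ 2 ^ q * (x ^ q + y ^ q) := by
        gcongr; exact max_le_add_of_nonneg (rpow_nonneg hx q) (rpow_nonneg hy q)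

section Integration

variable {α E : Type*} [MeasurableSpace α] {μ : Measure α} [NormedAddCommGroup E]

lemma lintegral_ofReal_norm_rpow_le_of_tendsto_ae {F : ℕ → α → E} {G : α → E} {q : ℝ}
    (hq : 0 ≤ q) (hF : ∀ n, AEStronglyMeasurable (F n) μ)
    (hlim : ∀ᵐ x ∂μ, Tendsto (fun n => F n x) atTop (𝓝 (G x))) {B : ℝ≥0∞}
    (hFB : ∀ n, ∫⁻ x, ENNReal.ofReal (‖F n x‖ ^ q) ∂μ ≤ B) :
    ∫⁻ x, ENNReal.ofReal (‖G x‖ ^ q) ∂μ ≤ B :=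
  calc ∫⁻ x, ENNReal.ofReal (‖G x‖ ^ q) ∂μ
        = ∫⁻ x, liminf (fun n => ENNReal.ofReal (‖F n x‖ ^ q)) atTop ∂μ := by
          refine lintegral_congr_ae (hlim.mono fun x hx => ?_)
          exact (ENNReal.tendsto_ofReal (hx.norm.rpow_const (Or.inr hq))).liminf_eq.symm
    _ ≤ liminf (fun n => ∫⁻ x, ENNReal.ofReal (‖F n x‖ ^ q) ∂μ) atTop :=
          lintegral_liminf_le' fun n => ((hF n).norm.aemeasurable.pow_const q).ennreal_ofReal
    _ ≤ B := liminf_le_of_frequently_le' (Frequently.of_forall hFB)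

lemma integrable_of_lintegral_ofReal_le {f : α → ℝ} (hf : AEStronglyMeasurable f μ)
    (hf0 : 0 ≤ᵐ[μ] f) {B : ℝ≥0∞} (hB : B ≠ ∞) (hfB : ∫⁻ x, ENNReal.ofReal (f x) ∂μ ≤ B) :
    Integrable f μ :=
  (lintegral_ofReal_ne_top_iff_integrable hf hf0).1 (ne_top_of_le_ne_top hB hfB)

lemma integral_le_toReal_of_lintegral_ofReal_le {f : α → ℝ} (hf : AEStronglyMeasurable f μ)
    (hf0 : 0 ≤ᵐ[μ] f) {B : ℝ≥0∞} (hB : B ≠ ∞) (hfB : ∫⁻ x, ENNReal.ofReal (f x) ∂μ ≤ B) :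
    ∫ x, f x ∂μ ≤ B.toReal := by
  rw [integral_eq_lintegral_of_nonneg_ae hf0 hf]
  exact ENNReal.toReal_mono hB hfB

theorem tendsto_integral_abs_sub_of_abs_sub_le_eps_mul_add {g H : ℕ → α → ℝ} {f Φ : α → ℝ}
    {K : ℝ} (hgf : ∀ n, Integrable (fun x => g n x - f x) μ)
    (hH : ∀ n, Integrable (H n) μ) (hH0 : ∀ n, 0 ≤ᵐ[μ] H n) (hHK : ∀ n, ∫ x, H n x ∂μ ≤ K)
    (hΦ : Integrable Φ μ) (hlim : ∀ᵐ x ∂μ, Tendsto (fun n => g n x) atTop (𝓝 (f x)))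
    (hbound : ∀ ε > 0, ∃ C, ∀ n, ∀ᵐ x ∂μ, |g n x - f x| ≤ ε * H n x + C * Φ x) :
    Tendsto (fun n => ∫ x, |g n x - f x| ∂μ) atTop (𝓝 0) := by
  refine tendsto_order.2 ⟨fun a ha => Eventually.of_forall fun n =>
    ha.trans_le (integral_nonneg fun _ => abs_nonneg _), fun ε hε => ?_⟩
  obtain ⟨η, hη0, hηK⟩ : ∃ η, 0 < η ∧ η * K < ε / 2 := by
    refine ⟨ε / (2 * (|K| + 1)), by positivity, ?_⟩
    calc ε / (2 * (|K| + 1)) * K ≤ ε / (2 * (|K| + 1)) * |K| := by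
          gcongr; exact le_abs_self K
      _ < ε / (2 * (|K| + 1)) * (|K| + 1) := by gcongr; linarith
      _ = ε / 2 := by field_simp
  obtain ⟨C, hC⟩ := hbound η hη0
  set W := fun n x => max (|g n x - f x| - η * H n x) 0
  have hWm : ∀ n, AEStronglyMeasurable (W n) μ := fun n =>
    (((hgf n).1.norm.sub ((hH n).1.const_mul η)).sup aestronglyMeasurable_const)
  have hWle : ∀ n, ∀ᵐ x ∂μ, ‖W n x‖ ≤ |C * Φ x| := fun n => (hC n).mono fun x hx => by
    rw [Real.norm_eq_abs, abs_of_nonneg (le_max_right _ _)]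
    exact max_le (by linarith [le_abs_self (C * Φ x)]) (abs_nonneg _)
  have hW : Tendsto (fun n => ∫ x, W n x ∂μ) atTop (𝓝 0) := by
    have hWlim : ∀ᵐ x ∂μ, Tendsto (fun n => W n x) atTop (𝓝 0) := by
      filter_upwards [hlim, ae_all_iff.2 hH0] with x hx hx0
      refine squeeze_zero (fun n => le_max_right _ _) (fun n => max_le ?_ (abs_nonneg _))
        (tendsto_iff_norm_sub_tendsto_zero.1 hx)
      linarith [mul_nonneg hη0.le (hx0 n)]
    simpa using tendsto_integral_of_dominated_convergence _ hWm (hΦ.const_mul C).abs hWle hWlim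
  filter_upwards [hW.eventually_lt_const (half_pos hε)] with n hn
  have hWint : Integrable (W n) μ := (hΦ.const_mul C).abs.mono' (hWm n) (hWle n)
  calc ∫ x, |g n x - f x| ∂μ ≤ ∫ x, (W n x + η * H n x) ∂μ :=
        integral_mono_ae (hgf n).abs (hWint.add ((hH n).const_mul η))
          (ae_of_all _ fun x => by linarith [le_max_left (|g n x - f x| - η * H n x) 0])
    _ = ∫ x, W n x ∂μ + η * ∫ x, H n x ∂μ := by
        rw [integral_add hWint ((hH n).const_mul η), integral_const_mul]
    _ < ε := by nlinarith [hHK n]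

theorem tendsto_integral_of_abs_sub_le_eps_mul_add {g H : ℕ → α → ℝ} {f Φ : α → ℝ} {K : ℝ}
    (hg : ∀ n, AEStronglyMeasurable (g n) μ) (hf : Integrable f μ)
    (hH : ∀ n, Integrable (H n) μ) (hH0 : ∀ n, 0 ≤ᵐ[μ] H n) (hHK : ∀ n, ∫ x, H n x ∂μ ≤ K)
    (hΦ : Integrable Φ μ) (hlim : ∀ᵐ x ∂μ, Tendsto (fun n => g n x) atTop (𝓝 (f x)))
    (hbound : ∀ ε > 0, ∃ C, ∀ n, ∀ᵐ x ∂μ, |g n x - f x| ≤ ε * H n x + C * Φ x) :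
    Tendsto (fun n => ∫ x, g n x ∂μ) atTop (𝓝 (∫ x, f x ∂μ)) := by
  have hgf : ∀ n, Integrable (fun x => g n x - f x) μ := by
    obtain ⟨C, hC⟩ := hbound 1 one_pos
    exact fun n => ((hH n).add (hΦ.const_mul C)).mono' ((hg n).sub hf.1) (by simpa using hC n)
  have hgint : ∀ n, Integrable (g n) μ := fun n =>
    ((hgf n).add hf).congr (ae_of_all _ fun x => sub_add_cancel (g n x) (f x))
  rw [tendsto_iff_norm_sub_tendsto_zero]
  refine squeeze_zero (fun n => norm_nonneg _) (fun n => ?_)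
    (tendsto_integral_abs_sub_of_abs_sub_le_eps_mul_add hgf hH hH0 hHK hΦ hlim hbound)
  rw [← integral_sub (hgint n) hf]
  exact norm_integral_le_integral_norm _

lemma lintegral_ofReal_norm_prod_rpow_le {f g : α → ℝ} (hf : Measurable f) {q : ℝ}
    (hq : 0 ≤ q) :
    ∫⁻ x, ENNReal.ofReal (‖(f x, g x)‖ ^ q) ∂μ ≤
      ∫⁻ x, ENNReal.ofReal (|f x| ^ q) ∂μ + ∫⁻ x, ENNReal.ofReal (|g x| ^ q) ∂μ := by
  rw [← lintegral_add_left (hf.abs.pow_const q).ennreal_ofReal]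
  refine lintegral_mono fun x => (ENNReal.ofReal_le_ofReal ?_).trans ENNReal.ofReal_add_le
  rw [Prod.norm_def, rpow_max (norm_nonneg _) (norm_nonneg _) hq]
  exact max_le_add_of_nonneg (rpow_nonneg (norm_nonneg _) q) (rpow_nonneg (norm_nonneg _) q)

end Integration

theorem IsPosHomogeneous.tendsto_integral_map_sub_map_sub {α E : Type*} [MeasurableSpace α]
    {μ : Measure α} [NormedAddCommGroup E] [NormedSpace ℝ E] [ProperSpace E] {j : E → ℝ} {q : ℝ}
    (hj : IsPosHomogeneous j q) (hcont : Continuous j) (hq : 0 < q)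
    {F : ℕ → α → E} {G : α → E} (hF : ∀ n, AEStronglyMeasurable (F n) μ)
    (hlim : ∀ᵐ x ∂μ, Tendsto (fun n => F n x) atTop (𝓝 (G x))) {B : ℝ≥0∞} (hB : B ≠ ∞)
    (hFB : ∀ n, ∫⁻ x, ENNReal.ofReal (‖F n x‖ ^ q) ∂μ ≤ B) :
    Tendsto (fun n => ∫ x, (j (F n x) - j (F n x - G x)) ∂μ) atTop (𝓝 (∫ x, j (G x) ∂μ)) := by
  have hG : AEStronglyMeasurable G μ := aestronglyMeasurable_of_tendsto_ae atTop hF hlim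
  have hGB := lintegral_ofReal_norm_rpow_le_of_tendsto_ae hq.le hF hlim hFB
  have hpos : ∀ (w : α → E), 0 ≤ᵐ[μ] fun x => ‖w x‖ ^ q :=
    fun w => ae_of_all _ fun x => rpow_nonneg (norm_nonneg _) q
  have hmeas {w : α → E} (hw : AEStronglyMeasurable w μ) :
      AEStronglyMeasurable (fun x => ‖w x‖ ^ q) μ := by
    fun_prop (disch := exact hq.le)
  have hFq n : Integrable (fun x => ‖F n x‖ ^ q) μ :=
    integrable_of_lintegral_ofReal_le (hmeas (hF n)) (hpos _) hB (hFB n)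
  have hGq : Integrable (fun x => ‖G x‖ ^ q) μ :=
    integrable_of_lintegral_ofReal_le (hmeas hG) (hpos _) hB hGB
  have hsub n x : ‖F n x - G x‖ ^ q ≤ 2 ^ q * (‖F n x‖ ^ q + ‖G x‖ ^ q) :=
    (rpow_le_rpow (norm_nonneg _) (norm_sub_le _ _) hq.le).trans
      (add_rpow_le_two_rpow_mul_add_rpow (norm_nonneg _) (norm_nonneg _) hq.le)
  have hH n : Integrable (fun x => ‖F n x - G x‖ ^ q) μ :=
    (((hFq n).add hGq).const_mul _).mono' (hmeas ((hF n).sub hG)) (ae_of_all _ fun x => by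
      rw [Real.norm_eq_abs, abs_of_nonneg (rpow_nonneg (norm_nonneg _) q)]; exact hsub n x)
  have hHK n : ∫ x, ‖F n x - G x‖ ^ q ∂μ ≤ 2 ^ q * (B.toReal + B.toReal) :=
    calc ∫ x, ‖F n x - G x‖ ^ q ∂μ ≤ ∫ x, 2 ^ q * (‖F n x‖ ^ q + ‖G x‖ ^ q) ∂μ :=
          integral_mono (hH n) (((hFq n).add hGq).const_mul _) (hsub n)
      _ = 2 ^ q * (∫ x, ‖F n x‖ ^ q ∂μ + ∫ x, ‖G x‖ ^ q ∂μ) := by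
          rw [integral_const_mul, integral_add (hFq n) hGq]
      _ ≤ 2 ^ q * (B.toReal + B.toReal) := by
          gcongr
          · exact integral_le_toReal_of_lintegral_ofReal_le (hmeas (hF n)) (hpos _) hB (hFB n)
          · exact integral_le_toReal_of_lintegral_ofReal_le (hmeas hG) (hpos _) hB hGB
  obtain ⟨M, -, hM⟩ := hj.exists_abs_le_mul_norm_rpow hcont hq
  refine tendsto_integral_of_abs_sub_le_eps_mul_add
    (fun n => (hcont.comp_aestronglyMeasurable (hF n)).sub
      (hcont.comp_aestronglyMeasurable ((hF n).sub hG)))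
    ((hGq.const_mul M).mono' (hcont.comp_aestronglyMeasurable hG) (ae_of_all _ fun x => hM _))
    hH (fun n => hpos _) hHK hGq ?_ fun ε hε => ?_
  · filter_upwards [hlim] with x hx
    simpa [hj.map_zero hq] using
      ((hcont.tendsto _).comp hx).sub ((hcont.tendsto _).comp (hx.sub_const (G x)))
  · obtain ⟨C, hC⟩ := hj.exists_abs_map_add_sub_map_le hcont hq hε
    refine ⟨C + M, fun n => ae_of_all _ fun x => ?_⟩
    have h := hC (F n x - G x) (G x)
    rw [sub_add_cancel] at h
    calc |j (F n x) - j (F n x - G x) - j (G x)| ≤ |j (F n x) - j (F n x - G x)| + |j (G x)| :=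
          abs_sub _ _
      _ ≤ ε * ‖F n x - G x‖ ^ q + C * ‖G x‖ ^ q + M * ‖G x‖ ^ q := add_le_add h (hM _)
      _ = ε * ‖F n x - G x‖ ^ q + (C + M) * ‖G x‖ ^ q := by ring

lemma isPosHomogeneous_abs_rpow_mul_abs_rpow (p : ℝ) :
    IsPosHomogeneous (fun z : ℝ × ℝ => |z.1| ^ p * |z.2| ^ p) (2 * p) := by
  intro t ht z
  simp only [Prod.smul_fst, Prod.smul_snd, smul_eq_mul, abs_mul, abs_of_pos ht,
    mul_rpow ht.le (abs_nonneg _), two_mul, rpow_add ht]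
  ring

theorem stmt_13_general (N : ℕ) (hN : 5 ≤ N) (p : ℝ) (hp : p = (N : ℝ) / ((N : ℝ) - 2))
    (Ω : Set (EuclideanSpace ℝ (Fin N)))
    (u v : EuclideanSpace ℝ (Fin N) → ℝ)
    (un vn : ℕ → EuclideanSpace ℝ (Fin N) → ℝ)
    (hun : ∀ n, Measurable (un n)) (hvn : ∀ n, Measurable (vn n))
    (huae : ∀ᵐ x ∂(volume.restrict Ω), Tendsto (fun n => un n x) atTop (nhds (u x)))
    (hvae : ∀ᵐ x ∂(volume.restrict Ω), Tendsto (fun n => vn n x) atTop (nhds (v x)))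
    (Cu Cv : ℝ≥0∞) (hCu : Cu ≠ ⊤) (hCv : Cv ≠ ⊤)
    (hubd : ∀ n, (∫⁻ x in Ω, ENNReal.ofReal (|un n x| ^ (2 * p))) ≤ Cu)
    (hvbd : ∀ n, (∫⁻ x in Ω, ENNReal.ofReal (|vn n x| ^ (2 * p))) ≤ Cv) :
    Tendsto
      (fun n => ∫ x in Ω,
        (|un n x| ^ p * |vn n x| ^ p - |un n x - u x| ^ p * |vn n x - v x| ^ p))
      atTop (nhds (∫ x in Ω, |u x| ^ p * |v x| ^ p)) := by
  have hp0 : 0 < p := by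
    have hN5 : (5 : ℝ) ≤ N := by exact_mod_cast hN
    rw [hp]; exact div_pos (by linarith) (by linarith)
  have hcont : Continuous fun z : ℝ × ℝ => |z.1| ^ p * |z.2| ^ p :=
    (continuous_fst.abs.rpow_const fun _ => Or.inr hp0.le).mul
      (continuous_snd.abs.rpow_const fun _ => Or.inr hp0.le)
  have key := (isPosHomogeneous_abs_rpow_mul_abs_rpow p).tendsto_integral_map_sub_map_sub hcont
    (by positivity) (fun n => ((hun n).prodMk (hvn n)).aestronglyMeasurable)
    (by filter_upwards [huae, hvae] with x hux hvx using hux.prodMk_nhds hvx)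
    (ENNReal.add_ne_top.2 ⟨hCu, hCv⟩)
    fun n => (lintegral_ofReal_norm_prod_rpow_le (hun n) (by positivity)).trans
      (add_le_add (hubd n) (hvbd n))
  simpa only [Prod.mk_sub_mk] using key

theorem stmt_13 (N : ℕ) (hN : 5 ≤ N) (p : ℝ) (hp : p = (N : ℝ) / ((N : ℝ) - 2))
    (Ω : Set (EuclideanSpace ℝ (Fin N))) (hΩ : MeasurableSet Ω) (hΩfin : volume Ω < ⊤)
    (u v : EuclideanSpace ℝ (Fin N) → ℝ)
    (un vn : ℕ → EuclideanSpace ℝ (Fin N) → ℝ)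
    (hu : Measurable u) (hv : Measurable v)
    (hun : ∀ n, Measurable (un n)) (hvn : ∀ n, Measurable (vn n))
    (huae : ∀ᵐ x ∂(volume.restrict Ω), Tendsto (fun n => un n x) atTop (nhds (u x)))
    (hvae : ∀ᵐ x ∂(volume.restrict Ω), Tendsto (fun n => vn n x) atTop (nhds (v x)))
    (Cu Cv : ℝ≥0∞) (hCu : Cu ≠ ⊤) (hCv : Cv ≠ ⊤)
    (hubd : ∀ n, (∫⁻ x in Ω, ENNReal.ofReal (|un n x| ^ (2 * p))) ≤ Cu)
    (hvbd : ∀ n, (∫⁻ x in Ω, ENNReal.ofReal (|vn n x| ^ (2 * p))) ≤ Cv) :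
    Tendsto
      (fun n => ∫ x in Ω,
        (|un n x| ^ p * |vn n x| ^ p - |un n x - u x| ^ p * |vn n x - v x| ^ p))
      atTop (nhds (∫ x in Ω, |u x| ^ p * |v x| ^ p)) :=
  stmt_13_general N hN p hp Ω u v un vn hun hvn huae hvae Cu Cv hCu hCv hubd hvbd
end
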